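/- arXiv:1109.3933 — 10 statements merged into one kernel-verified Lean document; each statement's English description precedes it below -/
import Mathlib

section
/- Let G be an (n−3)-regular simple graph of order n ≥ 5 with G not isomorphic to a complete multipartite graph K_{3,3,...,3} all of whose parts have size 3. Then the Roman bondage number of G equals n − 2. -/
open SimpleGraph

/-- The Roman domination number: the minimum weight of a Roman dominating function,
i.e. a function `f : V → ℕ` with values in `{0,1,2}` such that every vertex with
value `0` has a neighbor with value `2`. -/
noncomputable def romanDominationNumber {V : Type*} [Fintype V] (G : SimpleGraph V) : ℕ :=
  sInf {w | ∃ f : V → ℕ, (∀ v, f v ≤ 2) ∧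
    (∀ v, f v = 0 → ∃ u, G.Adj v u ∧ f u = 2) ∧ w = ∑ v, f v}

/-- The Roman bondage number: the minimum cardinality of a set `B` of edges of `G`
whose removal increases the Roman domination number. -/
noncomputable def romanBondageNumber {V : Type*} [Fintype V] (G : SimpleGraph V) : ℕ :=
  sInf {k | ∃ B : Finset (Sym2 V), ↑B ⊆ G.edgeSet ∧ B.card = k ∧
    romanDominationNumber G < romanDominationNumber (G.deleteEdges ↑B)}

/-!
The complement of `G` is `2`-regular, so `γ_R(G) = 4`: weight `4` is always enough (`2` on a
vertex, `1` on its two non-neighbours) and needed. If deleting a set `B` of edges pushes `γ_R`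
above `4`, then in the non-adjacency graph `H = (G - B)ᶜ` every vertex has degree at least `3`
(else the same function works) and any two vertices have a common neighbour (else `2` on both
works). A double count of the common neighbours of a vertex of degree `3` with the other vertices
shows that such a graph has at least `2n - 2` edges, whereas `H` has `n + |B|` edges; hence
`|B| ≥ n - 2`. Conversely, as `G` is not `K_{3,…,3}`, non-adjacency is not transitive: some `w`
has two adjacent non-neighbours `a, b`. Deleting `ab` and the `n - 3` edges at `w` isolates `w`,
gives every vertex a third non-neighbour, and makes `w` a common non-neighbour of all pairs
avoiding it, which forces `γ_R ≥ 5`.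
-/

open Finset

section RomanDomination

variable {V : Type*} {G : SimpleGraph V} {f : V → ℕ}

def IsRomanDominating (G : SimpleGraph V) (f : V → ℕ) : Prop :=
  (∀ v, f v ≤ 2) ∧ ∀ v, f v = 0 → ∃ u, G.Adj v u ∧ f u = 2

lemma IsRomanDominating.one_le (hf : IsRomanDominating G f) {v : V}
    (hv : ∀ u, G.Adj v u → f u ≠ 2) : 1 ≤ f v := by
  by_contra! h
  obtain ⟨u, hvu, hu⟩ := hf.2 v (by omega)
  exact hv u hvu hu

variable [Fintype V]

lemma romanDominationNumber_le_sum (hf : IsRomanDominating G f) :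
    romanDominationNumber G ≤ ∑ v, f v :=
  Nat.sInf_le ⟨f, hf.1, hf.2, rfl⟩

lemma le_romanDominationNumber {k : ℕ} (h : ∀ f, IsRomanDominating G f → k ≤ ∑ v, f v) :
    k ≤ romanDominationNumber G := by
  refine le_csInf ⟨_, fun _ ↦ 2, fun _ ↦ le_rfl, fun _ h ↦ absurd h two_ne_zero, rfl⟩ ?_
  rintro _ ⟨f, hf₁, hf₂, rfl⟩
  exact h f ⟨hf₁, hf₂⟩

lemma IsRomanDominating.card_le_sum (hf : IsRomanDominating G f) (h : ∀ v, f v ≠ 2) :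
    Fintype.card V ≤ ∑ v, f v :=
  calc Fintype.card V = ∑ _v : V, 1 := by simp
    _ ≤ ∑ v, f v := sum_le_sum fun _ _ ↦ hf.one_le fun u _ ↦ h u

variable [DecidableEq V]

lemma add_add_le_sum {a b c : V} (hab : a ≠ b) (hac : a ≠ c) (hbc : b ≠ c) :
    f a + f b + f c ≤ ∑ x, f x :=
  calc f a + f b + f c = ∑ x ∈ {a, b, c}, f x := by
        rw [sum_insert (by simp [hab, hac]), sum_pair hbc, add_assoc]
    _ ≤ ∑ x, f x := sum_le_sum_of_subset (subset_univ _)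

lemma IsRomanDominating.five_le_sum (hf : IsRomanDominating G f) {u v w : V} (huv : u ≠ v)
    (hu : f u = 2) (hv : f v = 2) (huw : Gᶜ.Adj u w) (hvw : Gᶜ.Adj v w) : 5 ≤ ∑ x, f x := by
  by_cases hw : 1 ≤ f w
  · have := add_add_le_sum (f := f) huv huw.ne hvw.ne
    omega
  · obtain ⟨x, hwx, hx⟩ := hf.2 w (by omega)
    have hux : u ≠ x := by rintro rfl; exact huw.2 hwx.symm
    have hvx : v ≠ x := by rintro rfl; exact hvw.2 hwx.symm
    have := add_add_le_sum (f := f) huv hux hvx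
    omega

variable [DecidableRel G.Adj]

lemma IsRomanDominating.degree_compl_add_two_le_sum (hf : IsRomanDominating G f) {v : V}
    (hv : f v = 2) (huniq : ∀ u, f u = 2 → u = v) : Gᶜ.degree v + 2 ≤ ∑ x, f x := by
  have hle : ∀ x ∈ Gᶜ.neighborFinset v, 1 ≤ f x := fun x hx ↦ hf.one_le fun u hxu hu ↦ by
    rw [huniq u hu] at hxu
    exact ((compl_adj G v x).1 ((mem_neighborFinset _ _ _).1 hx)).2 hxu.symm
  calc Gᶜ.degree v + 2 = ∑ _x ∈ Gᶜ.neighborFinset v, 1 + f v := by simp [hv]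
    _ ≤ ∑ x ∈ Gᶜ.neighborFinset v, f x + f v := by gcongr with x hx; exact hle x hx
    _ = ∑ x ∈ insert v (Gᶜ.neighborFinset v), f x := by rw [sum_insert (by simp), add_comm]
    _ ≤ ∑ x, f x := sum_le_sum_of_subset (subset_univ _)

lemma IsRomanDominating.le_sum (hf : IsRomanDominating G f) {k : ℕ}
    (hcard : k ≤ Fintype.card V) (hdeg : ∀ v, k ≤ Gᶜ.degree v + 2)
    (hpair : ∀ u v, u ≠ v → f u = 2 → f v = 2 → k ≤ ∑ x, f x) : k ≤ ∑ x, f x := by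
  rcases Set.subsingleton_or_nontrivial {v | f v = 2} with hs | ⟨u, hu, v, hv, huv⟩
  · by_cases h : ∃ v, f v = 2
    · obtain ⟨v, hv⟩ := h
      exact (hdeg v).trans (hf.degree_compl_add_two_le_sum hv fun u hu ↦ hs hu hv)
    · exact hcard.trans (hf.card_le_sum fun v hv ↦ h ⟨v, hv⟩)
  · exact hpair u v huv hu hv

lemma four_le_romanDominationNumber (hcard : 4 ≤ Fintype.card V)
    (hdeg : ∀ v, 2 ≤ Gᶜ.degree v) : 4 ≤ romanDominationNumber G :=
  le_romanDominationNumber fun f hf ↦ hf.le_sum hcard (fun v ↦ by linarith [hdeg v])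
    fun u v huv hu hv ↦ by
      have := add_le_sum (fun i _ ↦ Nat.zero_le (f i)) (mem_univ u) (mem_univ v) huv
      omega

lemma five_le_romanDominationNumber (hcard : 5 ≤ Fintype.card V)
    (hdeg : ∀ v, 3 ≤ Gᶜ.degree v) (hcommon : ∀ u v, u ≠ v → ∃ w, Gᶜ.Adj u w ∧ Gᶜ.Adj v w) :
    5 ≤ romanDominationNumber G :=
  le_romanDominationNumber fun f hf ↦ hf.le_sum hcard (fun v ↦ by linarith [hdeg v])
    fun u v huv hu hv ↦ by
      obtain ⟨w, huw, hvw⟩ := hcommon u v huv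
      exact hf.five_le_sum huv hu hv huw hvw

lemma romanDominationNumber_le_degree_compl_add_two (v : V) :
    romanDominationNumber G ≤ Gᶜ.degree v + 2 := by
  let f x := (if x = v then 2 else 0) + if Gᶜ.Adj v x then 1 else 0
  have hf : IsRomanDominating G f := by
    refine ⟨fun x ↦ ?_, fun x hx ↦ ⟨v, ?_, by simp [f]⟩⟩
    · by_cases hx : x = v <;> simp [f, hx]; split_ifs <;> simp
    · by_contra h
      have hxv : x ≠ v := by rintro rfl; simp [f] at hx
      simp [f, hxv, compl_adj, hxv.symm, G.adj_comm v, h] at hx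
  calc romanDominationNumber G ≤ ∑ x, f x := romanDominationNumber_le_sum hf
    _ = Gᶜ.degree v + 2 := by
      simp only [f, sum_add_distrib, sum_ite_eq', mem_univ, if_true, sum_boole,
        ← neighborFinset_eq_filter, card_neighborFinset_eq_degree, Nat.cast_id]
      omega

lemma romanDominationNumber_le_four {u v : V} (huv : u ≠ v)
    (h : ¬∃ x, Gᶜ.Adj u x ∧ Gᶜ.Adj v x) : romanDominationNumber G ≤ 4 := by
  let f x := (if x = u then 2 else 0) + if x = v then 2 else 0
  have hf : IsRomanDominating G f := by
    refine ⟨fun x ↦ ?_, fun x hx ↦ ?_⟩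
    · by_cases hxu : x = u <;> by_cases hxv : x = v <;> simp_all [f]
    · have hxu : x ≠ u := by rintro rfl; simp [f] at hx
      have hxv : x ≠ v := by rintro rfl; simp [f] at hx
      simp only [not_exists, not_and] at h
      by_cases hux : G.Adj u x
      · exact ⟨u, hux.symm, by simp [f, huv]⟩
      · refine ⟨v, ?_, by simp [f, huv.symm]⟩
        have := h x (by simp [compl_adj, hux, hxu.symm])
        simpa [compl_adj, hxv.symm, G.adj_comm v] using this
  calc romanDominationNumber G ≤ ∑ x, f x := romanDominationNumber_le_sum hf
    _ = 4 := by simp [f, sum_add_distrib]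

lemma romanDominationNumber_eq_four (hcard : 5 ≤ Fintype.card V)
    (hdeg : Gᶜ.IsRegularOfDegree 2) : romanDominationNumber G = 4 := by
  obtain ⟨v⟩ : Nonempty V := Fintype.card_pos_iff.1 (by omega)
  refine le_antisymm ?_ (four_le_romanDominationNumber (by omega) fun v ↦ (hdeg v).ge)
  simpa [hdeg v] using romanDominationNumber_le_degree_compl_add_two (G := G) v

end RomanDomination

namespace SimpleGraph

variable {V : Type*} [Fintype V]

lemma degree_lt_degree_of_le_of_adj {G₁ G₂ : SimpleGraph V} [DecidableRel G₁.Adj]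
    [DecidableRel G₂.Adj] (hle : G₁ ≤ G₂) {v x : V} (h₂ : G₂.Adj v x) (h₁ : ¬G₁.Adj v x) :
    G₁.degree v < G₂.degree v := by
  simp only [← card_neighborFinset_eq_degree]
  refine card_lt_card ⟨fun y hy ↦ ?_, fun h ↦ h₁ ?_⟩
  · simpa using hle (by simpa using hy)
  · simpa using h (by simpa using h₂)

variable [DecidableEq V]

lemma IsCompleteMultipartite.exists_iso {G : SimpleGraph V} [DecidableRel G.Adj] {k : ℕ}
    (h : G.IsCompleteMultipartite) (hdeg : Gᶜ.IsRegularOfDegree k) :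
    ∃ t : ℕ, Nonempty (G ≃g completeMultipartiteGraph fun _ : Fin t ↦ Fin (k + 1)) := by
  classical
  have hpart : ∀ c : Quotient h.setoid, Fintype.card {x // h.setoid.r c.out x} = k + 1 := by
    intro c
    have : ({x | h.setoid.r c.out x} : Finset V) = insert c.out (Gᶜ.neighborFinset c.out) := by
      ext x
      by_cases hx : x = c.out
      · simp [hx]
      · simp [hx, Ne.symm hx, compl_adj]
        rfl
    rw [Fintype.card_subtype, this, card_insert_of_notMem (by simp),
      card_neighborFinset_eq_degree, hdeg]
  refine ⟨_, ⟨h.iso.trans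
    { toEquiv := Equiv.sigmaCongr (Fintype.equivFin _) fun c ↦ Fintype.equivFinOfCardEq (hpart c)
      map_rel_iff' := ?_ }⟩⟩
  intro x y
  simp [Equiv.sigmaCongr, (Fintype.equivFin _).injective.ne_iff]

variable {H : SimpleGraph V} [DecidableRel H.Adj]

lemma sum_degree_neighborFinset_eq_sum_card_inter (u : V) :
    ∑ w ∈ H.neighborFinset u, H.degree w =
      ∑ x, #(H.neighborFinset u ∩ H.neighborFinset x) := by
  convert sum_card_bipartiteAbove_eq_sum_card_bipartiteBelow (s := H.neighborFinset u)
    (t := univ) (r := H.Adj) using 2 with w _ x _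
  · rw [← card_neighborFinset_eq_degree, neighborFinset_eq_filter]
    rfl
  · congr 1
    ext y
    simp [bipartiteBelow, H.adj_comm x]

lemma four_mul_card_le_sum_degree_add_four (hmin : ∀ v, 3 ≤ H.degree v) {w : V}
    (hadj : ∀ u, H.degree u = 3 → H.Adj u w) :
    4 * Fintype.card V ≤ ∑ v, H.degree v + 4 := by
  have hS : #{u | H.degree u = 3} ≤ H.degree w := by
    rw [← card_neighborFinset_eq_degree]
    exact card_le_card fun u hu ↦ (mem_neighborFinset ..).2 (hadj u (mem_filter.1 hu).2).symm
  have h1 : 4 * (Fintype.card V - 1) ≤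
      ∑ v ∈ univ.erase w, (H.degree v + if H.degree v = 3 then 1 else 0) :=
    calc 4 * (Fintype.card V - 1) = ∑ _v ∈ univ.erase w, 4 := by
          simp [card_erase_of_mem, mul_comm]
      _ ≤ _ := sum_le_sum fun v _ ↦ by have := hmin v; split_ifs <;> omega
  have h2 : ∑ v ∈ univ.erase w, (if H.degree v = 3 then 1 else 0) ≤ #{u | H.degree u = 3} := by
    rw [sum_boole, Nat.cast_id]
    exact card_le_card (filter_subset_filter _ (erase_subset _ _))
  have h3 := add_sum_erase univ (fun v ↦ H.degree v) (mem_univ w)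
  have h4 : 1 ≤ Fintype.card V := Fintype.card_pos_iff.2 ⟨w⟩
  rw [sum_add_distrib] at h1
  omega

variable (hcommon : ∀ u v, u ≠ v → ∃ w, H.Adj u w ∧ H.Adj v w)
include hcommon

lemma card_add_degree_add_card_le_sum_degree (u : V) {Y : Finset V}
    (hY : ∀ y ∈ Y, y ≠ u ∧ 2 ≤ #(H.neighborFinset u ∩ H.neighborFinset y)) :
    Fintype.card V + H.degree u + #Y ≤ ∑ w ∈ H.neighborFinset u, H.degree w + 1 := by
  have hpoint : ∀ x, 1 + (if x = u then H.degree u else 0) + (if x ∈ Y then 1 else 0) ≤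
      #(H.neighborFinset u ∩ H.neighborFinset x) + if x = u then 1 else 0 := by
    intro x
    by_cases hxu : x = u
    · subst hxu
      have : x ∉ Y := fun hx ↦ (hY x hx).1 rfl
      simp [this, card_neighborFinset_eq_degree, add_comm]
    · by_cases hxY : x ∈ Y
      · simpa [hxu, hxY] using (hY x hxY).2
      · obtain ⟨w, huw, hxw⟩ := hcommon u x (Ne.symm hxu)
        have : 0 < #(H.neighborFinset u ∩ H.neighborFinset x) :=
          card_pos.2 ⟨w, by simp [huw, hxw]⟩
        simpa [hxu, hxY] using this
  have := sum_le_sum fun x (_ : x ∈ univ) ↦ hpoint x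
  simp only [sum_add_distrib, sum_ite_eq', mem_univ, if_true, sum_boole] at this
  rw [sum_degree_neighborFinset_eq_sum_card_inter]
  simpa [filter_mem_eq_inter] using this

lemma exists_two_le_card_inter_of_degree_eq_three {u : V} (hu : H.degree u = 3) :
    ∃ y ∈ H.neighborFinset u, 2 ≤ #(H.neighborFinset u ∩ H.neighborFinset y) := by
  have hnbr : ∀ w ∈ H.neighborFinset u, ∃ x ∈ H.neighborFinset u, x ≠ w ∧ H.Adj w x := by
    intro w hw
    obtain ⟨x, hux, hwx⟩ := hcommon u w (H.ne_of_adj ((mem_neighborFinset ..).1 hw))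
    exact ⟨x, (mem_neighborFinset ..).2 hux, hwx.ne.symm, hwx⟩
  have hcentre : ∀ y p q, y ∈ H.neighborFinset u → p ∈ H.neighborFinset u →
      q ∈ H.neighborFinset u → p ≠ q → H.Adj y p → H.Adj y q →
      ∃ y ∈ H.neighborFinset u, 2 ≤ #(H.neighborFinset u ∩ H.neighborFinset y) :=
    fun y p q hy hp hq hpq hyp hyq ↦ ⟨y, hy, one_lt_card.2
      ⟨p, mem_inter.2 ⟨hp, by simpa using hyp⟩, q, mem_inter.2 ⟨hq, by simpa using hyq⟩, hpq⟩⟩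
  rw [← card_neighborFinset_eq_degree, card_eq_three] at hu
  obtain ⟨a, b, c, hab, hac, hbc, hN⟩ := hu
  have ha : a ∈ H.neighborFinset u := by simp [hN]
  have hb : b ∈ H.neighborFinset u := by simp [hN]
  have hc : c ∈ H.neighborFinset u := by simp [hN]
  have hother : ∀ w ∈ H.neighborFinset u, ∀ p q,
      (∀ x ∈ H.neighborFinset u, x = w ∨ x = p ∨ x = q) → H.Adj w p ∨ H.Adj w q := by
    intro w hw p q hcover
    obtain ⟨x, hx, hxw, hwx⟩ := hnbr w hw
    rcases hcover x hx with rfl | rfl | rfl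
    exacts [absurd rfl hxw, .inl hwx, .inr hwx]
  rcases hother a ha b c (by simp [hN]) with h1 | h1 <;>
    rcases hother b hb a c (by simp [hN]) with h2 | h2 <;>
    rcases hother c hc a b (by simp [hN]) with h3 | h3 <;>
    have := h1.symm <;> have := h2.symm <;> have := h3.symm <;>
    first
    | exact hcentre a b c ha hb hc hbc ‹_› ‹_›
    | exact hcentre b a c hb ha hc hac ‹_› ‹_›
    | exact hcentre c a b hc ha hb hab ‹_› ‹_›

lemma card_add_card_le_one_of_degree_eq_three (hmin : ∀ v, 3 ≤ H.degree v)
    (hsum : ∑ v, H.degree v + 6 ≤ 4 * Fintype.card V) {u : V} (hu : H.degree u = 3)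
    {Y Z : Finset V} (hY : ∀ y ∈ Y, y ≠ u ∧ 2 ≤ #(H.neighborFinset u ∩ H.neighborFinset y))
    (hZ : ∀ z ∈ Z, ¬H.Adj u z ∧ 4 ≤ H.degree z) : #Y + #Z ≤ 1 := by
  have h1 := card_add_degree_add_card_le_sum_degree hcommon u hY
  have hZsub : Z ⊆ (H.neighborFinset u)ᶜ := fun z hz ↦ by simp [(hZ z hz).1]
  have h2 : 3 * #(H.neighborFinset u)ᶜ + #Z ≤ ∑ v ∈ (H.neighborFinset u)ᶜ, H.degree v :=
    calc 3 * #(H.neighborFinset u)ᶜ + #Z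
        = ∑ v ∈ (H.neighborFinset u)ᶜ, (3 + if v ∈ Z then 1 else 0) := by
          rw [sum_add_distrib, sum_const, sum_boole, filter_mem_eq_inter,
            inter_eq_right.2 hZsub, smul_eq_mul, Nat.cast_id, mul_comm]
      _ ≤ _ := sum_le_sum fun v _ ↦ by
          split_ifs with hv
          exacts [(hZ v hv).2, by simpa using hmin v]
  have h3 := sum_add_sum_compl (H.neighborFinset u) fun v ↦ H.degree v
  have h4 := card_compl_add_card (H.neighborFinset u)
  rw [card_neighborFinset_eq_degree, hu] at h4
  omega

lemma adj_of_degree_eq_three_of_four_le_degree (hmin : ∀ v, 3 ≤ H.degree v)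
    (hsum : ∑ v, H.degree v + 6 ≤ 4 * Fintype.card V) {u w : V} (hu : H.degree u = 3)
    (hw : 4 ≤ H.degree w) : H.Adj u w := by
  by_contra huw
  obtain ⟨y, hy, hy2⟩ := exists_two_le_card_inter_of_degree_eq_three hcommon hu
  have := card_add_card_le_one_of_degree_eq_three hcommon hmin hsum hu (Y := {y}) (Z := {w})
    (by simpa using ⟨((mem_neighborFinset ..).1 hy).ne', hy2⟩) (by simpa using ⟨huw, hw⟩)
  simp at this

lemma card_lt_six_of_isRegularOfDegree_three (hreg : H.IsRegularOfDegree 3) :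
    Fintype.card V < 6 := by
  by_contra! h6
  have hsum : ∑ v, H.degree v + 6 ≤ 4 * Fintype.card V := by
    simp only [hreg.degree_eq, sum_const, card_univ, smul_eq_mul]
    omega
  have twin_unique : ∀ u y y', y ≠ u → 2 ≤ #(H.neighborFinset u ∩ H.neighborFinset y) →
      y' ≠ u → 2 ≤ #(H.neighborFinset u ∩ H.neighborFinset y') → y = y' := by
    intro u y y' hyu hy hy'u hy'
    by_contra hyy'
    have := card_add_card_le_one_of_degree_eq_three hcommon (fun v ↦ (hreg v).ge) hsum (hreg u)
      (Y := {y, y'}) (Z := ∅) (by simp [*]) (by simp)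
    rw [card_pair hyy'] at this
    omega
  -- Each vertex has exactly one twin (a vertex sharing two neighbours with it), found among its
  -- neighbours. With `y` the twin of `u` and `a, c ∈ N(u) ∩ N(y)`, `c` is the twin of `a`, so
  -- `a ~ c`; but then `a` is a second twin of `u`.
  obtain ⟨u⟩ : Nonempty V := Fintype.card_pos_iff.1 (by omega)
  obtain ⟨y, hy, hy2⟩ := exists_two_le_card_inter_of_degree_eq_three hcommon (hreg u)
  obtain ⟨a, ha, c, hc, hac⟩ := one_lt_card.1 hy2
  simp only [mem_inter, mem_neighborFinset] at hy ha hc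
  have hac2 : 2 ≤ #(H.neighborFinset a ∩ H.neighborFinset c) :=
    one_lt_card.2 ⟨u, by simp [ha.1.symm, hc.1.symm], y, by simp [ha.2.symm, hc.2.symm], hy.ne⟩
  obtain ⟨z, hz, hz2⟩ := exists_two_le_card_inter_of_degree_eq_three hcommon (hreg a)
  have hz' := (mem_neighborFinset ..).1 hz
  have hca : H.Adj a c := by
    rwa [twin_unique a z c hz'.ne' hz2 hac.symm hac2] at hz'
  have hua2 : 2 ≤ #(H.neighborFinset u ∩ H.neighborFinset a) :=
    one_lt_card.2 ⟨y, by simp [hy, ha.2.symm], c, by simp [hc.1, hca], hc.2.ne⟩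
  exact ha.2.ne' (twin_unique u a y ha.1.ne' hua2 hy.ne' hy2)

theorem two_mul_card_le_card_edgeFinset_add_two (hmin : ∀ v, 3 ≤ H.degree v) :
    2 * Fintype.card V ≤ #H.edgeFinset + 2 := by
  by_contra! hlt
  have hsum : ∑ v, H.degree v + 6 ≤ 4 * Fintype.card V := by
    rw [sum_degrees_eq_twice_card_edges]
    omega
  by_cases hreg : H.IsRegularOfDegree 3
  · have := card_lt_six_of_isRegularOfDegree_three hcommon hreg
    simp only [hreg.degree_eq, sum_const, card_univ, smul_eq_mul] at hsum
    omega
  · obtain ⟨w, hw⟩ : ∃ w, H.degree w ≠ 3 := by simpa [IsRegularOfDegree] using hreg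
    have hw4 : 4 ≤ H.degree w := by have := hmin w; omega
    have := four_mul_card_le_sum_degree_add_four hmin fun u hu ↦
      adj_of_degree_eq_three_of_four_le_degree hcommon hmin hsum hu hw4
    omega

end SimpleGraph

namespace SimpleGraph.IsPathGraph3Compl

variable {V : Type*} [Fintype V] [DecidableEq V] {G : SimpleGraph V} [DecidableRel G.Adj]
  {w a b : V} (hP : G.IsPathGraph3Compl w a b)
include hP

lemma insert_incidenceFinset_subset_edgeSet :
    ↑(insert s(a, b) (G.incidenceFinset w)) ⊆ G.edgeSet := by
  intro e he
  simp only [coe_insert, Set.mem_insert_iff, mem_coe, mem_incidenceFinset] at he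
  rcases he with rfl | he
  exacts [hP.adj, he.1]

lemma card_insert_incidenceFinset :
    #(insert s(a, b) (G.incidenceFinset w)) = G.degree w + 1 := by
  rw [card_insert_of_notMem, card_incidenceFinset_eq_degree]
  simp [mk'_mem_incidenceSet_iff, hP.ne_fst, hP.ne_snd]

lemma exists_adj_mem_insert_incidenceFinset (hcard : 4 ≤ Fintype.card V)
    (hdeg : Gᶜ.degree w = 2) (v : V) :
    ∃ x, G.Adj v x ∧ s(v, x) ∈ insert s(a, b) (G.incidenceFinset w) := by
  have hinc : ∀ {x}, G.Adj w x → s(w, x) ∈ insert s(a, b) (G.incidenceFinset w) := fun h ↦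
    mem_insert_of_mem ((mem_incidenceFinset ..).2 ((mem_incidenceSet ..).2 h))
  have hNw : Gᶜ.neighborFinset w = {a, b} := (eq_of_subset_of_card_le
    (by simp [insert_subset_iff, compl_adj, hP.ne_fst, hP.ne_snd, hP.not_adj_fst, hP.not_adj_snd])
    (by rw [card_pair hP.fst_ne_snd, card_neighborFinset_eq_degree, hdeg])).symm
  have hw : ∀ x, x ≠ w → x ≠ a → x ≠ b → G.Adj w x := fun x hxw hxa hxb ↦ by
    by_contra h
    have : x ∈ Gᶜ.neighborFinset w := by simp [compl_adj, Ne.symm hxw, h]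
    simp [hNw, hxa, hxb] at this
  by_cases hvw : v = w
  · obtain ⟨x, hx⟩ : ({w, a, b} : Finset V)ᶜ.Nonempty := by
      rw [← card_pos, card_compl]
      have := card_le_three (a := w) (b := a) (c := b)
      omega
    simp only [mem_compl, mem_insert, mem_singleton, not_or] at hx
    exact ⟨x, hvw ▸ hw x hx.1 hx.2.1 hx.2.2, hvw ▸ hinc (hw x hx.1 hx.2.1 hx.2.2)⟩
  by_cases hva : v = a
  · exact ⟨b, hva ▸ hP.adj, by simp [hva]⟩
  by_cases hvb : v = b
  · exact ⟨a, hvb ▸ hP.adj.symm, by simp [hvb, Sym2.eq_swap]⟩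
  have hvw' := (hw v hvw hva hvb).symm
  exact ⟨w, hvw', by rw [Sym2.eq_swap (a := v)]; exact hinc hvw'.symm⟩

lemma five_le_romanDominationNumber_deleteEdges (hcard : 5 ≤ Fintype.card V)
    (hdeg : Gᶜ.IsRegularOfDegree 2) :
    5 ≤ romanDominationNumber (G.deleteEdges ↑(insert s(a, b) (G.incidenceFinset w))) := by
  classical
  set B := insert s(a, b) (G.incidenceFinset w)
  set G' := G.deleteEdges ↑B
  have hle : Gᶜ ≤ G'ᶜ := compl_le_compl_iff_le.2 (deleteEdges_le _)
  have hadj' : ∀ {x y}, G.Adj x y → s(x, y) ∈ B → G'ᶜ.Adj x y := fun hxy hB ↦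
    (compl_adj _ _ _).2 ⟨hxy.ne, fun h ↦ ((deleteEdges_adj ..).1 h).2 hB⟩
  have hisolated : ∀ x, x ≠ w → G'ᶜ.Adj w x := fun x hxw ↦ by
    by_cases hwx : G.Adj w x
    · exact hadj' hwx (mem_insert_of_mem ((mem_incidenceFinset ..).2 ((mem_incidenceSet ..).2 hwx)))
    · exact hle ((compl_adj ..).2 ⟨hxw.symm, hwx⟩)
  have hfar : ∀ v, ∃ x, x ≠ w ∧ Gᶜ.Adj v x := fun v ↦ by
    obtain ⟨x, hx⟩ : ((Gᶜ.neighborFinset v).erase w).Nonempty := by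
      rw [← card_pos]
      have := pred_card_le_card_erase (s := Gᶜ.neighborFinset v) (a := w)
      rw [card_neighborFinset_eq_degree, hdeg v] at this
      omega
    exact ⟨x, ne_of_mem_erase hx, (mem_neighborFinset ..).1 (mem_of_mem_erase hx)⟩
  refine five_le_romanDominationNumber hcard (fun v ↦ ?_) fun u v huv ↦ ?_
  · obtain ⟨x, hvx, hx⟩ := hP.exists_adj_mem_insert_incidenceFinset (by omega) (hdeg w) v
    have := degree_lt_degree_of_le_of_adj hle (hadj' hvx hx) fun h ↦ ((compl_adj ..).1 h).2 hvx
    rwa [hdeg v] at this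
  by_cases hu : u = w
  · obtain ⟨x, hxw, hvx⟩ := hfar v
    exact ⟨x, hu ▸ hisolated x hxw, hle hvx⟩
  by_cases hv : v = w
  · obtain ⟨x, hxw, hux⟩ := hfar u
    exact ⟨x, hle hux, hv ▸ hisolated x hxw⟩
  exact ⟨w, (hisolated u hu).symm, (hisolated v hv).symm⟩

end SimpleGraph.IsPathGraph3Compl

lemma card_le_card_add_two_of_four_lt_romanDominationNumber {V : Type*} [Fintype V]
    {G : SimpleGraph V} [DecidableRel G.Adj] (hreg : G.IsRegularOfDegree (Fintype.card V - 3))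
    {B : Finset (Sym2 V)} (hB : ↑B ⊆ G.edgeSet)
    (hlt : 4 < romanDominationNumber (G.deleteEdges ↑B)) : Fintype.card V ≤ #B + 2 := by
  classical
  set G' := G.deleteEdges ↑B
  have hmin : ∀ v, 3 ≤ G'ᶜ.degree v := fun v ↦ by
    by_contra! h
    have := romanDominationNumber_le_degree_compl_add_two (G := G') v
    omega
  have hcommon : ∀ u v, u ≠ v → ∃ x, G'ᶜ.Adj u x ∧ G'ᶜ.Adj v x := fun u v huv ↦ by
    by_contra h
    have := romanDominationNumber_le_four huv h
    omega
  have hdeg : ∀ v, G'ᶜ.degree v + G'.degree v = G.degree v + 2 := fun v ↦ by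
    have := G'.degree_compl (v := v)
    have := G'.degree_lt_card_verts v
    have := hmin v
    rw [hreg v]
    omega
  have hsum : ∑ v, G'ᶜ.degree v + ∑ v, G'.degree v = ∑ v, G.degree v + 2 * Fintype.card V := by
    rw [← sum_add_distrib, sum_congr rfl fun v _ ↦ hdeg v, sum_add_distrib]
    simp [mul_comm]
  have hB' : B ⊆ G.edgeFinset := by rwa [← coe_subset, coe_edgeFinset]
  have hedges : #G'.edgeFinset + #B = #G.edgeFinset := by
    rw [edgeFinset_deleteEdges, card_sdiff_of_subset hB', Nat.sub_add_cancel (card_le_card hB')]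
  have := G'ᶜ.two_mul_card_le_card_edgeFinset_add_two hcommon hmin
  simp only [sum_degrees_eq_twice_card_edges] at hsum
  omega

theorem roman_bondage_of_regular_general
    {V : Type*} [Fintype V] (G : SimpleGraph V) [DecidableRel G.Adj]
    (n : ℕ) (hn : Fintype.card V = n) (h5 : 5 ≤ n)
    (hreg : G.IsRegularOfDegree (n - 3))
    (hK : ¬ ∃ t : ℕ, Nonempty (G ≃g completeMultipartiteGraph (fun _ : Fin t => Fin 3))) :
    romanBondageNumber G = n - 2 := by
  classical
  subst hn
  have hcompl : Gᶜ.IsRegularOfDegree 2 := by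
    have h2 : Fintype.card V - 1 - (Fintype.card V - 3) = 2 := by omega
    exact h2 ▸ hreg.compl
  have hγ := romanDominationNumber_eq_four h5 hcompl
  obtain ⟨w, a, b, hP⟩ :=
    exists_isPathGraph3Compl_of_not_isCompleteMultipartite fun h ↦ hK (h.exists_iso hcompl)
  have hmem : Fintype.card V - 2 ∈ {k | ∃ B : Finset (Sym2 V), ↑B ⊆ G.edgeSet ∧ B.card = k ∧
      romanDominationNumber G < romanDominationNumber (G.deleteEdges ↑B)} :=
    ⟨_, hP.insert_incidenceFinset_subset_edgeSet,
      by rw [hP.card_insert_incidenceFinset, hreg w]; omega,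
      by rw [hγ]; exact hP.five_le_romanDominationNumber_deleteEdges h5 hcompl⟩
  refine le_antisymm (Nat.sInf_le hmem) (le_csInf ⟨_, hmem⟩ ?_)
  rintro k ⟨B, hB, rfl, hlt⟩
  have := card_le_card_add_two_of_four_lt_romanDominationNumber hreg hB (hγ ▸ hlt)
  omega

/-- An `(n-3)`-regular graph of order `n ≥ 5` that is not a complete multipartite
graph all of whose parts have size `3` has Roman bondage number `n - 2`. -/
theorem roman_bondage_of_regular
    {V : Type*} [Fintype V] [DecidableEq V] (G : SimpleGraph V) [DecidableRel G.Adj]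
    (n : ℕ) (hn : Fintype.card V = n) (h5 : 5 ≤ n)
    (hreg : G.IsRegularOfDegree (n - 3))
    (hK : ¬ ∃ t : ℕ, Nonempty (G ≃g completeMultipartiteGraph (fun _ : Fin t => Fin 3))) :
    romanBondageNumber G = n - 2 :=
  roman_bondage_of_regular_general G n hn h5 hreg hK
end

section
/- For a complete t-partite simple graph K_{m_1,m_2,...,m_t} with 1 ≤ m_1 ≤ m_2 ≤ ... ≤ m_t and t ≥ 2, the Roman domination number equals 2 if m_1 = 1, equals 3 if m_1 = 2, and equals 4 if m_1 ≥ 3. -/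
open SimpleGraph

/-!
A Roman dominating function of weight below `4` has at most one vertex `v` labelled `2`, and
then every non-neighbour of `v` must dominate itself with a label `1`; with no label `2` at all,
every vertex carries a positive label. Hence `γ_R(G) ≥ min 4 (min |V| (δ(Gᶜ) + 2))`. In
`K_{m_1,…,m_t}` the non-neighbours of a vertex are the other vertices of its part, so
`δ(Gᶜ) + 2 = m_1 + 1`, and this bound is attained: label a vertex of the smallest part `2` and
its part-mates `1`, or label one vertex in each of two parts `2`. Thus
`γ_R(K_{m_1,…,m_t}) = min 4 (m_1 + 1)`.
-/

namespace SimpleGraph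

variable {V : Type*} [Fintype V] (G : SimpleGraph V)

def IsRomanDominating (f : V → ℕ) : Prop :=
  (∀ v, f v ≤ 2) ∧ ∀ v, f v = 0 → ∃ u, G.Adj v u ∧ f u = 2

variable {G}

theorem romanDominationNumber_le {f : V → ℕ} (hf : G.IsRomanDominating f) :
    romanDominationNumber G ≤ ∑ v, f v :=
  Nat.sInf_le ⟨f, hf.1, hf.2, rfl⟩

theorem le_romanDominationNumber {n : ℕ}
    (h : ∀ f, G.IsRomanDominating f → n ≤ ∑ v, f v) : n ≤ romanDominationNumber G := by
  refine le_csInf ⟨_, fun _ ↦ 1, fun _ ↦ one_le_two, fun _ h ↦ absurd h one_ne_zero, rfl⟩ ?_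
  rintro w ⟨f, hf₂, hf₀, rfl⟩
  exact h f ⟨hf₂, hf₀⟩

theorem IsRomanDominating.card_le_sum {f : V → ℕ} (hf : G.IsRomanDominating f)
    (h : ∀ v, f v ≠ 2) : Fintype.card V ≤ ∑ v, f v := by
  have hpos : ∀ v, 1 ≤ f v := fun v ↦ Nat.one_le_iff_ne_zero.2 fun h0 ↦
    let ⟨u, _, hu⟩ := hf.2 v h0; h u hu
  simpa using Finset.card_nsmul_le_sum Finset.univ f 1 fun v _ ↦ hpos v

variable [DecidableEq V]

theorem four_le_sum_of_two_eq_two {f : V → ℕ} {u v : V} (huv : u ≠ v)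
    (hu : f u = 2) (hv : f v = 2) : 4 ≤ ∑ w, f w :=
  calc 4 = ∑ w ∈ {u, v}, f w := by rw [Finset.sum_pair huv, hu, hv]
    _ ≤ ∑ w, f w := Finset.sum_le_sum_of_subset (Finset.subset_univ _)

theorem romanDominationNumber_le_four {u v : V} (huv : u ≠ v)
    (hdom : ∀ w, w ≠ u → w ≠ v → G.Adj w u ∨ G.Adj w v) :
    romanDominationNumber G ≤ 4 := by
  let f : V → ℕ := fun w ↦ (if w = u then 2 else 0) + if w = v then 2 else 0
  have hf : G.IsRomanDominating f := by
    refine ⟨fun w ↦ ?_, fun w hw ↦ ?_⟩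
    · by_cases hwu : w = u
      · simp [f, hwu, huv]
      · simp only [f, hwu, if_false]; split_ifs <;> omega
    · simp only [f, Nat.add_eq_zero_iff, ite_eq_right_iff] at hw
      have hwu : w ≠ u := fun h ↦ by simpa using hw.1 h
      have hwv : w ≠ v := fun h ↦ by simpa using hw.2 h
      rcases hdom w hwu hwv with h | h
      · exact ⟨u, h, by simp [f, huv]⟩
      · exact ⟨v, h, by simp [f, huv.symm]⟩
  calc romanDominationNumber G ≤ ∑ w, f w := romanDominationNumber_le hf
    _ = 4 := by simp [f, Finset.sum_add_distrib]

variable [DecidableRel G.Adj]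

theorem IsRomanDominating.degree_compl_add_two_le_sum {f : V → ℕ}
    (hf : G.IsRomanDominating f) {v : V} (hv : f v = 2) (hlt : ∑ w, f w < 4) :
    Gᶜ.degree v + 2 ≤ ∑ w, f w := by
  have hpos : ∀ w ∈ Gᶜ.neighborFinset v, 1 ≤ f w := by
    intro w hw
    rw [mem_neighborFinset, compl_adj] at hw
    refine Nat.one_le_iff_ne_zero.2 fun h0 ↦ ?_
    obtain ⟨u, hwu, hu⟩ := hf.2 w h0
    have huv : u ≠ v := by rintro rfl; exact hw.2 hwu.symm
    exact (four_le_sum_of_two_eq_two huv hu hv).not_gt hlt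
  have hsub : Gᶜ.neighborFinset v ⊆ Finset.univ.erase v := fun w hw ↦
    Finset.mem_erase.2 ⟨(Gᶜ.ne_of_adj ((mem_neighborFinset _ _ _).1 hw)).symm, Finset.mem_univ _⟩
  calc Gᶜ.degree v + 2 ≤ ∑ w ∈ Gᶜ.neighborFinset v, f w + f v := by
        rw [hv, ← card_neighborFinset_eq_degree]
        simpa using Finset.card_nsmul_le_sum _ f 1 hpos
    _ ≤ ∑ w ∈ Finset.univ.erase v, f w + f v := by gcongr
    _ = ∑ w, f w := Finset.sum_erase_add _ _ (Finset.mem_univ v)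

theorem le_romanDominationNumber_min :
    min 4 (min (Fintype.card V) (Gᶜ.minDegree + 2)) ≤ romanDominationNumber G := by
  refine le_romanDominationNumber fun f hf ↦ ?_
  by_cases h2 : ∃ v, f v = 2
  · obtain ⟨v, hv⟩ := h2
    by_cases hlt : ∑ w, f w < 4
    · have := hf.degree_compl_add_two_le_sum hv hlt
      have := Gᶜ.minDegree_le_degree v
      omega
    · omega
  · have := hf.card_le_sum (not_exists.1 h2)
    omega

theorem romanDominationNumber_le_degree_compl_add_two (v : V) :
    romanDominationNumber G ≤ Gᶜ.degree v + 2 := by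
  let f : V → ℕ := fun w ↦ (if w = v then 2 else 0) + if Gᶜ.Adj v w then 1 else 0
  have hf : G.IsRomanDominating f := by
    refine ⟨fun w ↦ ?_, fun w hw ↦ ⟨v, ?_, by simp [f]⟩⟩
    · by_cases hwv : w = v
      · simp [f, hwv]
      · simp only [f, hwv, if_false]; split_ifs <;> omega
    · simp only [f, Nat.add_eq_zero_iff, ite_eq_right_iff, compl_adj] at hw
      by_contra hadj
      exact absurd (hw.2 ⟨fun h ↦ by simpa using hw.1 h.symm, fun h ↦ hadj h.symm⟩) one_ne_zero
  calc romanDominationNumber G ≤ ∑ w, f w := romanDominationNumber_le hf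
    _ = Gᶜ.degree v + 2 := by
      simp only [f, Finset.sum_add_distrib, Finset.sum_ite_eq', Finset.mem_univ, if_true,
        Finset.sum_boole, ← card_neighborFinset_eq_degree, neighborFinset_eq_filter]
      simp [add_comm]

section CompleteMultipartite

variable {ι : Type*} [Fintype ι] [DecidableEq ι] {P : ι → Type*} [∀ i, Fintype (P i)]
  [∀ i, DecidableEq (P i)]

theorem degree_compl_completeMultipartiteGraph (v : Σ i, P i) :
    (completeMultipartiteGraph P)ᶜ.degree v = Fintype.card (P v.1) - 1 := by
  obtain ⟨i, a⟩ := v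
  have hnbr : (completeMultipartiteGraph P)ᶜ.neighborFinset ⟨i, a⟩ =
      (Finset.univ.erase a).map (Function.Embedding.sigmaMk i) := by
    ext ⟨j, b⟩
    simp only [mem_neighborFinset, compl_adj, comap_adj, top_adj, not_not, Finset.mem_map,
      Finset.mem_erase, Finset.mem_univ, and_true, Function.Embedding.sigmaMk_apply]
    constructor
    · rintro ⟨hne, rfl⟩
      exact ⟨b, fun h ↦ hne (h ▸ rfl), rfl⟩
    · rintro ⟨c, hc, h⟩
      cases h
      exact ⟨fun h ↦ hc (Sigma.mk.inj_iff.1 h).2.eq.symm, rfl⟩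
  rw [← card_neighborFinset_eq_degree, hnbr, Finset.card_map,
    Finset.card_erase_of_mem (Finset.mem_univ _), Finset.card_univ]

theorem romanDominationNumber_completeMultipartiteGraph {i₀ i₁ : ι} (hne : i₀ ≠ i₁)
    [Nonempty (P i₀)] (hmin : ∀ i, Fintype.card (P i₀) ≤ Fintype.card (P i)) :
    romanDominationNumber (completeMultipartiteGraph P) = min 4 (Fintype.card (P i₀) + 1) := by
  have hpos : 0 < Fintype.card (P i₀) := Fintype.card_pos
  obtain ⟨a₀⟩ := ‹Nonempty (P i₀)›
  obtain ⟨a₁⟩ : Nonempty (P i₁) := Fintype.card_pos_iff.1 (hpos.trans_le (hmin i₁))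
  have : Nonempty (Σ i, P i) := ⟨⟨i₀, a₀⟩⟩
  have hdeg :
      romanDominationNumber (completeMultipartiteGraph P) ≤ Fintype.card (P i₀) - 1 + 2 := by
    simpa only [degree_compl_completeMultipartiteGraph] using
      romanDominationNumber_le_degree_compl_add_two (G := completeMultipartiteGraph P) ⟨i₀, a₀⟩
  have hfour : romanDominationNumber (completeMultipartiteGraph P) ≤ 4 :=
    romanDominationNumber_le_four (u := ⟨i₀, a₀⟩) (v := ⟨i₁, a₁⟩) (by simp [hne])
      fun w _ _ ↦ by simp only [comap_adj, top_adj]; by_contra! h; exact hne (h.1.symm.trans h.2)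
  have hcard : Fintype.card (P i₀) + 1 ≤ Fintype.card (Σ i, P i) := by
    rw [Fintype.card_sigma]
    have := hmin i₁
    calc Fintype.card (P i₀) + 1 ≤ ∑ i ∈ {i₀, i₁}, Fintype.card (P i) := by
          rw [Finset.sum_pair hne]; omega
      _ ≤ ∑ i, Fintype.card (P i) := Finset.sum_le_sum_of_subset (Finset.subset_univ _)
  have hminDeg : Fintype.card (P i₀) - 1 ≤ (completeMultipartiteGraph P)ᶜ.minDegree :=
    le_minDegree_of_forall_le_degree _ _ fun v ↦
      (degree_compl_completeMultipartiteGraph v).symm ▸ Nat.sub_le_sub_right (hmin v.1) 1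
  have hlower := le_romanDominationNumber_min (G := completeMultipartiteGraph P)
  omega

end CompleteMultipartite

end SimpleGraph

/-- Roman domination number of a complete `t`-partite graph `K_{m₁,…,m_t}`
with `1 ≤ m₁ ≤ ⋯ ≤ m_t` and `t ≥ 2`. -/
theorem roman_domination_complete_multipartite
    {t : ℕ} (ht : 2 ≤ t) (m : Fin t → ℕ)
    (hmono : Monotone m) :
    (m ⟨0, by omega⟩ = 1 →
      romanDominationNumber (completeMultipartiteGraph (fun j => Fin (m j))) = 2) ∧
    (m ⟨0, by omega⟩ = 2 →
      romanDominationNumber (completeMultipartiteGraph (fun j => Fin (m j))) = 3) ∧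
    (3 ≤ m ⟨0, by omega⟩ →
      romanDominationNumber (completeMultipartiteGraph (fun j => Fin (m j))) = 4) := by
  have key (h : 1 ≤ m ⟨0, by omega⟩) :
      romanDominationNumber (completeMultipartiteGraph (fun j => Fin (m j))) =
        min 4 (m ⟨0, by omega⟩ + 1) := by
    have : Nonempty (Fin (m ⟨0, by omega⟩)) := Fin.pos_iff_nonempty.1 h
    simpa using romanDominationNumber_completeMultipartiteGraph (P := fun j => Fin (m j))
      (i₀ := ⟨0, _⟩) (i₁ := ⟨1, by omega⟩) (by simp)
      fun j ↦ by simpa using hmono (show ⟨0, _⟩ ≤ j from Nat.zero_le _)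
  refine ⟨fun h ↦ ?_, fun h ↦ ?_, fun h ↦ ?_⟩ <;> have := key (by omega) <;> omega
end

section
/- Let G be a simple graph of order n ≥ 3 and let t be the number of vertices of G having degree n − 1. If t ≥ 1, then the Roman bondage number of G equals ⌈t/2⌉. -/
open SimpleGraph

section Aux

open Finset

variable {V : Type*} [Fintype V] [DecidableEq V]

/-- A vertex adjacent to all other vertices. -/
def IsFullVx (H : SimpleGraph V) (v : V) : Prop := ∀ u, u ≠ v → H.Adj v u

omit [DecidableEq V] in
lemma rdn_set_nonempty (H : SimpleGraph V) :
    {w | ∃ f : V → ℕ, (∀ v, f v ≤ 2) ∧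
      (∀ v, f v = 0 → ∃ u, H.Adj v u ∧ f u = 2) ∧ w = ∑ v, f v}.Nonempty :=
  ⟨∑ _v : V, 1, fun _ => 1, fun _ => one_le_two,
    fun _ h => absurd h one_ne_zero, rfl⟩

lemma rdn_le_two (H : SimpleGraph V) (v : V) (hv : IsFullVx H v) :
    romanDominationNumber H ≤ 2 := by
  apply Nat.sInf_le
  refine ⟨fun u => if u = v then 2 else 0, ?_, ?_, ?_⟩
  · intro u; dsimp only; split <;> omega
  · intro u hu
    have hne : u ≠ v := by intro h; subst h; simp at hu
    exact ⟨v, (hv u hne).symm, if_pos rfl⟩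
  · simp

lemma rdn_ge_two (h2 : 2 ≤ Fintype.card V) (H : SimpleGraph V) :
    2 ≤ romanDominationNumber H := by
  apply le_csInf (rdn_set_nonempty H)
  rintro w ⟨f, hf2, hdom, rfl⟩
  by_contra hlt
  push_neg at hlt
  have hex : ∃ v, f v = 0 := by
    by_contra h
    push_neg at h
    have h1 : ∀ v : V, 1 ≤ f v := fun v => Nat.one_le_iff_ne_zero.2 (h v)
    have : (Fintype.card V : ℕ) ≤ ∑ v, f v := by
      calc (Fintype.card V : ℕ) = ∑ _v : V, 1 := by simp
        _ ≤ ∑ v, f v := Finset.sum_le_sum fun v _ => h1 v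
    omega
  obtain ⟨v, hv⟩ := hex
  obtain ⟨u, _, hu2⟩ := hdom v hv
  have := Finset.single_le_sum (f := f) (fun i _ => Nat.zero_le _) (mem_univ u)
  omega

lemma rdn_ge_three (h3 : 3 ≤ Fintype.card V) (H : SimpleGraph V)
    (hfull : ∀ v, ¬ IsFullVx H v) : 3 ≤ romanDominationNumber H := by
  apply le_csInf (rdn_set_nonempty H)
  rintro w ⟨f, hf2, hdom, rfl⟩
  by_contra hlt
  push_neg at hlt
  by_cases hex2 : ∃ u, f u = 2
  · obtain ⟨u, hu⟩ := hex2
    have hsum : ∑ v, f v = f u + ∑ v ∈ univ.erase u, f v :=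
      (Finset.add_sum_erase univ f (mem_univ u)).symm
    have hz : ∑ v ∈ univ.erase u, f v = 0 := by omega
    have hzero : ∀ x ∈ univ.erase u, f x = 0 := Finset.sum_eq_zero_iff.1 hz
    apply hfull u
    intro x hx
    have hx0 : f x = 0 := hzero x (mem_erase.2 ⟨hx, mem_univ x⟩)
    obtain ⟨y, hxy, hy2⟩ := hdom x hx0
    have hyu : y = u := by
      by_contra hne
      have := hzero y (mem_erase.2 ⟨hne, mem_univ y⟩)
      omega
    subst hyu
    exact hxy.symm
  · push_neg at hex2
    have hex : ∃ v, f v = 0 := by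
      by_contra h
      push_neg at h
      have h1 : ∀ v : V, 1 ≤ f v := fun v => Nat.one_le_iff_ne_zero.2 (h v)
      have : (Fintype.card V : ℕ) ≤ ∑ v, f v := by
        calc (Fintype.card V : ℕ) = ∑ _v : V, 1 := by simp
          _ ≤ ∑ v, f v := Finset.sum_le_sum fun v _ => h1 v
      omega
    obtain ⟨v, hv⟩ := hex
    obtain ⟨y, _, hy2⟩ := hdom v hv
    exact hex2 y hy2

lemma degree_eq_iff (G : SimpleGraph V) [DecidableRel G.Adj] (v : V) :
    G.degree v = Fintype.card V - 1 ↔ IsFullVx G v := by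
  have hsub : G.neighborFinset v ⊆ univ.erase v := fun u hu =>
    mem_erase.2 ⟨((SimpleGraph.mem_neighborFinset _ _ _).1 hu).ne', mem_univ u⟩
  have hcard : (univ.erase v).card = Fintype.card V - 1 := by
    simp [Finset.card_erase_of_mem]
  constructor
  · intro h u hu
    have heq : G.neighborFinset v = univ.erase v :=
      Finset.eq_of_subset_of_card_le hsub (by
        rw [hcard, ← h]; exact le_of_eq rfl)
    have : u ∈ G.neighborFinset v := by
      rw [heq]; exact mem_erase.2 ⟨hu, mem_univ u⟩
    exact (SimpleGraph.mem_neighborFinset _ _ _).1 this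
  · intro h
    have heq : G.neighborFinset v = univ.erase v :=
      Finset.Subset.antisymm hsub
        (fun u hu => (SimpleGraph.mem_neighborFinset _ _ _).2 (h u (mem_erase.1 hu).1))
    rw [← hcard, ← heq]
    rfl

lemma key_construction (h2 : 2 ≤ Fintype.card V) :
    ∀ m : ℕ, ∀ H : SimpleGraph V, ∀ F : Finset V,
      (∀ v, v ∈ F ↔ IsFullVx H v) → F.card = m →
      ∃ B : Finset (Sym2 V), ↑B ⊆ H.edgeSet ∧ B.card = (m + 1) / 2 ∧
        ∀ v, ¬ IsFullVx (H.deleteEdges ↑B) v := by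
  intro m
  induction m using Nat.strong_induction_on with
  | _ m ih =>
  intro H F hF hcard
  rcases Nat.lt_or_ge m 2 with hm | hm
  · interval_cases m
    · -- m = 0
      refine ⟨∅, by simp, by simp, ?_⟩
      have hFe : F = ∅ := Finset.card_eq_zero.1 hcard
      intro v hv
      have : v ∈ F := (hF v).2 (by
        intro u hu
        have := hv u hu
        rw [SimpleGraph.deleteEdges_adj] at this
        exact this.1)
      simp [hFe] at this
    · -- m = 1
      obtain ⟨v, hFv⟩ := Finset.card_eq_one.1 hcard
      have hvfull : IsFullVx H v := (hF v).1 (by simp [hFv])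
      obtain ⟨u, hu⟩ := Fintype.exists_ne_of_one_lt_card (by omega) v
      have hadj : H.Adj v u := hvfull u hu
      refine ⟨{s(v, u)}, ?_, by simp, ?_⟩
      · intro e he
        simp at he
        subst he
        exact hadj
      · intro w hw
        by_cases hwv : w = v
        · subst hwv
          have := hw u hu
          rw [SimpleGraph.deleteEdges_adj] at this
          simp at this
        · have hwF : w ∈ F := (hF w).2 (by
            intro x hx
            have := hw x hx
            rw [SimpleGraph.deleteEdges_adj] at this
            exact this.1)
          rw [hFv] at hwF
          simp at hwF
          exact hwv hwF
  · -- m ≥ 2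
    obtain ⟨v, hv, w, hw, hvw⟩ := Finset.one_lt_card.1 (by omega : 1 < F.card)
    have hvfull : IsFullVx H v := (hF v).1 hv
    have hadj : H.Adj v w := hvfull w (Ne.symm hvw)
    set H' : SimpleGraph V := H.deleteEdges {s(v, w)} with hH'
    set F' : Finset V := (F.erase v).erase w with hF'def
    have hwF' : w ∈ F.erase v := Finset.mem_erase.2 ⟨Ne.symm hvw, hw⟩
    have hcard' : F'.card = m - 2 := by
      rw [hF'def, Finset.card_erase_of_mem hwF', Finset.card_erase_of_mem hv, hcard]; omega
    have hF'iff : ∀ x, x ∈ F' ↔ IsFullVx H' x := by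
      intro x
      constructor
      · intro hx
        have hxw : x ≠ w := (Finset.mem_erase.1 hx).1
        have hxv : x ≠ v := (Finset.mem_erase.1 (Finset.mem_erase.1 hx).2).1
        have hxF : x ∈ F := (Finset.mem_erase.1 (Finset.mem_erase.1 hx).2).2
        intro u hu
        rw [hH', SimpleGraph.deleteEdges_adj]
        refine ⟨(hF x).1 hxF u hu, ?_⟩
        intro hmem
        rw [Set.mem_singleton_iff, Sym2.eq_iff] at hmem
        rcases hmem with ⟨h1, _⟩ | ⟨h1, _⟩
        · exact hxv h1
        · exact hxw h1
      · intro hx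
        have hxH : IsFullVx H x := by
          intro u hu
          have := hx u hu
          rw [hH', SimpleGraph.deleteEdges_adj] at this
          exact this.1
        have hxv : x ≠ v := by
          intro h; subst h
          have := hx w (Ne.symm hvw)
          rw [hH', SimpleGraph.deleteEdges_adj] at this
          simp at this
        have hxw : x ≠ w := by
          intro h; subst h
          have := hx v hvw
          rw [hH', SimpleGraph.deleteEdges_adj] at this
          rw [Sym2.eq_swap] at this
          simp at this
        exact Finset.mem_erase.2 ⟨hxw, Finset.mem_erase.2 ⟨hxv, (hF x).2 hxH⟩⟩
    obtain ⟨B', hB'sub, hB'card, hB'full⟩ :=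
      ih (m - 2) (by omega) H' F' hF'iff hcard'
    have hnotmem : s(v, w) ∉ B' := by
      intro h
      have := hB'sub h
      rw [SimpleGraph.mem_edgeSet, hH', SimpleGraph.deleteEdges_adj] at this
      simp at this
    refine ⟨insert s(v, w) B', ?_, ?_, ?_⟩
    · rw [Finset.coe_insert, Set.insert_subset_iff]
      refine ⟨hadj, ?_⟩
      intro e he
      have := hB'sub he
      rw [SimpleGraph.edgeSet_deleteEdges] at this
      exact this.1
    · rw [Finset.card_insert_of_notMem hnotmem, hB'card]
      omega
    · have heq : H.deleteEdges ↑(insert s(v, w) B') = H'.deleteEdges ↑B' := by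
        ext a b
        rw [SimpleGraph.deleteEdges_adj, hH', SimpleGraph.deleteEdges_adj,
          SimpleGraph.deleteEdges_adj]
        simp only [Finset.coe_insert, Set.mem_insert_iff, Set.mem_singleton_iff,
          Finset.mem_coe]
        tauto
      rw [heq]
      exact hB'full

end Aux

/-- If a graph of order `n ≥ 3` has `t ≥ 1` vertices of degree `n - 1`, then its
Roman bondage number is `⌈t/2⌉`. -/
theorem roman_bondage_of_full_degree_vertices
    {V : Type*} [Fintype V] [DecidableEq V] (G : SimpleGraph V) [DecidableRel G.Adj]
    (n : ℕ) (hn : Fintype.card V = n) (h3 : 3 ≤ n)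
    (t : ℕ) (htdef : t = (Finset.univ.filter (fun v => G.degree v = n - 1)).card)
    (ht : 1 ≤ t) :
    romanBondageNumber G = (t + 1) / 2 := by
  classical
  have h3' : 3 ≤ Fintype.card V := by omega
  have h2 : 2 ≤ Fintype.card V := by omega
  set F : Finset V := Finset.univ.filter (fun v => G.degree v = n - 1) with hFdef
  have hF : ∀ v, v ∈ F ↔ IsFullVx G v := by
    intro v
    rw [hFdef, Finset.mem_filter]
    simp only [Finset.mem_univ, true_and]
    rw [← hn]
    exact degree_eq_iff G v
  -- there is a full vertex
  have htcard : F.card = t := htdef.symm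
  obtain ⟨v₀, hv₀⟩ : ∃ v, v ∈ F := Finset.card_pos.1 (by omega)
  have hv₀full : IsFullVx G v₀ := (hF v₀).1 hv₀
  -- upper bound: construction
  obtain ⟨B, hBsub, hBcard, hBfull⟩ := key_construction h2 t G F hF htcard
  have hmem : (t + 1) / 2 ∈ {k | ∃ B : Finset (Sym2 V), ↑B ⊆ G.edgeSet ∧ B.card = k ∧
      romanDominationNumber G < romanDominationNumber (G.deleteEdges ↑B)} := by
    refine ⟨B, hBsub, hBcard, ?_⟩
    have hle := rdn_le_two G v₀ hv₀full
    have hge := rdn_ge_three h3' (G.deleteEdges ↑B) hBfull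
    omega
  -- lower bound
  have hlower : ∀ k ∈ {k | ∃ B : Finset (Sym2 V), ↑B ⊆ G.edgeSet ∧ B.card = k ∧
      romanDominationNumber G < romanDominationNumber (G.deleteEdges ↑B)},
      (t + 1) / 2 ≤ k := by
    rintro k ⟨B, hBsub, rfl, hlt⟩
    have h2' := rdn_ge_two h2 G
    have hnofull : ∀ v, ¬ IsFullVx (G.deleteEdges ↑B) v := by
      intro v hv
      have := rdn_le_two (G.deleteEdges ↑B) v hv
      omega
    -- every full vertex of G has an incident edge in B
    have hchoice : ∀ v ∈ F, ∃ e ∈ B, v ∈ e := by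
      intro v hv
      have hvfull := (hF v).1 hv
      have := hnofull v
      rw [IsFullVx] at this
      push_neg at this
      obtain ⟨u, hu, hnadj⟩ := this
      rw [SimpleGraph.deleteEdges_adj] at hnadj
      push_neg at hnadj
      have hmemB : s(v, u) ∈ (↑B : Set (Sym2 V)) := hnadj (hvfull u hu)
      exact ⟨s(v, u), hmemB, Sym2.mem_mk_left v u⟩
    set f : V → Sym2 V := fun v =>
      if h : ∃ e ∈ B, v ∈ e then h.choose else s(v, v) with hfdef
    have hfprop : ∀ v ∈ F, f v ∈ B ∧ v ∈ f v := by
      intro v hv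
      have h := hchoice v hv
      rw [hfdef]
      simp only [dif_pos h]
      exact ⟨h.choose_spec.1, h.choose_spec.2⟩
    have hcount : F.card ≤ 2 * (F.image f).card := by
      apply Finset.card_le_mul_card_image
      intro a ha
      obtain ⟨p, q⟩ := a
      have hsub : (F.filter fun x => f x = s(p, q)) ⊆ {p, q} := by
        intro x hx
        rw [Finset.mem_filter] at hx
        have hxmem : x ∈ f x := (hfprop x hx.1).2
        rw [hx.2] at hxmem
        rw [Sym2.mem_iff] at hxmem
        simpa using hxmem
      calc (F.filter fun x => f x = s(p, q)).card ≤ ({p, q} : Finset V).card :=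
            Finset.card_le_card hsub
        _ ≤ 2 := Finset.card_insert_le _ _ |>.trans (by simp)
    have himg : (F.image f).card ≤ B.card := by
      apply Finset.card_le_card
      intro e he
      obtain ⟨x, hx, rfl⟩ := Finset.mem_image.1 he
      exact (hfprop x hx).1
    omega
  rw [romanBondageNumber]
  exact le_antisymm (Nat.sInf_le hmem) (le_csInf ⟨_, hmem⟩ hlower)
end

section
/- Let G be a simple graph of order n ≥ 3 having at least one edge. Then the Roman domination number of G equals 3 if and only if the maximum degree of G equals n − 2. -/
open SimpleGraph

/-- If a Roman dominating function has weight at most 2 on a graph with at least 3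
vertices, then some vertex is adjacent to all others. -/
lemma aux_low_weight {V : Type*} [Fintype V] [DecidableEq V] (G : SimpleGraph V)
    [DecidableRel G.Adj] (h3 : 3 ≤ Fintype.card V)
    (f : V → ℕ)
    (hdom : ∀ v, f v = 0 → ∃ u, G.Adj v u ∧ f u = 2)
    (hsum : ∑ v, f v ≤ 2) :
    ∃ v, Fintype.card V - 1 ≤ G.degree v := by
  by_cases h2 : ∃ x, f x = 2
  · obtain ⟨x, hx⟩ := h2
    have hothers : ∀ w, w ≠ x → f w = 0 := by
      intro w hw
      by_contra h0
      have hpair : f x + f w ≤ ∑ v, f v := by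
        have : ∑ v ∈ ({x, w} : Finset V), f v ≤ ∑ v, f v :=
          Finset.sum_le_sum_of_subset (Finset.subset_univ _)
        rwa [Finset.sum_pair (Ne.symm hw)] at this
      omega
    refine ⟨x, ?_⟩
    have hsub : Finset.univ.erase x ⊆ G.neighborFinset x := by
      intro w hw
      have hwx : w ≠ x := Finset.ne_of_mem_erase hw
      obtain ⟨u, hadj, hu2⟩ := hdom w (hothers w hwx)
      have hux : u = x := by
        by_contra h
        have := hothers u h
        omega
      rw [SimpleGraph.mem_neighborFinset]
      exact hux ▸ hadj.symm
    calc Fintype.card V - 1 = (Finset.univ.erase x).card := by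
          rw [Finset.card_erase_of_mem (Finset.mem_univ x), Finset.card_univ]
      _ ≤ (G.neighborFinset x).card := Finset.card_le_card hsub
      _ = G.degree x := rfl
  · exfalso
    push_neg at h2
    have h1 : ∀ v, 1 ≤ f v := by
      intro v
      rcases Nat.eq_zero_or_pos (f v) with h0 | h
      · obtain ⟨u, _, hu2⟩ := hdom v h0
        exact absurd hu2 (h2 u)
      · exact h
    have : Fintype.card V ≤ ∑ v, f v := by
      calc Fintype.card V = ∑ _v : V, 1 := by simp
        _ ≤ ∑ v, f v := Finset.sum_le_sum fun v _ => h1 v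
    omega

/-- For a nonempty graph of order `n ≥ 3`, the Roman domination number equals `3`
iff the maximum degree equals `n - 2`. -/
theorem roman_domination_eq_three_iff
    {V : Type*} [Fintype V] [DecidableEq V] (G : SimpleGraph V) [DecidableRel G.Adj]
    (n : ℕ) (hn : Fintype.card V = n) (h3 : 3 ≤ n)
    (hne : G.edgeSet.Nonempty) :
    romanDominationNumber G = 3 ↔ G.maxDegree = n - 2 := by
  subst hn
  set N := Fintype.card V with hN
  have hVne : Nonempty V := Fintype.card_pos_iff.mp (by omega)
  set S : Set ℕ := {w | ∃ f : V → ℕ, (∀ v, f v ≤ 2) ∧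
    (∀ v, f v = 0 → ∃ u, G.Adj v u ∧ f u = 2) ∧ w = ∑ v, f v} with hS
  have hrdn : romanDominationNumber G = sInf S := rfl
  have hSne : N ∈ S := ⟨fun _ => 1, fun _ => one_le_two, fun v h => absurd h one_ne_zero,
    by simp [hN]⟩
  -- membership of small weight is impossible when maxDegree = N - 2... general facts:
  constructor
  · -- forward
    intro hγ
    rw [hrdn] at hγ
    have h3mem : 3 ∈ S := hγ ▸ Nat.sInf_mem ⟨N, hSne⟩
    obtain ⟨f, hle, hdom, hsum⟩ := h3mem
    -- upper bound: maxDegree ≤ N - 2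
    have hub : G.maxDegree ≤ N - 2 := by
      by_contra hc
      push_neg at hc
      obtain ⟨v, hv⟩ := G.exists_maximal_degree_vertex
      have hlt : G.degree v < N := G.degree_lt_card_verts v
      have hdeg : G.degree v = N - 1 := by omega
      have hsub : Finset.univ.erase v ⊆ G.neighborFinset v := by
        have hss : G.neighborFinset v ⊆ Finset.univ.erase v := fun w hw =>
          Finset.mem_erase.mpr
            ⟨G.ne_of_adj ((SimpleGraph.mem_neighborFinset _ _ _).mp hw).symm, Finset.mem_univ w⟩
        have heq : G.neighborFinset v = Finset.univ.erase v :=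
          Finset.eq_of_subset_of_card_le hss (by
            rw [Finset.card_erase_of_mem (Finset.mem_univ v), Finset.card_univ,
              SimpleGraph.card_neighborFinset_eq_degree, hdeg])
        exact Finset.subset_of_eq heq.symm
      have h2mem : 2 ∈ S := by
        refine ⟨fun w => if w = v then 2 else 0, ?_, ?_, ?_⟩
        · intro w; dsimp only; split <;> omega
        · intro w hw
          dsimp only at hw
          have hwv : w ≠ v := by intro h; rw [if_pos h] at hw; omega
          refine ⟨v, ?_, if_pos rfl⟩
          have : w ∈ G.neighborFinset v := hsub (Finset.mem_erase.mpr ⟨hwv, Finset.mem_univ w⟩)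
          exact ((SimpleGraph.mem_neighborFinset _ _ _).mp this).symm
        · show (2 : ℕ) = ∑ w, if w = v then 2 else 0
          rw [Finset.sum_ite_eq' Finset.univ v (fun _ => 2)]
          simp
      have := Nat.sInf_le h2mem
      omega
    -- lower bound: maxDegree ≥ N - 2
    have hlb : N - 2 ≤ G.maxDegree := by
      by_cases h2 : ∃ x, f x = 2
      · obtain ⟨x, hx⟩ := h2
        have hP : (Finset.univ.filter (fun w => f w ≠ 0)).card ≤ 2 := by
          set P := Finset.univ.filter (fun w => f w ≠ 0) with hPdef
          have hxP : x ∈ P := Finset.mem_filter.mpr ⟨Finset.mem_univ x, by omega⟩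
          have hsumP : ∑ w ∈ P, f w = 3 := by
            rw [hPdef, Finset.sum_filter_ne_zero]
            exact hsum.symm
          have : ∑ w ∈ P, f w = f x + ∑ w ∈ P.erase x, f w :=
            (Finset.add_sum_erase P f hxP).symm
          have hcard : (P.erase x).card ≤ ∑ w ∈ P.erase x, f w := by
            calc (P.erase x).card = ∑ _w ∈ P.erase x, 1 := by simp
              _ ≤ ∑ w ∈ P.erase x, f w := Finset.sum_le_sum fun w hw =>
                  Nat.one_le_iff_ne_zero.mpr
                    (Finset.mem_filter.mp (Finset.mem_of_mem_erase hw)).2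
          have := Finset.card_erase_of_mem hxP
          omega
        have hZsub : Finset.univ.filter (fun w => f w = 0) ⊆ G.neighborFinset x := by
          intro w hw
          obtain ⟨_, hw0⟩ := Finset.mem_filter.mp hw
          obtain ⟨u, hadj, hu2⟩ := hdom w hw0
          have hux : u = x := by
            by_contra h
            have : f u + f x ≤ ∑ v, f v := by
              have hs : ∑ v ∈ ({u, x} : Finset V), f v ≤ ∑ v, f v :=
                Finset.sum_le_sum_of_subset (Finset.subset_univ _)
              rwa [Finset.sum_pair h] at hs
            omega
          rw [SimpleGraph.mem_neighborFinset]
          exact hux ▸ hadj.symm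
        have hZcard : N - 2 ≤ (Finset.univ.filter (fun w => f w = 0)).card := by
          have := Finset.card_filter_add_card_filter_not
            (s := Finset.univ) (p := fun w => f w = 0)
          simp only [Finset.card_univ] at this
          have heq : (Finset.univ.filter (fun w => ¬ f w = 0)).card
              = (Finset.univ.filter (fun w => f w ≠ 0)).card := rfl
          omega
        calc N - 2 ≤ (Finset.univ.filter (fun w => f w = 0)).card := hZcard
          _ ≤ G.degree x := Finset.card_le_card hZsub
          _ ≤ G.maxDegree := G.degree_le_maxDegree x
      · push_neg at h2
        have h1 : ∀ v, f v = 1 := by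
          intro v
          rcases Nat.eq_zero_or_pos (f v) with h0 | h
          · obtain ⟨u, _, hu2⟩ := hdom v h0
            exact absurd hu2 (h2 u)
          · have := hle v
            have := h2 v
            omega
        have hN3 : N = 3 := by
          have : ∑ v, f v = N := by
            simp only [h1]
            simp [hN]
          omega
        obtain ⟨e, he⟩ := hne
        induction e with
        | h u v =>
          have hadj : G.Adj u v := he
          have : 1 ≤ G.degree u := by
            rw [← SimpleGraph.card_neighborFinset_eq_degree]
            exact Finset.card_pos.mpr ⟨v, (SimpleGraph.mem_neighborFinset _ _ _).mpr hadj⟩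
          have := G.degree_le_maxDegree u
          omega
    omega
  · -- backward
    intro hΔ
    rw [hrdn]
    obtain ⟨v, hv⟩ := G.exists_maximal_degree_vertex
    have hdeg : G.degree v = N - 2 := by omega
    have hnsub : G.neighborFinset v ⊆ Finset.univ.erase v := by
      intro w hw
      exact Finset.mem_erase.mpr
        ⟨G.ne_of_adj ((SimpleGraph.mem_neighborFinset _ _ _).mp hw).symm, Finset.mem_univ w⟩
    have hTcard : ((Finset.univ.erase v) \ G.neighborFinset v).card = 1 := by
      rw [Finset.card_sdiff_of_subset hnsub, Finset.card_erase_of_mem (Finset.mem_univ v),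
        Finset.card_univ, SimpleGraph.card_neighborFinset_eq_degree, hdeg]
      omega
    obtain ⟨u, hu⟩ := Finset.card_eq_one.mp hTcard
    have huv : u ≠ v := by
      have : u ∈ (Finset.univ.erase v) \ G.neighborFinset v := hu ▸ Finset.mem_singleton_self u
      exact Finset.ne_of_mem_erase (Finset.mem_sdiff.mp this).1
    have h3mem : 3 ∈ S := by
      refine ⟨fun w => if w = v then 2 else if w = u then 1 else 0, ?_, ?_, ?_⟩
      · intro w; dsimp only; split
        · omega
        · split <;> omega
      · intro w hw
        dsimp only at hw
        have hwv : w ≠ v := by intro h; rw [if_pos h] at hw; omega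
        have hwu : w ≠ u := by
          intro h
          rw [if_neg (h ▸ huv), if_pos h] at hw; omega
        refine ⟨v, ?_, if_pos rfl⟩
        have hwmem : w ∈ Finset.univ.erase v := Finset.mem_erase.mpr ⟨hwv, Finset.mem_univ w⟩
        have : w ∈ G.neighborFinset v := by
          by_contra h
          have : w ∈ (Finset.univ.erase v) \ G.neighborFinset v := Finset.mem_sdiff.mpr ⟨hwmem, h⟩
          rw [hu, Finset.mem_singleton] at this
          exact hwu this
        exact ((SimpleGraph.mem_neighborFinset _ _ _).mp this).symm
      · show (3 : ℕ) = ∑ w, if w = v then 2 else if w = u then 1 else 0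
        have hzero : ∀ w ∈ Finset.univ, w ∉ ({v, u} : Finset V) →
            (if w = v then 2 else if w = u then 1 else 0) = 0 := by
          intro w _ hw
          simp only [Finset.mem_insert, Finset.mem_singleton, not_or] at hw
          rw [if_neg hw.1, if_neg hw.2]
        rw [← Finset.sum_subset (Finset.subset_univ ({v, u} : Finset V)) hzero,
          Finset.sum_pair (Ne.symm huv)]
        rw [if_pos rfl, if_neg huv, if_pos rfl]
    apply le_antisymm
    · exact Nat.sInf_le h3mem
    · apply le_csInf ⟨3, h3mem⟩
      intro b hb
      by_contra hblt
      push_neg at hblt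
      obtain ⟨f, hle, hdom, hsum⟩ := hb
      obtain ⟨x, hx⟩ := aux_low_weight G h3 f hdom (by omega)
      have := G.degree_le_maxDegree x
      omega
end

section
/- Let G be an (n−3)-regular simple graph of order n ≥ 4. Then the Roman domination number of G equals 4. -/
open SimpleGraph

lemma nonadj_structure {V : Type*} [Fintype V] [DecidableEq V] (G : SimpleGraph V)
    [DecidableRel G.Adj] (n : ℕ) (hn : Fintype.card V = n) (h4 : 4 ≤ n)
    (hreg : G.IsRegularOfDegree (n - 3)) (v : V) :
    ∃ a b : V, a ≠ b ∧ a ≠ v ∧ b ≠ v ∧ ¬ G.Adj v a ∧ ¬ G.Adj v b ∧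
      ∀ u, u ≠ v → u ≠ a → u ≠ b → G.Adj v u := by
  set S : Finset V := Finset.univ.filter (fun u => u ≠ v ∧ ¬ G.Adj v u) with hS
  have hcompl : Finset.univ.filter (fun u => ¬ (u ≠ v ∧ ¬ G.Adj v u))
      = insert v (G.neighborFinset v) := by
    ext u
    simp only [Finset.mem_filter, Finset.mem_univ, true_and, Finset.mem_insert,
      mem_neighborFinset]
    tauto
  have hnotmem : v ∉ G.neighborFinset v := by
    simp [mem_neighborFinset]
  have hdeg : (G.neighborFinset v).card = n - 3 := hreg v
  have hsplit := Finset.card_filter_add_card_filter_not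
    (s := (Finset.univ : Finset V)) (p := fun u => u ≠ v ∧ ¬ G.Adj v u)
  rw [hcompl] at hsplit
  have hins : (insert v (G.neighborFinset v)).card = (n - 3) + 1 := by
    rw [Finset.card_insert_of_notMem hnotmem, hdeg]
  have hcardS : S.card = 2 := by
    rw [hS]
    rw [Finset.card_univ, hn] at hsplit
    rw [hins] at hsplit
    omega
  obtain ⟨a, b, hab, hSab⟩ := Finset.card_eq_two.mp hcardS
  have hamem : a ∈ S := by rw [hSab]; simp
  have hbmem : b ∈ S := by rw [hSab]; simp
  rw [hS, Finset.mem_filter] at hamem hbmem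
  refine ⟨a, b, hab, hamem.2.1, hbmem.2.1, hamem.2.2, hbmem.2.2, ?_⟩
  intro u huv hua hub
  by_contra hadj
  have : u ∈ S := by rw [hS, Finset.mem_filter]; exact ⟨Finset.mem_univ u, huv, hadj⟩
  rw [hSab] at this
  simp only [Finset.mem_insert, Finset.mem_singleton] at this
  tauto

/-- An `(n-3)`-regular graph of order `n ≥ 4` has Roman domination number `4`. -/
theorem roman_domination_of_regular
    {V : Type*} [Fintype V] [DecidableEq V] (G : SimpleGraph V) [DecidableRel G.Adj]
    (n : ℕ) (hn : Fintype.card V = n) (h4 : 4 ≤ n)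
    (hreg : G.IsRegularOfDegree (n - 3)) :
    romanDominationNumber G = 4 := by
  classical
  have hV : Nonempty V := by
    rw [← Fintype.card_pos_iff]; omega
  obtain ⟨v⟩ := hV
  obtain ⟨a, b, hab, hav, hbv, hnadja, hnadjb, hadj⟩ :=
    nonadj_structure G n hn h4 hreg v
  -- the weight-4 RDF
  set f : V → ℕ := fun u => if u = v then 2 else if u = a ∨ u = b then 1 else 0 with hf
  have hfv : f v = 2 := by simp [hf]
  have hfa : f a = 1 := by simp [hf, hav]
  have hfb : f b = 1 := by simp [hf, hbv]
  have hsum : ∑ u, f u = 4 := by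
    have hsub : ∑ u, f u = ∑ u ∈ ({v, a, b} : Finset V), f u := by
      refine (Finset.sum_subset (Finset.subset_univ _) ?_).symm
      intro x _ hx
      simp only [Finset.mem_insert, Finset.mem_singleton, not_or] at hx
      simp [hf, hx.1, hx.2.1, hx.2.2]
    rw [hsub]
    rw [Finset.sum_insert (by simp [hav.symm, hbv.symm]),
        Finset.sum_insert (by simp [hab]), Finset.sum_singleton, hfv, hfa, hfb]
    omega
  have hmem : (4 : ℕ) ∈ {w | ∃ f : V → ℕ, (∀ v, f v ≤ 2) ∧
      (∀ v, f v = 0 → ∃ u, G.Adj v u ∧ f u = 2) ∧ w = ∑ v, f v} := by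
    refine ⟨f, ?_, ?_, hsum.symm⟩
    · intro u
      simp only [hf]
      split_ifs <;> omega
    · intro u hu
      have huv : u ≠ v := by intro h; rw [h, hfv] at hu; omega
      have hua : u ≠ a := by intro h; rw [h, hfa] at hu; omega
      have hub : u ≠ b := by intro h; rw [h, hfb] at hu; omega
      exact ⟨v, (hadj u huv hua hub).symm, hfv⟩
  -- lower bound
  have hlb : ∀ w ∈ {w | ∃ f : V → ℕ, (∀ v, f v ≤ 2) ∧
      (∀ v, f v = 0 → ∃ u, G.Adj v u ∧ f u = 2) ∧ w = ∑ v, f v}, 4 ≤ w := by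
    rintro w ⟨g, hg2, hg0, rfl⟩
    by_contra hlt
    push_neg at hlt
    by_cases hex : ∃ x, g x = 2
    · obtain ⟨x, hx2⟩ := hex
      obtain ⟨c, d, hcd, hcx, hdx, hnc, hnd, _⟩ := nonadj_structure G n hn h4 hreg x
      have pair_le : ∀ y z : V, y ≠ z → g y + g z ≤ ∑ u, g u := by
        intro y z hyz
        calc g y + g z = ∑ u ∈ ({y, z} : Finset V), g u := by
              rw [Finset.sum_pair hyz]
          _ ≤ ∑ u, g u := Finset.sum_le_sum_of_subset (Finset.subset_univ _)
      have hc1 : 1 ≤ g c := by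
        by_contra h
        have hc0 : g c = 0 := by omega
        obtain ⟨u, hu, hu2⟩ := hg0 c hc0
        have hux : u ≠ x := by
          intro h'; rw [h'] at hu; exact hnc hu.symm
        have := pair_le x u hux.symm
        omega
      have hd1 : 1 ≤ g d := by
        by_contra h
        have hd0 : g d = 0 := by omega
        obtain ⟨u, hu, hu2⟩ := hg0 d hd0
        have hux : u ≠ x := by
          intro h'; rw [h'] at hu; exact hnd hu.symm
        have := pair_le x u hux.symm
        omega
      have htri : g x + g c + g d ≤ ∑ u, g u := by
        calc g x + g c + g d = ∑ u ∈ ({x, c, d} : Finset V), g u := by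
              rw [Finset.sum_insert (by simp [hcx.symm, hdx.symm]),
                  Finset.sum_insert (by simp [hcd]), Finset.sum_singleton]
              omega
          _ ≤ ∑ u, g u := Finset.sum_le_sum_of_subset (Finset.subset_univ _)
      omega
    · push_neg at hex
      have h1 : ∀ x, 1 ≤ g x := by
        intro x
        rcases Nat.eq_zero_or_pos (g x) with h | h
        · obtain ⟨u, _, hu2⟩ := hg0 x h
          exact absurd hu2 (hex u)
        · exact h
      have : Fintype.card V ≤ ∑ u, g u := by
        rw [← Finset.card_univ, Finset.card_eq_sum_ones]
        exact Finset.sum_le_sum (fun i _ => h1 i)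
      omega
  exact le_antisymm (Nat.sInf_le hmem) (le_csInf ⟨4, hmem⟩ hlb)
end

section
/- Let G be an (n−3)-regular simple graph of order n ≥ 5, let B ⊆ E(G) be a Roman bondage set of G, let x be a vertex, and let y and z be the only two vertices not adjacent to x in G. Suppose the only edge of B incident with x is xw for some vertex w. Then for every vertex x' ∉ {x, y, z, w} that is adjacent in G to each of y, z, and w, the set B contains at least one edge of G joining x' to a vertex of {y, z, w}. -/
open SimpleGraph

/-- Any Roman dominating function on an `(n-3)`-regular graph of order `n ≥ 5`
has weight at least `4`. -/
lemma rdf_lower_aux {V : Type*} [Fintype V] [DecidableEq V] (G : SimpleGraph V) [DecidableRel G.Adj]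
    (n : ℕ) (hn : Fintype.card V = n) (h5 : 5 ≤ n)
    (hreg : G.IsRegularOfDegree (n - 3))
    (f : V → ℕ)
    (hrdf : ∀ v, f v = 0 → ∃ u, G.Adj v u ∧ f u = 2) :
    4 ≤ ∑ v, f v := by
  have key2 : ∀ a b : V, a ≠ b → f a + f b ≤ ∑ v, f v := by
    intro a b hab
    rw [← Finset.sum_pair hab]
    exact Finset.sum_le_sum_of_subset (Finset.subset_univ _)
  have key3 : ∀ a b c : V, a ≠ b → a ≠ c → b ≠ c → f a + f b + f c ≤ ∑ v, f v := by
    intro a b c hab hac hbc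
    have h1 : f a + f b + f c = ∑ v ∈ ({a, b, c} : Finset V), f v := by
      rw [Finset.sum_insert (by simp [hab, hac]), Finset.sum_pair hbc, add_assoc]
    rw [h1]
    exact Finset.sum_le_sum_of_subset (Finset.subset_univ _)
  by_cases hT : ∃ v, f v = 2
  · obtain ⟨v, hv⟩ := hT
    have hv' : v ∈ (G.neighborFinset v)ᶜ := by simp
    have h1 : ((G.neighborFinset v)ᶜ).card = n - (n - 3) := by
      rw [Finset.card_compl, G.card_neighborFinset_eq_degree, hreg v, hn]
    have h2 : 1 < ((G.neighborFinset v)ᶜ.erase v).card := by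
      rw [Finset.card_erase_of_mem hv', h1]; omega
    obtain ⟨u1, hu1, u2, hu2, h12⟩ := Finset.one_lt_card.mp h2
    simp only [Finset.mem_erase, Finset.mem_compl, SimpleGraph.mem_neighborFinset] at hu1 hu2
    rcases Nat.eq_zero_or_pos (f u1) with h|hp1
    · obtain ⟨t, ht, ht2⟩ := hrdf u1 h
      have htv : t ≠ v := by
        intro he; exact hu1.2 (he ▸ ht.symm)
      have := key2 v t (Ne.symm htv)
      omega
    rcases Nat.eq_zero_or_pos (f u2) with h|hp2
    · obtain ⟨t, ht, ht2⟩ := hrdf u2 h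
      have htv : t ≠ v := by
        intro he; exact hu2.2 (he ▸ ht.symm)
      have := key2 v t (Ne.symm htv)
      omega
    · have := key3 v u1 u2 (Ne.symm hu1.1) (Ne.symm hu2.1) h12
      omega
  · push_neg at hT
    have hge : ∀ v ∈ Finset.univ, 1 ≤ f v := by
      intro v _
      rcases Nat.eq_zero_or_pos (f v) with h|h
      · obtain ⟨u, _, hu2⟩ := hrdf v h
        exact absurd hu2 (hT u)
      · exact h
    have := Finset.card_nsmul_le_sum Finset.univ f 1 hge
    rw [smul_eq_mul, mul_one, Finset.card_univ, hn] at this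
    have h' : n ≤ ∑ v, f v := by simpa using this
    omega

/-- Lemma 2.6: in an `(n-3)`-regular graph of order `n ≥ 5`, with `B` a Roman bondage
set, `y, z` the only two non-neighbors of `x`, and `xw` the only edge of `B` at `x`,
every vertex `x'` outside `{x,y,z,w}` adjacent to all of `y, z, w` is joined by an
edge of `B` to one of `y, z, w`. -/
theorem roman_bondage_lemma_2_6
    {V : Type*} [Fintype V] [DecidableEq V] (G : SimpleGraph V) [DecidableRel G.Adj]
    (n : ℕ) (hn : Fintype.card V = n) (h5 : 5 ≤ n)
    (hreg : G.IsRegularOfDegree (n - 3))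
    (B : Finset (Sym2 V)) (hBsub : ↑B ⊆ G.edgeSet)
    (hB : romanDominationNumber G < romanDominationNumber (G.deleteEdges ↑B))
    (x y z w : V)
    (hyz : y ≠ z) (hxy : x ≠ y) (hxz : x ≠ z)
    (hnxy : ¬ G.Adj x y) (hnxz : ¬ G.Adj x z)
    (honly : ∀ v : V, v ≠ x → ¬ G.Adj x v → v = y ∨ v = z)
    (hxwB : s(x, w) ∈ B)
    (hxwonly : ∀ e ∈ B, x ∈ e → e = s(x, w)) :
    ∀ x' : V, x' ∉ ({x, y, z, w} : Set V) →
      G.Adj x' y → G.Adj x' z → G.Adj x' w →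
      ∃ u ∈ ({y, z, w} : Set V), s(x', u) ∈ B := by
  intro x' hx' hy hz hw
  by_contra hcon
  push_neg at hcon
  simp only [Set.mem_insert_iff, Set.mem_singleton_iff, not_or] at hx'
  obtain ⟨hx'x, hx'y, hx'z, hx'w⟩ := hx'
  have hBy : s(x', y) ∉ B := hcon y (by simp)
  have hBz : s(x', z) ∉ B := hcon z (by simp)
  have hBw : s(x', w) ∉ B := hcon w (by simp)
  -- the RDF on G - B of weight 4
  obtain ⟨f, hfdef⟩ : ∃ f : V → ℕ, f = fun v => if v = x ∨ v = x' then 2 else 0 := ⟨_, rfl⟩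
  have hf2 : ∀ v, f v ≤ 2 := by
    intro v; simp only [hfdef]; split <;> omega
  have hptwise : ∀ v, f v = (if v = x then 2 else 0) + (if v = x' then 2 else 0) := by
    intro v
    by_cases h1 : v = x
    · subst h1
      simp [hfdef, Ne.symm hx'x]
    · by_cases h2 : v = x'
      · subst h2; simp [hfdef, h1]
      · simp [hfdef, h1, h2]
  have hsum : ∑ v, f v = 4 := by
    rw [Finset.sum_congr rfl fun v _ => hptwise v, Finset.sum_add_distrib]
    simp
  have hRDF : ∀ v, f v = 0 → ∃ u, (G.deleteEdges ↑B).Adj v u ∧ f u = 2 := by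
    intro v hv0
    have hvx : v ≠ x := by intro h; simp [hfdef, h] at hv0
    have hvx' : v ≠ x' := by intro h; simp [hfdef, h] at hv0
    have hfx' : f x' = 2 := by simp [hfdef]
    have hfx : f x = 2 := by simp [hfdef]
    by_cases hvy : v = y
    · subst hvy
      refine ⟨x', ?_, hfx'⟩
      rw [SimpleGraph.deleteEdges_adj]
      refine ⟨hy.symm, ?_⟩
      rw [Sym2.eq_swap]
      exact fun hmem => hBy hmem
    by_cases hvz : v = z
    · subst hvz
      refine ⟨x', ?_, hfx'⟩
      rw [SimpleGraph.deleteEdges_adj]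
      refine ⟨hz.symm, ?_⟩
      rw [Sym2.eq_swap]
      exact fun hmem => hBz hmem
    by_cases hvw : v = w
    · subst hvw
      refine ⟨x', ?_, hfx'⟩
      rw [SimpleGraph.deleteEdges_adj]
      refine ⟨hw.symm, ?_⟩
      rw [Sym2.eq_swap]
      exact fun hmem => hBw hmem
    · -- v is adjacent to x in G - B
      refine ⟨x, ?_, hfx⟩
      rw [SimpleGraph.deleteEdges_adj]
      constructor
      · by_contra hna
        have : ¬ G.Adj x v := fun h => hna h.symm
        rcases honly v hvx this with h|h
        · exact hvy h
        · exact hvz h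
      · intro hmem
        have hxmem : x ∈ s(v, x) := by simp
        have := hxwonly _ hmem hxmem
        rw [Sym2.eq_iff] at this
        rcases this with ⟨h1, h2⟩ | ⟨h1, h2⟩
        · exact hvx h1
        · exact hvw h1
  unfold romanDominationNumber at hB
  have hH : sInf {k | ∃ f : V → ℕ, (∀ v, f v ≤ 2) ∧
      (∀ v, f v = 0 → ∃ u, (G.deleteEdges ↑B).Adj v u ∧ f u = 2) ∧ k = ∑ v, f v} ≤ 4 :=
    Nat.sInf_le ⟨f, hf2, hRDF, hsum.symm⟩
  have hne : {k | ∃ f : V → ℕ, (∀ v, f v ≤ 2) ∧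
      (∀ v, f v = 0 → ∃ u, G.Adj v u ∧ f u = 2) ∧ k = ∑ v, f v}.Nonempty :=
    ⟨∑ _v : V, 1, fun _ => 1, fun _ => one_le_two, fun v h => absurd h one_ne_zero, rfl⟩
  obtain ⟨g, _, hgrdf, hgsum⟩ := Nat.sInf_mem hne
  have hlow := rdf_lower_aux G n hn h5 hreg g hgrdf
  have hlt := lt_of_lt_of_le hB hH
  rw [hgsum] at hlt
  exact absurd hlow (not_le.mpr hlt)
end

section
/- Let G be an (n−3)-regular simple graph of order n ≥ 6 and let B ⊆ E(G) be a Roman bondage set of G. Suppose x, y, z are three pairwise non-adjacent vertices of G each of which is incident with exactly one edge of B. Then |B| ≥ n − 2; moreover, if G is isomorphic to the complete multipartite graph K_{3,3,...,3} all of whose parts have size 3, then |B| ≥ n − 1. -/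
open SimpleGraph
open Finset

lemma aux_rdn_le {V : Type*} [Fintype V] (G : SimpleGraph V) (f : V → ℕ)
    (h2 : ∀ v, f v ≤ 2) (hdom : ∀ v, f v = 0 → ∃ u, G.Adj v u ∧ f u = 2) :
    romanDominationNumber G ≤ ∑ v, f v :=
  Nat.sInf_le ⟨f, h2, hdom, rfl⟩

lemma aux_card2 {V : Type*} [Fintype V] [DecidableEq V] (G : SimpleGraph V) [DecidableRel G.Adj]
    (n : ℕ) (hn : Fintype.card V = n) (h6 : 6 ≤ n) (hreg : G.IsRegularOfDegree (n - 3)) (u : V) :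
    (univ.filter fun v => v ≠ u ∧ ¬G.Adj u v).card = 2 := by
  have h1 : (univ.filter fun v : V => v = u ∨ G.Adj u v) = insert u (G.neighborFinset u) := by
    ext v; simp [eq_comm]
  have h2 : (insert u (G.neighborFinset u)).card = (n - 3) + 1 := by
    rw [Finset.card_insert_of_notMem (by simp), card_neighborFinset_eq_degree, hreg u]
  have h3 := Finset.card_filter_add_card_filter_not (s := (univ : Finset V))
    (p := fun v : V => v = u ∨ G.Adj u v)
  have h4 : (univ.filter fun v : V => ¬(v = u ∨ G.Adj u v)) =
      (univ.filter fun v => v ≠ u ∧ ¬G.Adj u v) := by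
    apply Finset.filter_congr; intro v _; simp [not_or]
  rw [h4, h1, h2, Finset.card_univ, hn] at h3
  omega


lemma aux_rdn_ge4 {V : Type*} [Fintype V] [DecidableEq V] (G : SimpleGraph V) [DecidableRel G.Adj]
    (n : ℕ) (hn : Fintype.card V = n) (h6 : 6 ≤ n) (hreg : G.IsRegularOfDegree (n - 3)) :
    4 ≤ romanDominationNumber G := by
  classical
  have hne : {w | ∃ f : V → ℕ, (∀ v, f v ≤ 2) ∧
      (∀ v, f v = 0 → ∃ u, G.Adj v u ∧ f u = 2) ∧ w = ∑ v, f v}.Nonempty :=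
    ⟨∑ _v : V, 2, fun _ => 2, fun _ => le_rfl, fun v hv => absurd hv (by simp), rfl⟩
  obtain ⟨f, hf2, hdom, hw⟩ := Nat.sInf_mem hne
  unfold romanDominationNumber
  rw [hw]; clear hw hne
  by_contra hc
  push_neg at hc
  have hc3 : ∑ v, f v ≤ 3 := by omega
  -- there is a vertex with value 0
  have hv0 : ∃ v0, f v0 = 0 := by
    by_contra h
    push_neg at h
    have : (univ : Finset V).card • 1 ≤ ∑ v, f v :=
      Finset.card_nsmul_le_sum univ f 1 (fun v _ => by have := h v; omega)
    rw [Finset.card_univ, hn] at this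
    simp at this
    omega
  obtain ⟨v0, hv0⟩ := hv0
  obtain ⟨u0, hadj0, hu0⟩ := hdom v0 hv0
  have huniq : ∀ u, f u = 2 → u = u0 := by
    intro u hu
    by_contra hne2
    have h := Finset.sum_le_sum_of_subset (Finset.subset_univ ({u, u0} : Finset V)) (f := f)
    rw [Finset.sum_pair hne2] at h
    omega
  set T := univ.filter (fun v => f v ≠ 0) with hT
  have hu0T : u0 ∈ T := by simp [hT]; omega
  have hTsum : ∑ v ∈ T, f v ≤ 3 :=
    le_trans (Finset.sum_le_sum_of_subset (Finset.subset_univ T)) hc3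
  have hTsum2 : f u0 + ∑ v ∈ T.erase u0, f v = ∑ v ∈ T, f v := Finset.add_sum_erase T f hu0T
  have hTerase : (T.erase u0).card • 1 ≤ ∑ v ∈ T.erase u0, f v :=
    Finset.card_nsmul_le_sum _ f 1 (fun v hv => by
      have := (Finset.mem_filter.mp (Finset.mem_of_mem_erase hv)).2; omega)
  simp only [smul_eq_mul, mul_one] at hTerase
  have hTcard : T.card ≤ 2 := by
    have := Finset.card_erase_of_mem hu0T
    omega
  have hZ : univ.filter (fun v => f v = 0) ⊆ G.neighborFinset u0 := by
    intro v hv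
    obtain ⟨_, hv⟩ := Finset.mem_filter.mp hv
    obtain ⟨u, hadj, hu2⟩ := hdom v hv
    rw [huniq u hu2] at hadj
    exact (G.mem_neighborFinset u0 v).mpr hadj.symm
  have hZcard := Finset.card_le_card hZ
  rw [card_neighborFinset_eq_degree, hreg u0] at hZcard
  have hsplit := Finset.card_filter_add_card_filter_not (s := (univ : Finset V))
    (p := fun v : V => f v = 0)
  have hTc : (univ.filter fun v : V => ¬ f v = 0) = T := rfl
  rw [hTc, Finset.card_univ, hn] at hsplit
  omega



/-- Lemma 2.7: in an `(n-3)`-regular graph of order `n ≥ 6`, if a Roman bondage set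
`B` has exactly one edge incident with each of three pairwise non-adjacent vertices
`x, y, z`, then `|B| ≥ n - 2`, and `|B| ≥ n - 1` if moreover `G` is a complete
multipartite graph with all parts of size `3`. -/
theorem roman_bondage_lemma_2_7
    {V : Type*} [Fintype V] [DecidableEq V] (G : SimpleGraph V) [DecidableRel G.Adj]
    (n : ℕ) (hn : Fintype.card V = n) (h6 : 6 ≤ n)
    (hreg : G.IsRegularOfDegree (n - 3))
    (B : Finset (Sym2 V)) (hBsub : ↑B ⊆ G.edgeSet)
    (hB : romanDominationNumber G < romanDominationNumber (G.deleteEdges ↑B))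
    (x y z : V)
    (hxy : x ≠ y) (hxz : x ≠ z) (hyz : y ≠ z)
    (hnxy : ¬ G.Adj x y) (hnxz : ¬ G.Adj x z) (hnyz : ¬ G.Adj y z)
    (hx1 : (B.filter (fun e => x ∈ e)).card = 1)
    (hy1 : (B.filter (fun e => y ∈ e)).card = 1)
    (hz1 : (B.filter (fun e => z ∈ e)).card = 1) :
    n - 2 ≤ B.card ∧
      ((∃ t : ℕ, Nonempty (G ≃g completeMultipartiteGraph (fun _ : Fin t => Fin 3))) →
        n - 1 ≤ B.card) := by
  classical
  have hG5 : 5 ≤ romanDominationNumber (G.deleteEdges ↑B) := by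
    have := aux_rdn_ge4 G n hn h6 hreg
    omega
  have hcard2 : ∀ u : V, (univ.filter fun v => v ≠ u ∧ ¬G.Adj u v).card = 2 :=
    aux_card2 G n hn h6 hreg
  -- classification of non-neighbors
  have hN : ∀ a b c : V, b ≠ a → c ≠ a → b ≠ c → ¬G.Adj a b → ¬G.Adj a c →
      ∀ m, m ≠ a → ¬G.Adj a m → m = b ∨ m = c := by
    intro a b c hba hca hbc nab nac m hma hadj
    have hsub : ({b, c} : Finset V) ⊆ univ.filter (fun v => v ≠ a ∧ ¬G.Adj a v) := by
      intro w hw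
      rcases Finset.mem_insert.mp hw with rfl | hw
      · simp [hba, nab]
      · rw [Finset.mem_singleton] at hw; subst hw; simp [hca, nac]
    have heq := Finset.eq_of_subset_of_card_le hsub
      (by rw [hcard2 a, Finset.card_insert_of_notMem (by simp [hbc]), Finset.card_singleton])
    have hm : m ∈ ({b, c} : Finset V) := by
      rw [heq]; exact Finset.mem_filter.mpr ⟨Finset.mem_univ m, hma, hadj⟩
    simpa using hm
  -- C1 : every vertex meets B
  have hC1 : ∀ v : V, ∃ e ∈ B, v ∈ e := by
    intro v
    by_contra hcon
    push_neg at hcon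
    set f : V → ℕ := fun w => if w = v then 2 else if G.Adj v w then 0 else 1 with hf
    have hf2 : ∀ w, f w ≤ 2 := by intro w; simp only [hf]; split_ifs <;> omega
    have hdom : ∀ w, f w = 0 → ∃ m, (G.deleteEdges ↑B).Adj w m ∧ f m = 2 := by
      intro w hw
      have hwv : w ≠ v := by intro h; simp [hf, h] at hw
      have hadj : G.Adj v w := by by_contra h; simp [hf, hwv, h] at hw
      refine ⟨v, ?_, by simp [hf]⟩
      rw [SimpleGraph.deleteEdges_adj]
      refine ⟨hadj.symm, fun hmem => hcon _ hmem ?_⟩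
      simp
    have hle := aux_rdn_le _ f hf2 hdom
    have hsum : ∑ w, f w = 4 := by
      have hsplit : ∀ w, f w = (if w = v then 2 else 0) +
          (if w ≠ v ∧ ¬G.Adj v w then 1 else 0) := by
        intro w
        simp only [hf]
        by_cases h1 : w = v
        · simp [h1]
        · by_cases h2 : G.Adj v w <;> simp [h1, h2]
      rw [Finset.sum_congr rfl (fun w _ => hsplit w), Finset.sum_add_distrib]
      rw [Finset.sum_ite_eq' univ v (fun _ => 2), Finset.sum_boole]
      simp [hcard2 v]
    omega
  -- C2 : every pair misses a common vertex
  have hC2 : ∀ u w : V, u ≠ w → ∃ m, m ≠ u ∧ m ≠ w ∧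
      ¬(G.deleteEdges ↑B).Adj u m ∧ ¬(G.deleteEdges ↑B).Adj w m := by
    intro u w huw
    by_contra hcon
    push_neg at hcon
    set f : V → ℕ := fun v => (if v = u then 2 else 0) + (if v = w then 2 else 0) with hf
    have hfu : f u = 2 := by simp [hf, huw]
    have hfw : f w = 2 := by simp [hf, Ne.symm huw]
    have hf2 : ∀ v, f v ≤ 2 := by
      intro v
      by_cases h1 : v = u
      · subst h1; omega
      · by_cases h2 : v = w
        · subst h2; omega
        · simp [hf, h1, h2]
    have hdom : ∀ v, f v = 0 → ∃ m, (G.deleteEdges ↑B).Adj v m ∧ f m = 2 := by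
      intro v hv
      have hvu : v ≠ u := by intro h; rw [h] at hv; omega
      have hvw : v ≠ w := by intro h; rw [h] at hv; omega
      by_cases hadj : (G.deleteEdges ↑B).Adj u v
      · exact ⟨u, hadj.symm, hfu⟩
      · exact ⟨w, (hcon v hvu hvw hadj).symm, hfw⟩
    have hle := aux_rdn_le _ f hf2 hdom
    have hsum : ∑ v, f v = 4 := by
      simp only [hf]
      rw [Finset.sum_add_distrib, Finset.sum_ite_eq' univ u (fun _ => 2),
        Finset.sum_ite_eq' univ w (fun _ => 2)]
      simp
    omega
  -- unique B-edge partners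
  have partner : ∀ v : V, (B.filter (fun e => v ∈ e)).card = 1 →
      ∃ v', G.Adj v v' ∧ s(v,v') ∈ B ∧ (∀ m, s(v,m) ∈ B → m = v') := by
    intro v hv1
    obtain ⟨e, he⟩ := Finset.card_eq_one.mp hv1
    have heB : e ∈ B ∧ v ∈ e := by
      have h : e ∈ B.filter (fun e => v ∈ e) := by
        rw [he]; exact Finset.mem_singleton_self e
      simpa [Finset.mem_filter] using h
    obtain ⟨v', hev'⟩ := Sym2.mem_iff_exists.mp heB.2
    have heB1 := heB.1
    rw [hev'] at heB1
    have hadj : G.Adj v v' := G.mem_edgeSet.mp (hBsub (Finset.mem_coe.mpr heB1))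
    refine ⟨v', hadj, heB1, ?_⟩
    intro m hm
    have hmf : s(v,m) ∈ B.filter (fun e => v ∈ e) :=
      Finset.mem_filter.mpr ⟨hm, by simp⟩
    rw [he, Finset.mem_singleton, hev'] at hmf
    rcases Sym2.eq_iff.mp hmf with ⟨-, h⟩ | ⟨h1, h2⟩
    · exact h
    · exact h2.trans h1
  obtain ⟨x', hax, hbx, hux⟩ := partner x hx1
  obtain ⟨y', hay, hby, huy⟩ := partner y hy1
  obtain ⟨z', haz, hbz, huz⟩ := partner z hz1
  -- the key pair argument : a' = b' or a' = c'
  have key : ∀ a b c a' b' c' : V,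
      a ≠ b → a ≠ c → b ≠ c →
      ¬G.Adj a b → ¬G.Adj a c → ¬G.Adj b c →
      G.Adj a a' →
      (∀ m, s(a,m) ∈ B → m = a') → (∀ m, s(b,m) ∈ B → m = b') →
      (∀ m, s(c,m) ∈ B → m = c') →
      a' = b' ∨ a' = c' := by
    intro a b c a' b' c' hab hac hbc nab nac nbc haa' ua ub uc
    have ha'a : a ≠ a' := G.ne_of_adj haa'
    have ha'b : a' ≠ b := fun h => nab (h ▸ haa')
    have ha'c : a' ≠ c := fun h => nac (h ▸ haa')
    obtain ⟨m, hma, hma', h1, h2⟩ := hC2 a a' ha'a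
    rw [SimpleGraph.deleteEdges_adj] at h1 h2
    push_neg at h1 h2
    have hm3 : m = b ∨ m = c := by
      by_cases hadj : G.Adj a m
      · exact absurd (ua m (Finset.mem_coe.mp (h1 hadj))) hma'
      · exact hN a b c (Ne.symm hab) (Ne.symm hac) hbc nab nac m hma hadj
    rcases hm3 with hm | hm
    all_goals rw [hm] at h2
    · left
      by_cases hadj : G.Adj a' b
      · exact ub a' (by rw [Sym2.eq_swap]; exact Finset.mem_coe.mp (h2 hadj))
      · rcases hN b a c hab (Ne.symm hbc) hac (fun h => nab h.symm) nbc a'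
          ha'b (fun h => hadj h.symm) with h | h
        · exact absurd h (Ne.symm ha'a)
        · exact absurd h ha'c
    · right
      by_cases hadj : G.Adj a' c
      · exact uc a' (by rw [Sym2.eq_swap]; exact Finset.mem_coe.mp (h2 hadj))
      · rcases hN c a b hac hbc hab (fun h => nac h.symm) (fun h => nbc h.symm) a'
          ha'c (fun h => hadj h.symm) with h | h
        · exact absurd h (Ne.symm ha'a)
        · exact absurd h ha'b
  have hk1 := key x y z x' y' z' hxy hxz hyz hnxy hnxz hnyz hax hux huy huz
  have hk2 := key y x z y' x' z' (Ne.symm hxy) hyz hxz (fun h => hnxy h.symm) hnyz hnxz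
    hay huy hux huz
  have hk3 := key z x y z' x' y' (Ne.symm hxz) (Ne.symm hyz) hxy (fun h => hnxz h.symm)
    (fun h => hnyz h.symm) hnxy haz huz hux huy
  have hyzx : y' = x' ∧ z' = x' := by
    rcases hk1 with h | h
    · rcases hk3 with h3 | h3
      · exact ⟨h.symm, h3⟩
      · exact ⟨h.symm, h3.trans h.symm⟩
    · rcases hk2 with h2 | h2
      · exact ⟨h2, h.symm⟩
      · exact ⟨h2.trans h.symm, h.symm⟩
  obtain ⟨hy'x, hz'x⟩ := hyzx
  have hyu : G.Adj y x' := hy'x ▸ hay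
  have hzu : G.Adj z x' := hz'x ▸ haz
  -- the two non-neighbors of x'
  obtain ⟨p, q, hpq, hPQ⟩ := Finset.card_eq_two.mp (hcard2 x')
  have hp : p ≠ x' ∧ ¬G.Adj x' p := by
    have h : p ∈ univ.filter (fun v => v ≠ x' ∧ ¬G.Adj x' v) := by rw [hPQ]; simp
    simpa using h
  have hq : q ≠ x' ∧ ¬G.Adj x' q := by
    have h : q ∈ univ.filter (fun v => v ≠ x' ∧ ¬G.Adj x' v) := by rw [hPQ]; simp
    simpa using h
  have hnu : ∀ m, m ≠ x' → ¬G.Adj x' m → m = p ∨ m = q := by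
    intro m h1 h2
    have h : m ∈ univ.filter (fun v => v ≠ x' ∧ ¬G.Adj x' v) := by simp [h1, h2]
    rw [hPQ] at h; simpa using h
  -- every other vertex sends a B-edge to x'
  have hD : ∀ w : V, w ≠ x → w ≠ y → w ≠ z → w ≠ x' → w ≠ p → w ≠ q → s(w, x') ∈ B := by
    intro w w1 w2 w3 w4 w5 w6
    obtain ⟨m, hmx, hmw, h1, h2⟩ := hC2 x w (Ne.symm w1)
    rw [SimpleGraph.deleteEdges_adj] at h1 h2
    push_neg at h1 h2
    have hm3 : m = y ∨ m = z ∨ m = x' := by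
      by_cases hadj : G.Adj x m
      · exact Or.inr (Or.inr (hux m (Finset.mem_coe.mp (h1 hadj))))
      · rcases hN x y z (Ne.symm hxy) (Ne.symm hxz) hyz hnxy hnxz m hmx hadj with h | h
        · exact Or.inl h
        · exact Or.inr (Or.inl h)
    rcases hm3 with hm | hm | hm
    all_goals rw [hm] at h2
    · by_cases hadj : G.Adj w y
      · have hwy' := huy w (by rw [Sym2.eq_swap]; exact Finset.mem_coe.mp (h2 hadj))
        exact absurd (hwy'.trans hy'x) w4
      · rcases hN y x z hxy (Ne.symm hyz) hxz (fun h => hnxy h.symm) hnyz w w2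
          (fun h => hadj h.symm) with h | h
        · exact absurd h w1
        · exact absurd h w3
    · by_cases hadj : G.Adj w z
      · have hwz' := huz w (by rw [Sym2.eq_swap]; exact Finset.mem_coe.mp (h2 hadj))
        exact absurd (hwz'.trans hz'x) w4
      · rcases hN z x y hxz hyz hxy (fun h => hnxz h.symm) (fun h => hnyz h.symm) w w3
          (fun h => hadj h.symm) with h | h
        · exact absurd h w1
        · exact absurd h w2
    · by_cases hadj : G.Adj w x'
      · exact Finset.mem_coe.mp (h2 hadj)
      · rcases hnu w w4 (fun h => hadj h.symm) with h | h
        · exact absurd h w5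
        · exact absurd h w6
  -- counting
  have hx'p : x' ≠ p := Ne.symm hp.1
  have hx'q : x' ≠ q := Ne.symm hq.1
  have hW3 : ({x', p, q} : Finset V).card = 3 := by
    rw [Finset.card_insert_of_notMem (by simp [hx'p, hx'q]),
      Finset.card_insert_of_notMem (by simp [hpq]), Finset.card_singleton]
  have hWcard : ((univ : Finset V) \ {x', p, q}).card = n - 3 := by
    rw [Finset.card_sdiff_of_subset (Finset.subset_univ _), Finset.card_univ, hn, hW3]
  have himgsub : ((univ : Finset V) \ {x', p, q}).image (fun w => s(w, x')) ⊆ B := by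
    intro e he
    obtain ⟨w, hw, rfl⟩ := Finset.mem_image.mp he
    rw [Finset.mem_sdiff] at hw
    simp only [Finset.mem_insert, Finset.mem_singleton, not_or] at hw
    obtain ⟨-, hw4, hw5, hw6⟩ := hw
    by_cases h1 : w = x
    · subst h1; exact hbx
    · by_cases h2 : w = y
      · subst h2; have h := hby; rwa [hy'x] at h
      · by_cases h3 : w = z
        · subst h3; have h := hbz; rwa [hz'x] at h
        · exact hD w h1 h2 h3 hw4 hw5 hw6
  have hinj : Set.InjOn (fun w => s(w, x')) ↑((univ : Finset V) \ ({x', p, q} : Finset V)) := by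
    intro w1 hw1 w2 hw2 h
    have hw1' := Finset.mem_sdiff.mp (Finset.mem_coe.mp hw1)
    simp only [Finset.mem_insert, Finset.mem_singleton, not_or] at hw1'
    rcases Sym2.eq_iff.mp h with ⟨h', -⟩ | ⟨h1', h2'⟩
    · exact h'
    · exact absurd h1' hw1'.2.1
  obtain ⟨ep, hepB, hpep⟩ := hC1 p
  have hepx' : x' ∉ ep := by
    intro hmem
    obtain ⟨b, hb⟩ := Sym2.mem_iff_exists.mp hpep
    rw [hb] at hmem hepB
    rcases Sym2.mem_iff.mp hmem with h | h
    · exact hp.1 h.symm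
    · rw [← h] at hepB
      exact hp.2 ((G.mem_edgeSet.mp (hBsub (Finset.mem_coe.mpr hepB))).symm)
  have hepimg : ep ∉ ((univ : Finset V) \ {x', p, q}).image (fun w => s(w, x')) := by
    intro h
    obtain ⟨w, -, hw⟩ := Finset.mem_image.mp h
    rw [← hw] at hepx'
    exact hepx' (by simp)
  have hins : insert ep (((univ : Finset V) \ {x', p, q}).image (fun w => s(w, x'))) ⊆ B := by
    rw [Finset.insert_subset_iff]; exact ⟨hepB, himgsub⟩
  have hcard1 : n - 2 ≤ B.card := by
    have hle := Finset.card_le_card hins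
    rw [Finset.card_insert_of_notMem hepimg, Finset.card_image_of_injOn hinj, hWcard] at hle
    omega
  refine ⟨hcard1, ?_⟩
  rintro ⟨t, ⟨φ⟩⟩
  have hfst : ∀ a b : V, ¬G.Adj a b → (φ a).1 = (φ b).1 := by
    intro a b hnadj
    by_contra h
    exact hnadj ((Iso.map_adj_iff φ).mp (by simpa [completeMultipartiteGraph] using h))
  have hnpq : ¬G.Adj p q := by
    intro hadj
    have h1 := hfst x' p hp.2
    have h2 := hfst x' q hq.2
    have h3 := (Iso.map_adj_iff φ).mpr hadj
    simp only [completeMultipartiteGraph, comap_adj, top_adj] at h3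
    exact h3 (h1.symm.trans h2)
  obtain ⟨eq2, heqB, hqeq⟩ := hC1 q
  have heqx' : x' ∉ eq2 := by
    intro hmem
    obtain ⟨b, hb⟩ := Sym2.mem_iff_exists.mp hqeq
    rw [hb] at hmem heqB
    rcases Sym2.mem_iff.mp hmem with h | h
    · exact hq.1 h.symm
    · rw [← h] at heqB
      exact hq.2 ((G.mem_edgeSet.mp (hBsub (Finset.mem_coe.mpr heqB))).symm)
  have hepeq : ep ≠ eq2 := by
    intro h
    rw [← h] at hqeq
    obtain ⟨b, hb⟩ := Sym2.mem_iff_exists.mp hpep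
    rw [hb] at hqeq hepB
    rcases Sym2.mem_iff.mp hqeq with h' | h'
    · exact hpq h'.symm
    · rw [← h'] at hepB
      exact hnpq (G.mem_edgeSet.mp (hBsub (Finset.mem_coe.mpr hepB)))
  have heqimg : eq2 ∉ ((univ : Finset V) \ {x', p, q}).image (fun w => s(w, x')) := by
    intro h
    obtain ⟨w, -, hw⟩ := Finset.mem_image.mp h
    rw [← hw] at heqx'
    exact heqx' (by simp)
  have hins2 : insert eq2 (insert ep (((univ : Finset V) \ {x', p, q}).image
      (fun w => s(w, x')))) ⊆ B := by
    rw [Finset.insert_subset_iff]; exact ⟨heqB, hins⟩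
  have hle := Finset.card_le_card hins2
  rw [Finset.card_insert_of_notMem (by simp [heqimg, Ne.symm hepeq]),
    Finset.card_insert_of_notMem hepimg, Finset.card_image_of_injOn hinj, hWcard] at hle
  omega
end

section
/- Let G be an (n−3)-regular simple graph of order n ≥ 5, let B ⊆ E(G) be a Roman bondage set of G, let x be a vertex, and let y and z be the only two vertices not adjacent to x in G. Suppose the only edge of B incident with x is xw for some vertex w. Then the subgraph of G − B induced by {y, z, w} has at most one edge; equivalently, B contains at least one edge of G[{y,z,w}] if G[{y,z,w}] has two edges, and at least two edges of G[{y,z,w}] if G[{y,z,w}] has three edges. -/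
open SimpleGraph

lemma roman_lower_aux {V : Type*} [Fintype V] (G : SimpleGraph V) [DecidableRel G.Adj]
    (n : ℕ) (hn : Fintype.card V = n) (h5 : 5 ≤ n)
    (hreg : G.IsRegularOfDegree (n - 3)) :
    4 ≤ romanDominationNumber G := by
  classical
  apply le_csInf
  · refine ⟨n, fun _ => 1, fun v => one_le_two, fun v hv => by simp at hv, by simp [hn]⟩
  · rintro m ⟨f, hf2, hdom, rfl⟩
    by_contra h
    push_neg at h
    have hsum : ∑ v, f v ≤ 3 := by omega
    set N : Finset V := Finset.univ.filter (fun v => f v ≠ 0) with hN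
    have hsumN : ∑ v ∈ N, f v = ∑ v, f v := by
      apply Finset.sum_subset (Finset.subset_univ N)
      intro v _ hv
      simp only [hN, Finset.mem_filter, Finset.mem_univ, true_and, not_not] at hv
      exact hv
    -- there is a vertex with value zero
    have hNcard1 : N.card ≤ ∑ v ∈ N, f v := by
      have := Finset.sum_le_sum (f := fun _ => 1) (g := f) (s := N)
        (fun i hi => Nat.one_le_iff_ne_zero.mpr
          (by simpa [hN] using (Finset.mem_filter.mp hi).2))
      simpa using this
    have hcompl : (Nᶜ : Finset V).Nonempty := by
      rw [← Finset.card_pos, Finset.card_compl, hn]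
      omega
    obtain ⟨v0, hv0⟩ := hcompl
    have hv0z : f v0 = 0 := by
      have := Finset.mem_compl.mp hv0
      simp only [hN, Finset.mem_filter, Finset.mem_univ, true_and, not_not] at this
      exact this
    obtain ⟨u, hadj, hu2⟩ := hdom v0 hv0z
    -- uniqueness of the vertex with value 2
    have huniq : ∀ v, f v = 2 → v = u := by
      intro v hv
      by_contra hne
      have hpair : ∑ t ∈ ({v, u} : Finset V), f t ≤ ∑ t, f t :=
        Finset.sum_le_sum_of_subset (Finset.subset_univ _)
      rw [Finset.sum_pair hne, hv, hu2] at hpair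
      omega
    have huN : u ∈ N := by
      simp [hN, hu2]
    -- card N ≤ 2
    have hNcard : N.card ≤ 2 := by
      have hsplit : ∑ v ∈ N, f v = f u + ∑ v ∈ N.erase u, f v :=
        (Finset.add_sum_erase N f huN).symm
      have herase : (N.erase u).card ≤ ∑ v ∈ N.erase u, f v := by
        have := Finset.sum_le_sum (f := fun _ => 1) (g := f) (s := N.erase u)
          (fun i hi => Nat.one_le_iff_ne_zero.mpr
            (by simpa [hN] using (Finset.mem_filter.mp (Finset.mem_of_mem_erase hi)).2))
        simpa using this
      have hec : (N.erase u).card = N.card - 1 := Finset.card_erase_of_mem huN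
      have hNpos : 1 ≤ N.card := Finset.card_pos.mpr ⟨u, huN⟩
      omega
    -- all zero vertices are neighbors of u
    have hsubset : (Nᶜ : Finset V) ⊆ G.neighborFinset u := by
      intro v hv
      have hvz : f v = 0 := by
        have := Finset.mem_compl.mp hv
        simp only [hN, Finset.mem_filter, Finset.mem_univ, true_and, not_not] at this
        exact this
      obtain ⟨u', hadj', hu'2⟩ := hdom v hvz
      rw [huniq u' hu'2] at hadj'
      exact (G.mem_neighborFinset u v).mpr hadj'.symm
    have hcard := Finset.card_le_card hsubset
    rw [Finset.card_compl, hn, G.card_neighborFinset_eq_degree, hreg u] at hcard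
    omega

lemma roman_upper_aux {V : Type*} [Fintype V] [DecidableEq V] (G' : SimpleGraph V)
    (x a : V) (hxa : x ≠ a)
    (hdom : ∀ v, v ≠ x → v ≠ a → ∃ u, G'.Adj v u ∧ (u = x ∨ u = a)) :
    romanDominationNumber G' ≤ 4 := by
  apply Nat.sInf_le
  refine ⟨fun v => if v = x ∨ v = a then 2 else 0, ?_, ?_, ?_⟩
  · intro v; dsimp only; split <;> omega
  · intro v hv
    have hvx : v ≠ x ∧ v ≠ a := by
      by_contra hc
      push_neg at hc
      simp only [ite_eq_right_iff] at hv
      rcases Classical.em (v = x) with h | h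
      · simp [h] at hv
      · simp [h] at hc; simp [hc] at hv
    obtain ⟨u, hadj, hu⟩ := hdom v hvx.1 hvx.2
    exact ⟨u, hadj, by rcases hu with h | h <;> simp [h]⟩
  · have : ∀ v : V, (if v = x ∨ v = a then 2 else 0) =
        (if v = x then 2 else 0) + (if v = a then 2 else 0) := by
      intro v
      by_cases h1 : v = x
      · subst h1; simp [hxa]
      · by_cases h2 : v = a <;> simp [h1, h2, Ne.symm hxa]
    rw [Finset.sum_congr rfl (fun v _ => this v), Finset.sum_add_distrib,
      Finset.sum_ite_eq' Finset.univ x (fun _ => 2),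
      Finset.sum_ite_eq' Finset.univ a (fun _ => 2)]
    simp

/-- Lemma 2.8: in an `(n-3)`-regular graph of order `n ≥ 5`, with `B` a Roman bondage
set, `y, z` the only two non-neighbors of `x`, and `xw` the only edge of `B` at `x`,
the subgraph of `G - B` induced by `{y, z, w}` has at most one edge. -/
theorem roman_bondage_lemma_2_8
    {V : Type*} [Fintype V] [DecidableEq V] (G : SimpleGraph V) [DecidableRel G.Adj]
    (n : ℕ) (hn : Fintype.card V = n) (h5 : 5 ≤ n)
    (hreg : G.IsRegularOfDegree (n - 3))
    (B : Finset (Sym2 V)) (hBsub : ↑B ⊆ G.edgeSet)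
    (hB : romanDominationNumber G < romanDominationNumber (G.deleteEdges ↑B))
    (x y z w : V)
    (hyz : y ≠ z) (hxy : x ≠ y) (hxz : x ≠ z)
    (hnxy : ¬ G.Adj x y) (hnxz : ¬ G.Adj x z)
    (honly : ∀ v : V, v ≠ x → ¬ G.Adj x v → v = y ∨ v = z)
    (hxwB : s(x, w) ∈ B)
    (hxwonly : ∀ e ∈ B, x ∈ e → e = s(x, w)) :
    ¬ ((G.deleteEdges ↑B).Adj y z ∧ (G.deleteEdges ↑B).Adj y w) ∧
    ¬ ((G.deleteEdges ↑B).Adj y z ∧ (G.deleteEdges ↑B).Adj z w) ∧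
    ¬ ((G.deleteEdges ↑B).Adj y w ∧ (G.deleteEdges ↑B).Adj z w) := by
  have hxwE : G.Adj x w := by
    have := hBsub hxwB
    rwa [SimpleGraph.mem_edgeSet] at this
  have hxw : x ≠ w := hxwE.ne
  have hwy : w ≠ y := fun h => hnxy (h ▸ hxwE)
  have hwz : w ≠ z := fun h => hnxz (h ▸ hxwE)
  have hlow : 4 ≤ romanDominationNumber G := roman_lower_aux G n hn h5 hreg
  -- any vertex outside {x, y, z, w} is adjacent to x in G - B
  have hadjx : ∀ v : V, v ≠ x → v ≠ y → v ≠ z → v ≠ w → (G.deleteEdges ↑B).Adj v x := by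
    intro v hvx hvy hvz hvw
    have hGadj : G.Adj x v := by
      by_contra hc
      rcases honly v hvx hc with h | h
      · exact hvy h
      · exact hvz h
    rw [SimpleGraph.deleteEdges_adj]
    refine ⟨hGadj.symm, fun hmem => ?_⟩
    have := hxwonly s(v, x) hmem (by simp)
    rw [Sym2.eq_iff] at this
    rcases this with ⟨h1, _⟩ | ⟨h1, _⟩
    · exact hvx h1
    · exact hvw h1
  have contra : ∀ a : V, x ≠ a →
      (∀ v, v ≠ x → v ≠ a → ∃ u, (G.deleteEdges ↑B).Adj v u ∧ (u = x ∨ u = a)) → False := by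
    intro a hxa hdom
    have := roman_upper_aux (G.deleteEdges ↑B) x a hxa hdom
    omega
  refine ⟨?_, ?_, ?_⟩
  · rintro ⟨h1, h2⟩
    apply contra y hxy
    intro v hvx hvy
    by_cases hvz : v = z
    · exact ⟨y, by subst hvz; exact h1.symm, Or.inr rfl⟩
    by_cases hvw : v = w
    · exact ⟨y, by subst hvw; exact h2.symm, Or.inr rfl⟩
    exact ⟨x, hadjx v hvx hvy hvz hvw, Or.inl rfl⟩
  · rintro ⟨h1, h2⟩
    apply contra z hxz
    intro v hvx hvz
    by_cases hvy : v = y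
    · exact ⟨z, by subst hvy; exact h1, Or.inr rfl⟩
    by_cases hvw : v = w
    · exact ⟨z, by subst hvw; exact h2.symm, Or.inr rfl⟩
    exact ⟨x, hadjx v hvx hvy hvz hvw, Or.inl rfl⟩
  · rintro ⟨h1, h2⟩
    apply contra w hxw
    intro v hvx hvw
    by_cases hvy : v = y
    · exact ⟨w, by subst hvy; exact h1, Or.inr rfl⟩
    by_cases hvz : v = z
    · exact ⟨w, by subst hvz; exact h2, Or.inr rfl⟩
    exact ⟨x, hadjx v hvx hvy hvz hvw, Or.inl rfl⟩
end

section
/- Let G be an (n−3)-regular simple graph of order n ≥ 7 with G not isomorphic to a complete multipartite graph K_{3,3,...,3} all of whose parts have size 3, and let B ⊆ E(G) be a Roman bondage set of G. Let x and w be adjacent vertices of G, let y, z be the only two vertices not adjacent to x in G, and let p, q be the only two vertices not adjacent to w in G. If the only edge of B incident with x is xw, and {y,z} ∩ {p,q} ≠ ∅, then |B| ≥ n − 2. -/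
open SimpleGraph

section RomanHelpers

open Finset

variable {V : Type*} [Fintype V] [DecidableEq V]
variable {V : Type*} [Fintype V] [DecidableEq V]

lemma sym2_two (e : Sym2 V) (h : ¬ e.IsDiag) :
    (Finset.univ.filter (fun v => v ∈ e)).card = 2 := by
  induction e using Sym2.ind with
  | _ a b =>
    have hab : a ≠ b := by simpa using h
    have he : (Finset.univ.filter (fun v => v ∈ s(a,b))) = {a, b} := by
      ext u; simp [Sym2.mem_iff]
    rw [he, Finset.card_pair hab]

lemma hand (B : Finset (Sym2 V)) (hB : ∀ e ∈ B, ¬ e.IsDiag) :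
    ∑ v, (B.filter (fun e => v ∈ e)).card = 2 * B.card := by
  calc ∑ v, (B.filter (fun e => v ∈ e)).card
      = ∑ v, ∑ e ∈ B, if v ∈ e then 1 else 0 := by
        refine Finset.sum_congr rfl fun v _ => Finset.card_filter _ _
    _ = ∑ e ∈ B, ∑ v : V, if v ∈ e then 1 else 0 := Finset.sum_comm
    _ = ∑ e ∈ B, 2 := by
        refine Finset.sum_congr rfl fun e he => ?_
        rw [← Finset.card_filter]; exact sym2_two e (hB e he)
    _ = 2 * B.card := by rw [Finset.sum_const, smul_eq_mul, mul_comm]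

lemma nonadj_card (G : SimpleGraph V) [DecidableRel G.Adj] (n : ℕ) (hn : Fintype.card V = n)
    (h7 : 7 ≤ n) (hreg : G.IsRegularOfDegree (n-3)) (a : V) :
    (Finset.univ.filter (fun u => u ≠ a ∧ ¬ G.Adj a u)).card = 2 := by
  have hset : Finset.univ.filter (fun u => u ≠ a ∧ ¬ G.Adj a u)
      = (Finset.univ.erase a) \ G.neighborFinset a := by
    ext u
    simp only [Finset.mem_filter, Finset.mem_univ, true_and, Finset.mem_sdiff,
      Finset.mem_erase, SimpleGraph.mem_neighborFinset, and_true]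
  have hsub : G.neighborFinset a ⊆ Finset.univ.erase a := by
    intro u hu
    rw [SimpleGraph.mem_neighborFinset] at hu
    exact Finset.mem_erase.mpr ⟨hu.ne', Finset.mem_univ u⟩
  rw [hset, Finset.card_sdiff_of_subset hsub, Finset.card_erase_of_mem (Finset.mem_univ a),
    Finset.card_univ, hn]
  have := hreg a
  rw [SimpleGraph.degree] at this
  rw [this]
  omega

lemma sum_two_ind (a b : V) (hab : a ≠ b) :
    ∑ v : V, (if v = a ∨ v = b then (2:ℕ) else 0) = 4 := by
  have key : ∀ v : V, (if v = a ∨ v = b then (2:ℕ) else 0)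
      = (if v = a then 2 else 0) + (if v = b then 2 else 0) := by
    intro v
    by_cases h1 : v = a <;> by_cases h2 : v = b <;> simp_all
  rw [Finset.sum_congr rfl fun v _ => key v, Finset.sum_add_distrib]
  simp [Finset.sum_ite_eq']

lemma sum_deg_ind (a : V) (s : Finset V) (ha : a ∉ s) :
    ∑ v : V, (if v = a then (2:ℕ) else if v ∈ s then 1 else 0) = 2 + s.card := by
  have key : ∀ v : V, (if v = a then (2:ℕ) else if v ∈ s then 1 else 0)
      = (if v = a then 2 else 0) + (if v ∈ s then 1 else 0) := by
    intro v
    by_cases h1 : v = a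
    · subst h1; simp [ha]
    · simp [h1]
  rw [Finset.sum_congr rfl fun v _ => key v, Finset.sum_add_distrib]
  have h2 : ∑ v : V, (if v ∈ s then (1:ℕ) else 0) = s.card := by
    rw [← Finset.card_filter]
    congr 1
    simp [Finset.filter_mem_eq_inter]
  rw [h2]
  simp [Finset.sum_ite_eq']


lemma five_le (G : SimpleGraph V) [DecidableRel G.Adj] (n : ℕ) (hn : Fintype.card V = n)
    (h7 : 7 ≤ n) (hreg : G.IsRegularOfDegree (n-3)) (B : Finset (Sym2 V))
    (hB : romanDominationNumber G < romanDominationNumber (G.deleteEdges ↑B))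
    (f : V → ℕ) (hf2 : ∀ v, f v ≤ 2)
    (hfd : ∀ v, f v = 0 → ∃ u, (G.deleteEdges ↑B).Adj v u ∧ f u = 2) :
    5 ≤ ∑ v, f v := by
  have h4 : 4 ≤ romanDominationNumber G := by
    apply le_csInf
    · exact ⟨∑ v : V, (1:ℕ), fun _ => 1, fun v => one_le_two, fun v h => absurd h one_ne_zero, rfl⟩
    · rintro m ⟨g, hg2, hgd, rfl⟩
      by_contra hlt
      push_neg at hlt
      have hlt3 : ∑ v, g v ≤ 3 := by omega
      have ha : ∃ a, g a = 2 := by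
        by_contra hno
        push_neg at hno
        have hz : ∃ v, g v = 0 := by
          by_contra hz
          push_neg at hz
          have hle : Finset.univ.card • 1 ≤ ∑ v, g v :=
            Finset.card_nsmul_le_sum Finset.univ g 1 (fun v _ => by have := hz v; omega)
          rw [Finset.card_univ, hn, smul_eq_mul, mul_one] at hle
          omega
        obtain ⟨v, hv⟩ := hz
        obtain ⟨u, _, hu2⟩ := hgd v hv
        exact hno u hu2
      obtain ⟨a, ha⟩ := ha
      obtain ⟨b, c, hbc, hset⟩ := Finset.card_eq_two.mp (nonadj_card G n hn h7 hreg a)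
      have hb : b ≠ a ∧ ¬ G.Adj a b := by
        have : b ∈ Finset.univ.filter (fun u => u ≠ a ∧ ¬ G.Adj a u) := by rw [hset]; simp
        simpa using this
      have hc : c ≠ a ∧ ¬ G.Adj a c := by
        have : c ∈ Finset.univ.filter (fun u => u ≠ a ∧ ¬ G.Adj a u) := by rw [hset]; simp
        simpa using this
      have hsum3 : g a + (g b + g c) ≤ 3 := by
        have hsub : ({a, b, c} : Finset V) ⊆ Finset.univ := Finset.subset_univ _
        have hle := Finset.sum_le_sum_of_subset hsub (f := g)
        rw [Finset.sum_insert (by simp [Ne.symm hb.1, Ne.symm hc.1]),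
          Finset.sum_insert (by simp [hbc]), Finset.sum_singleton] at hle
        omega
      have h0 : g b = 0 ∨ g c = 0 := by omega
      have final : ∀ d : V, d ≠ a → ¬ G.Adj a d → g d = 0 → False := by
        intro d hda hnad hd0
        obtain ⟨u, hadj, hu2⟩ := hgd d hd0
        have hua : u ≠ a := by
          rintro rfl
          exact hnad hadj.symm
        have : g a + g u ≤ 3 := by
          have hsub : ({a, u} : Finset V) ⊆ Finset.univ := Finset.subset_univ _
          have hle := Finset.sum_le_sum_of_subset hsub (f := g)
          rw [Finset.sum_insert (by simp [Ne.symm hua]), Finset.sum_singleton] at hle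
          omega
        omega
      rcases h0 with h0 | h0
      · exact final b hb.1 hb.2 h0
      · exact final c hc.1 hc.2 h0
  have h5 : romanDominationNumber (G.deleteEdges ↑B) ≤ ∑ v, f v :=
    Nat.sInf_le ⟨f, hf2, hfd, rfl⟩
  omega


theorem key (G : SimpleGraph V) [DecidableRel G.Adj]
    (n : ℕ) (hn : Fintype.card V = n) (h7 : 7 ≤ n)
    (hreg : G.IsRegularOfDegree (n - 3))
    (B : Finset (Sym2 V)) (hBsub : ↑B ⊆ G.edgeSet)
    (hB5 : ∀ f : V → ℕ, (∀ v, f v ≤ 2) →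
      (∀ v, f v = 0 → ∃ u, (G.deleteEdges ↑B).Adj v u ∧ f u = 2) → 5 ≤ ∑ v, f v)
    (x w y z q : V) (hxw : G.Adj x w)
    (hyz : y ≠ z) (hxy : x ≠ y) (hxz : x ≠ z)
    (hnxy : ¬ G.Adj x y) (hnxz : ¬ G.Adj x z)
    (honlyx : ∀ v : V, v ≠ x → ¬ G.Adj x v → v = y ∨ v = z)
    (hwy : w ≠ y) (hwq : w ≠ q) (hyq : y ≠ q)
    (hnwy : ¬ G.Adj w y) (hnwq : ¬ G.Adj w q)
    (honlyw : ∀ v : V, v ≠ w → ¬ G.Adj w v → v = y ∨ v = q)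
    (hxwB : s(x, w) ∈ B)
    (hxwonly : ∀ e ∈ B, x ∈ e → e = s(x, w)) :
    n - 2 ≤ B.card := by
  by_contra hcon
  push_neg at hcon
  -- basic adjacency conversions
  have hBadj : ∀ {v u : V}, s(v,u) ∈ B → G.Adj v u := by
    intro v u h
    exact (SimpleGraph.mem_edgeSet G).mp (hBsub h)
  have adjH : ∀ v u : V, (G.deleteEdges (↑B : Set (Sym2 V))).Adj v u ↔
      (G.Adj v u ∧ s(v,u) ∉ B) := by
    intro v u
    rw [SimpleGraph.deleteEdges_adj]
    simp
  -- the complement-neighborhood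
  set nF : V → Finset V := fun v => Finset.univ.filter
    (fun u => u ≠ v ∧ (¬ G.Adj v u ∨ s(v,u) ∈ B)) with hnF
  have memnF : ∀ v u : V, u ∈ nF v ↔ (u ≠ v ∧ (¬ G.Adj v u ∨ s(v,u) ∈ B)) := by
    intro v u; simp [hnF]
  have nF_symm : ∀ {v u : V}, u ∈ nF v → v ∈ nF u := by
    intro v u h
    rw [memnF] at h ⊢
    obtain ⟨h1, h2⟩ := h
    refine ⟨h1.symm, ?_⟩
    rcases h2 with h2 | h2
    · exact Or.inl (fun h' => h2 h'.symm)
    · exact Or.inr (by rwa [Sym2.eq_swap])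
  have ne_of_nF : ∀ {v u : V}, u ∈ nF v → u ≠ v := by
    intro v u h; exact ((memnF v u).mp h).1
  -- pair condition
  have pair : ∀ a b : V, a ≠ b → ∃ v, v ≠ a ∧ v ≠ b ∧ v ∈ nF a ∧ v ∈ nF b := by
    intro a b hab
    by_contra hno
    push_neg at hno
    have h5 := hB5 (fun v => if v = a ∨ v = b then 2 else 0) ?_ ?_
    · rw [sum_two_ind a b hab] at h5; omega
    · intro v; split <;> omega
    · intro v hv0
      have hva : v ≠ a := by rintro rfl; simp at hv0
      have hvb : v ≠ b := by rintro rfl; simp at hv0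
      by_cases hin : v ∈ nF a
      · have hnb := hno v hva hvb hin
        have h2 : G.Adj b v ∧ s(b,v) ∉ B := by
          rw [memnF] at hnb
          push_neg at hnb
          exact hnb hvb
        refine ⟨b, (adjH v b).mpr ⟨h2.1.symm, ?_⟩, by simp⟩
        rw [Sym2.eq_swap]; exact h2.2
      · have h2 : G.Adj a v ∧ s(a,v) ∉ B := by
          rw [memnF] at hin
          push_neg at hin
          exact hin hva
        refine ⟨a, (adjH v a).mpr ⟨h2.1.symm, ?_⟩, by simp⟩
        rw [Sym2.eq_swap]; exact h2.2
  -- degree condition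
  have deg3 : ∀ a : V, 3 ≤ (nF a).card := by
    intro a
    by_contra hlt
    push_neg at hlt
    have hanF : a ∉ nF a := by rw [memnF]; simp
    have h5 := hB5 (fun v => if v = a then 2 else if v ∈ nF a then 1 else 0) ?_ ?_
    · rw [sum_deg_ind a (nF a) hanF] at h5; omega
    · intro v; split
      · omega
      · split <;> omega
    · intro v hv0
      have hva : v ≠ a := by rintro rfl; simp at hv0
      have hvin : v ∉ nF a := by
        intro h; rw [if_neg hva, if_pos h] at hv0; omega
      have h2 : G.Adj a v ∧ s(a,v) ∉ B := by
        rw [memnF] at hvin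
        push_neg at hvin
        exact hvin hva
      refine ⟨a, (adjH v a).mpr ⟨h2.1.symm, ?_⟩, by simp⟩
      rw [Sym2.eq_swap]; exact h2.2
  -- non-neighborhoods in G
  set Ng : V → Finset V := fun v => Finset.univ.filter (fun u => u ≠ v ∧ ¬ G.Adj v u) with hNgdef
  have memNg : ∀ v u : V, u ∈ Ng v ↔ (u ≠ v ∧ ¬ G.Adj v u) := by
    intro v u; simp [hNgdef]
  have Ng_symm : ∀ {v u : V}, u ∈ Ng v → v ∈ Ng u := by
    intro v u h
    rw [memNg] at h ⊢
    exact ⟨h.1.symm, fun h' => h.2 h'.symm⟩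
  have Ngcard : ∀ v, (Ng v).card = 2 := fun v => nonadj_card G n hn h7 hreg v
  have Ng_sub_nF : ∀ v, Ng v ⊆ nF v := by
    intro v u hu
    rw [memNg] at hu
    rw [memnF]
    exact ⟨hu.1, Or.inl hu.2⟩
  -- cardinality of nF
  have nF_card_eq : ∀ v, (nF v).card = 2 + (B.filter (fun e => v ∈ e)).card := by
    intro v
    have hu : nF v = Ng v ∪ Finset.univ.filter (fun u => s(v,u) ∈ B) := by
      ext u
      simp only [memnF, memNg, Finset.mem_union, Finset.mem_filter, Finset.mem_univ, true_and]
      constructor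
      · rintro ⟨h1, h2 | h2⟩
        · exact Or.inl ⟨h1, h2⟩
        · exact Or.inr h2
      · rintro (⟨h1, h2⟩ | h2)
        · exact ⟨h1, Or.inl h2⟩
        · exact ⟨(hBadj h2).ne', Or.inr h2⟩
    have hdisj : Disjoint (Ng v) (Finset.univ.filter (fun u => s(v,u) ∈ B)) := by
      rw [Finset.disjoint_left]
      intro u hu1 hu2
      rw [memNg] at hu1
      rw [Finset.mem_filter] at hu2
      exact hu1.2 (hBadj hu2.2)
    have hbij : (Finset.univ.filter (fun u => s(v,u) ∈ B)).card
        = (B.filter (fun e => v ∈ e)).card := by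
      apply Finset.card_bij (fun u _ => s(v,u))
      · intro u hu
        rw [Finset.mem_filter] at hu ⊢
        exact ⟨hu.2, Sym2.mem_mk_left v u⟩
      · intro u1 h1 u2 h2 he
        exact Sym2.congr_right.mp he
      · intro e he
        rw [Finset.mem_filter] at he
        obtain ⟨u, hu⟩ : ∃ u, e = s(v,u) := ⟨Sym2.Mem.other he.2, (Sym2.other_spec he.2).symm⟩
        refine ⟨u, ?_, hu.symm⟩
        rw [Finset.mem_filter]
        exact ⟨Finset.mem_univ u, hu ▸ he.1⟩
    rw [hu, Finset.card_union_of_disjoint hdisj, Ngcard, hbij]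
  have globalsum : ∑ v, (nF v).card = 2 * n + 2 * B.card := by
    calc ∑ v, (nF v).card = ∑ v : V, (2 + (B.filter (fun e => v ∈ e)).card) :=
          Finset.sum_congr rfl fun v _ => nF_card_eq v
      _ = 2 * n + ∑ v, (B.filter (fun e => v ∈ e)).card := by
          rw [Finset.sum_add_distrib, Finset.sum_const, Finset.card_univ, hn, smul_eq_mul]
          ring
      _ = 2 * n + 2 * B.card := by
          rw [hand B (fun e he => G.not_isDiag_of_mem_edgeSet (hBsub he))]

  -- distinctness
  have hzw : z ≠ w := by rintro rfl; exact hnxz hxw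
  have hxw' : x ≠ w := G.ne_of_adj hxw
  have hyw : y ≠ w := hwy.symm
  have hqx : q ≠ x := by rintro rfl; exact hnwq hxw.symm
  -- the partition
  set S : Finset V := {y, z, w} with hS
  set T : Finset V := insert x S with hT
  set O : Finset V := Finset.univ \ T with hO
  have hyS : y ∈ S := by rw [hS]; simp
  have hzS : z ∈ S := by rw [hS]; simp
  have hwS : w ∈ S := by rw [hS]; simp
  have hxT : x ∈ T := by rw [hT]; simp
  have hyT : y ∈ T := by rw [hT, hS]; simp
  have hzT : z ∈ T := by rw [hT, hS]; simp
  have hwT : w ∈ T := by rw [hT, hS]; simp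
  have hScard : S.card = 3 := by
    rw [hS, Finset.card_insert_of_notMem (by simp [hyz, hyw]), Finset.card_pair hzw]
  have hxS : x ∉ S := by rw [hS]; simp [hxy, hxz, hxw']
  have hTcard : T.card = 4 := by
    rw [hT, Finset.card_insert_of_notMem hxS, hScard]
  have hOcard : O.card = n - 4 := by
    rw [hO, Finset.card_sdiff_of_subset (Finset.subset_univ T), Finset.card_univ, hn, hTcard]
  have hOT : ∀ b ∈ O, b ∉ T := by
    intro b hb
    rw [hO, Finset.mem_sdiff] at hb
    exact hb.2
  have hmemO : ∀ b : V, b ∉ T → b ∈ O := by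
    intro b hb
    rw [hO, Finset.mem_sdiff]
    exact ⟨Finset.mem_univ b, hb⟩
  have hO_ne : ∀ b ∈ O, b ≠ x ∧ b ≠ y ∧ b ≠ z ∧ b ≠ w := by
    intro b hb
    have hh := hOT b hb
    rw [hT, hS] at hh
    simp only [Finset.mem_insert, Finset.mem_singleton, not_or] at hh
    exact hh
  -- nF x = S
  have hnFx : nF x = S := by
    ext u
    rw [memnF, hS]
    simp only [Finset.mem_insert, Finset.mem_singleton]
    constructor
    · rintro ⟨h1, h2 | h2⟩
      · rcases honlyx u h1 h2 with h | h
        · exact Or.inl h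
        · exact Or.inr (Or.inl h)
      · have he := hxwonly _ h2 (Sym2.mem_mk_left x u)
        exact Or.inr (Or.inr (Sym2.congr_right.mp he))
    · rintro (rfl | rfl | rfl)
      · exact ⟨hxy.symm, Or.inl hnxy⟩
      · exact ⟨hxz.symm, Or.inl hnxz⟩
      · exact ⟨hxw'.symm, Or.inr hxwB⟩
  have hnFxcard : (nF x).card = 3 := by rw [hnFx, hScard]
  -- Ng characterizations
  have hNgx : Ng x = {y, z} := by
    ext u
    rw [memNg]
    simp only [Finset.mem_insert, Finset.mem_singleton]
    constructor
    · rintro ⟨h1, h2⟩; exact honlyx u h1 h2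
    · rintro (rfl | rfl)
      · exact ⟨hxy.symm, hnxy⟩
      · exact ⟨hxz.symm, hnxz⟩
  have hNgw : Ng w = {y, q} := by
    ext u
    rw [memNg]
    simp only [Finset.mem_insert, Finset.mem_singleton]
    constructor
    · rintro ⟨h1, h2⟩; exact honlyw u h1 h2
    · rintro (rfl | rfl)
      · exact ⟨hwy.symm, hnwy⟩
      · exact ⟨hwq.symm, hnwq⟩
  have hNgy : Ng y = {x, w} := by
    have hsub : ({x, w} : Finset V) ⊆ Ng y := by
      intro u hu
      simp only [Finset.mem_insert, Finset.mem_singleton] at hu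
      rcases hu with rfl | rfl
      · exact (memNg y u).mpr ⟨hxy, fun h => hnxy h.symm⟩
      · exact (memNg y u).mpr ⟨hwy, fun h => hnwy h.symm⟩
    exact (Finset.eq_of_subset_of_card_le hsub (by rw [Ngcard, Finset.card_pair hxw'])).symm
  -- extraction of the second non-neighbor
  have ngpair : ∀ (v a : V), a ∈ Ng v → ∃ b, b ≠ a ∧ Ng v = {a, b} := by
    intro v a ha
    obtain ⟨s, t, hst, heq⟩ := Finset.card_eq_two.mp (Ngcard v)
    rw [heq] at ha
    simp only [Finset.mem_insert, Finset.mem_singleton] at ha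
    rcases ha with rfl | rfl
    · exact ⟨t, hst.symm, heq⟩
    · exact ⟨s, hst, by rw [heq, Finset.pair_comm]⟩
  -- decomposition and exchange
  have decomp : ∀ v : V, (nF v).card = (nF v ∩ T).card + (nF v ∩ O).card := by
    intro v
    have h1 : nF v ∩ O = nF v \ T := by
      rw [hO]
      ext u
      simp [Finset.mem_sdiff, Finset.mem_inter]
    rw [h1, Finset.card_inter_add_card_sdiff]
  have exch : (nF y ∩ O).card + (nF z ∩ O).card + (nF w ∩ O).card
      = ∑ b ∈ O, (nF b ∩ S).card := by
    have h1 : ∀ v : V, (nF v ∩ O).card = ∑ b ∈ O, (if v ∈ nF b then 1 else 0) := by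
      intro v
      rw [Finset.inter_comm, ← Finset.filter_mem_eq_inter, Finset.card_filter]
      refine Finset.sum_congr rfl fun b _ => ?_
      exact if_congr ⟨fun h => nF_symm h, fun h => nF_symm h⟩ rfl rfl
    have h2 : ∀ b : V, (nF b ∩ S).card =
        (if y ∈ nF b then 1 else 0) + (if z ∈ nF b then 1 else 0)
          + (if w ∈ nF b then 1 else 0) := by
      intro b
      rw [Finset.inter_comm, ← Finset.filter_mem_eq_inter, Finset.card_filter, hS,
        Finset.sum_insert (by simp [hyz, hyw]), Finset.sum_insert (by simp [hzw]),
        Finset.sum_singleton]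
      ring
    rw [h1 y, h1 z, h1 w, ← Finset.sum_add_distrib, ← Finset.sum_add_distrib]
    exact Finset.sum_congr rfl fun b _ => (h2 b).symm
  -- lower bounds
  have m_ge_1 : ∀ b ∈ O, 1 ≤ (nF b ∩ S).card := by
    intro b hb
    have hbx : x ≠ b := fun h => (hO_ne b hb).1 h.symm
    obtain ⟨v, hva, hvb, hvx, hvnb⟩ := pair x b hbx
    refine Finset.card_pos.mpr ⟨v, Finset.mem_inter.mpr ⟨hvnb, ?_⟩⟩
    rw [← hnFx]; exact hvx
  have x_not_nFO : ∀ b ∈ O, x ∉ nF b := by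
    intro b hb h
    have := nF_symm h
    rw [hnFx] at this
    exact hOT b hb (by rw [hT]; exact Finset.mem_insert_of_mem this)
  -- membership facts
  have hx_nFy : x ∈ nF y := nF_symm (by rw [hnFx]; exact hyS)
  have hx_nFz : x ∈ nF z := nF_symm (by rw [hnFx]; exact hzS)
  have hx_nFw : x ∈ nF w := nF_symm (by rw [hnFx]; exact hwS)
  have hw_nFy : w ∈ nF y := Ng_sub_nF y (by rw [hNgy]; simp)
  have hy_nFw : y ∈ nF w := nF_symm hw_nFy
  have hzInt : y ∈ nF z ∨ w ∈ nF z := by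
    obtain ⟨v, hvx, hvz, hv1, hv2⟩ := pair x z hxz
    rw [hnFx, hS] at hv1
    simp only [Finset.mem_insert, Finset.mem_singleton] at hv1
    rcases hv1 with rfl | rfl | rfl
    · exact Or.inl hv2
    · exact absurd rfl hvz
    · exact Or.inr hv2
  have hxwsub : ∀ v : V, x ∈ nF v → w ∈ nF v → 2 ≤ (nF v ∩ T).card := by
    intro v h1 h2
    have hsub : ({x, w} : Finset V) ⊆ nF v ∩ T := by
      intro u hu
      simp only [Finset.mem_insert, Finset.mem_singleton] at hu
      rcases hu with rfl | rfl
      · exact Finset.mem_inter.mpr ⟨h1, hxT⟩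
      · exact Finset.mem_inter.mpr ⟨h2, hwT⟩
    calc 2 = ({x, w} : Finset V).card := (Finset.card_pair hxw').symm
      _ ≤ _ := Finset.card_le_card hsub
  have hcsum7 : 7 ≤ (nF y ∩ T).card + (nF z ∩ T).card + (nF w ∩ T).card := by
    rcases hzInt with h | h
    · -- y-z edge : {x,w,z} ⊆ nF y ∩ T, {x,y} ⊆ nF z ∩ T, {x,y} ⊆ nF w ∩ T
      have hz_nFy : z ∈ nF y := nF_symm h
      have h1 : 3 ≤ (nF y ∩ T).card := by
        have hsub : ({x, w, z} : Finset V) ⊆ nF y ∩ T := by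
          intro u hu
          simp only [Finset.mem_insert, Finset.mem_singleton] at hu
          rcases hu with rfl | rfl | rfl
          · exact Finset.mem_inter.mpr ⟨hx_nFy, hxT⟩
          · exact Finset.mem_inter.mpr ⟨hw_nFy, hwT⟩
          · exact Finset.mem_inter.mpr ⟨hz_nFy, hzT⟩
        calc 3 = ({x, w, z} : Finset V).card := by
              rw [Finset.card_insert_of_notMem (by simp [hxw', hxz]),
                Finset.card_pair (fun hh => hzw hh.symm)]
          _ ≤ _ := Finset.card_le_card hsub
      have h2 : 2 ≤ (nF z ∩ T).card := by
        have hsub : ({x, y} : Finset V) ⊆ nF z ∩ T := by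
          intro u hu
          simp only [Finset.mem_insert, Finset.mem_singleton] at hu
          rcases hu with rfl | rfl
          · exact Finset.mem_inter.mpr ⟨hx_nFz, hxT⟩
          · exact Finset.mem_inter.mpr ⟨h, hyT⟩
        calc 2 = ({x, y} : Finset V).card := (Finset.card_pair hxy).symm
          _ ≤ _ := Finset.card_le_card hsub
      have h3 : 2 ≤ (nF w ∩ T).card := by
        have hsub : ({x, y} : Finset V) ⊆ nF w ∩ T := by
          intro u hu
          simp only [Finset.mem_insert, Finset.mem_singleton] at hu
          rcases hu with rfl | rfl
          · exact Finset.mem_inter.mpr ⟨hx_nFw, hxT⟩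
          · exact Finset.mem_inter.mpr ⟨hy_nFw, hyT⟩
        calc 2 = ({x, y} : Finset V).card := (Finset.card_pair hxy).symm
          _ ≤ _ := Finset.card_le_card hsub
      omega
    · -- z-w edge
      have hz_nFw : z ∈ nF w := nF_symm h
      have h1 := hxwsub y hx_nFy hw_nFy
      have h2 : 2 ≤ (nF z ∩ T).card := by
        have hsub : ({x, w} : Finset V) ⊆ nF z ∩ T := by
          intro u hu
          simp only [Finset.mem_insert, Finset.mem_singleton] at hu
          rcases hu with rfl | rfl
          · exact Finset.mem_inter.mpr ⟨hx_nFz, hxT⟩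
          · exact Finset.mem_inter.mpr ⟨h, hwT⟩
        calc 2 = ({x, w} : Finset V).card := (Finset.card_pair hxw').symm
          _ ≤ _ := Finset.card_le_card hsub
      have h3 : 3 ≤ (nF w ∩ T).card := by
        have hsub : ({x, y, z} : Finset V) ⊆ nF w ∩ T := by
          intro u hu
          simp only [Finset.mem_insert, Finset.mem_singleton] at hu
          rcases hu with rfl | rfl | rfl
          · exact Finset.mem_inter.mpr ⟨hx_nFw, hxT⟩
          · exact Finset.mem_inter.mpr ⟨hy_nFw, hyT⟩
          · exact Finset.mem_inter.mpr ⟨hz_nFw, hzT⟩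
        calc 3 = ({x, y, z} : Finset V).card := by
              rw [Finset.card_insert_of_notMem (by simp [hxy, hxz]),
                Finset.card_pair hyz]
          _ ≤ _ := Finset.card_le_card hsub
      omega

  -- assemble the count and extract tightness
  have hsplit : ∑ v, (nF v).card = ∑ v ∈ T, (nF v).card + ∑ b ∈ O, (nF b).card := by
    have h := Finset.sum_sdiff (f := fun v => (nF v).card) (Finset.subset_univ T)
    rw [hO, ← h]
    exact Nat.add_comm _ _
  have hsumT : ∑ v ∈ T, (nF v).card
      = (nF x).card + ((nF y).card + ((nF z).card + (nF w).card)) := by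
    rw [hT, Finset.sum_insert hxS, hS, Finset.sum_insert (by simp [hyz, hyw]),
      Finset.sum_insert (by simp [hzw]), Finset.sum_singleton]
  have hOsum_m : O.card ≤ ∑ b ∈ O, (nF b ∩ S).card := by
    calc O.card = ∑ _b ∈ O, 1 := by rw [Finset.sum_const, smul_eq_mul, mul_one]
      _ ≤ _ := Finset.sum_le_sum m_ge_1
  have hOsum_d : 3 * O.card ≤ ∑ b ∈ O, (nF b).card := by
    calc 3 * O.card = ∑ _b ∈ O, 3 := by rw [Finset.sum_const, smul_eq_mul, mul_comm]
      _ ≤ _ := Finset.sum_le_sum (fun b _ => deg3 b)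
  have hdcy := decomp y
  have hdcz := decomp z
  have hdcw := decomp w
  have hM : ∑ b ∈ O, (nF b ∩ S).card = O.card := by omega
  have hD : ∑ b ∈ O, (nF b).card = 3 * O.card := by omega
  have hm1 : ∀ b ∈ O, (nF b ∩ S).card = 1 := by
    intro b hb
    by_contra hne
    have hlt : ∑ c ∈ O, 1 < ∑ c ∈ O, (nF c ∩ S).card :=
      Finset.sum_lt_sum m_ge_1 ⟨b, hb, by have := m_ge_1 b hb; omega⟩
    rw [Finset.sum_const, smul_eq_mul, mul_one] at hlt
    omega
  have hdeg3eq : ∀ b ∈ O, (nF b).card = 3 := by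
    intro b hb
    by_contra hne
    have hlt : ∑ c ∈ O, 3 < ∑ c ∈ O, (nF c).card :=
      Finset.sum_lt_sum (fun c _ => deg3 c) ⟨b, hb, by have := deg3 b; omega⟩
    rw [Finset.sum_const, smul_eq_mul] at hlt
    omega
  have hm_single : ∀ b ∈ O, ∀ u ∈ nF b ∩ S, ∀ u' ∈ nF b ∩ S, u = u' :=
    fun b hb => Finset.card_le_one.mp (le_of_eq (hm1 b hb))
  have hcT7 : (nF y ∩ T).card + (nF z ∩ T).card + (nF w ∩ T).card = 7 := by omega

  -- useful: membership in O via T-cases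

  by_cases hqz : q = z
  · -- Case I : q = z
    have hnwz : ¬ G.Adj w z := by rw [← hqz]; exact hnwq
    have hw_nFz : w ∈ nF z := (memnF z w).mpr ⟨hzw.symm, Or.inl (fun h => hnwz h.symm)⟩
    have hz_nFw : z ∈ nF w := nF_symm hw_nFz
    have hynFz : y ∉ nF z := by
      intro hy
      have hz_nFy : z ∈ nF y := nF_symm hy
      have h1 : 3 ≤ (nF y ∩ T).card := by
        have hsub : ({x, w, z} : Finset V) ⊆ nF y ∩ T := by
          intro t ht
          simp only [Finset.mem_insert, Finset.mem_singleton] at ht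
          rcases ht with rfl | rfl | rfl
          · exact Finset.mem_inter.mpr ⟨hx_nFy, hxT⟩
          · exact Finset.mem_inter.mpr ⟨hw_nFy, hwT⟩
          · exact Finset.mem_inter.mpr ⟨hz_nFy, hzT⟩
        calc 3 = ({x, w, z} : Finset V).card := by
              rw [Finset.card_insert_of_notMem (by simp [hxw', hxz]),
                Finset.card_pair (fun h => hzw h.symm)]
          _ ≤ _ := Finset.card_le_card hsub
      have h2 : 3 ≤ (nF z ∩ T).card := by
        have hsub : ({x, w, y} : Finset V) ⊆ nF z ∩ T := by
          intro t ht
          simp only [Finset.mem_insert, Finset.mem_singleton] at ht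
          rcases ht with rfl | rfl | rfl
          · exact Finset.mem_inter.mpr ⟨hx_nFz, hxT⟩
          · exact Finset.mem_inter.mpr ⟨hw_nFz, hwT⟩
          · exact Finset.mem_inter.mpr ⟨hy, hyT⟩
        calc 3 = ({x, w, y} : Finset V).card := by
              rw [Finset.card_insert_of_notMem (by simp [hxw', hxy]),
                Finset.card_pair hwy]
          _ ≤ _ := Finset.card_le_card hsub
      have h3 : 3 ≤ (nF w ∩ T).card := by
        have hsub : ({x, y, z} : Finset V) ⊆ nF w ∩ T := by
          intro t ht
          simp only [Finset.mem_insert, Finset.mem_singleton] at ht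
          rcases ht with rfl | rfl | rfl
          · exact Finset.mem_inter.mpr ⟨hx_nFw, hxT⟩
          · exact Finset.mem_inter.mpr ⟨hy_nFw, hyT⟩
          · exact Finset.mem_inter.mpr ⟨hz_nFw, hzT⟩
        calc 3 = ({x, y, z} : Finset V).card := by
              rw [Finset.card_insert_of_notMem (by simp [hxy, hxz]),
                Finset.card_pair hyz]
          _ ≤ _ := Finset.card_le_card hsub
      omega
    -- exact T-intersections for y and z
    have hb1 := hxwsub y hx_nFy hw_nFy
    have hb2 := hxwsub z hx_nFz hw_nFz
    have hb3 : 3 ≤ (nF w ∩ T).card := by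
      have hsub : ({x, y, z} : Finset V) ⊆ nF w ∩ T := by
        intro t ht
        simp only [Finset.mem_insert, Finset.mem_singleton] at ht
        rcases ht with rfl | rfl | rfl
        · exact Finset.mem_inter.mpr ⟨hx_nFw, hxT⟩
        · exact Finset.mem_inter.mpr ⟨hy_nFw, hyT⟩
        · exact Finset.mem_inter.mpr ⟨hz_nFw, hzT⟩
      calc 3 = ({x, y, z} : Finset V).card := by
            rw [Finset.card_insert_of_notMem (by simp [hxy, hxz]),
              Finset.card_pair hyz]
        _ ≤ _ := Finset.card_le_card hsub
    have hcy : nF y ∩ T = {x, w} := by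
      have hsub : ({x, w} : Finset V) ⊆ nF y ∩ T := by
        intro t ht
        simp only [Finset.mem_insert, Finset.mem_singleton] at ht
        rcases ht with rfl | rfl
        · exact Finset.mem_inter.mpr ⟨hx_nFy, hxT⟩
        · exact Finset.mem_inter.mpr ⟨hw_nFy, hwT⟩
      refine (Finset.eq_of_subset_of_card_le hsub ?_).symm
      rw [Finset.card_pair hxw']
      omega
    have hcz : nF z ∩ T = {x, w} := by
      have hsub : ({x, w} : Finset V) ⊆ nF z ∩ T := by
        intro t ht
        simp only [Finset.mem_insert, Finset.mem_singleton] at ht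
        rcases ht with rfl | rfl
        · exact Finset.mem_inter.mpr ⟨hx_nFz, hxT⟩
        · exact Finset.mem_inter.mpr ⟨hw_nFz, hwT⟩
      refine (Finset.eq_of_subset_of_card_le hsub ?_).symm
      rw [Finset.card_pair hxw']
      omega
    -- get u with y ∈ nF u, u ∈ O
    have hcycard : (nF y ∩ T).card = 2 := by rw [hcy]; exact Finset.card_pair hxw'
    have hPy : 1 ≤ (nF y ∩ O).card := by
      have h3 := deg3 y
      omega
    obtain ⟨u, hu⟩ := Finset.card_pos.mp hPy
    obtain ⟨hu_nFy, huO⟩ := Finset.mem_inter.mp hu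
    have hy_nFu : y ∈ nF u := nF_symm hu_nFy
    have hSu : ∀ t ∈ nF u ∩ S, t = y :=
      fun t ht => hm_single u huO t ht y (Finset.mem_inter.mpr ⟨hy_nFu, hyS⟩)
    have hw_not_nFu : w ∉ nF u :=
      fun h => hwy (hSu w (Finset.mem_inter.mpr ⟨h, hwS⟩))
    -- pair y u
    have hyu : y ≠ u := fun h => hOT u huO (h ▸ hyT)
    obtain ⟨a, hay, hau, ha_nFy, ha_nFu⟩ := pair y u hyu
    have haO : a ∈ O := by
      by_cases haT : a ∈ T
      · exfalso
        have hmem : a ∈ nF y ∩ T := Finset.mem_inter.mpr ⟨ha_nFy, haT⟩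
        rw [hcy] at hmem
        simp only [Finset.mem_insert, Finset.mem_singleton] at hmem
        rcases hmem with h | h
        · exact x_not_nFO u huO (by rwa [h] at ha_nFu)
        · exact hw_not_nFu (by rwa [h] at ha_nFu)
      · exact hmemO a haT
    -- pair z u
    have hzu : z ≠ u := fun h => hOT u huO (h ▸ hzT)
    obtain ⟨c, hcz', hcu, hc_nFz, hc_nFu⟩ := pair z u hzu
    have hcO : c ∈ O := by
      by_cases hcT : c ∈ T
      · exfalso
        have hmem : c ∈ nF z ∩ T := Finset.mem_inter.mpr ⟨hc_nFz, hcT⟩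
        rw [hcz] at hmem
        simp only [Finset.mem_insert, Finset.mem_singleton] at hmem
        rcases hmem with h | h
        · exact x_not_nFO u huO (by rwa [h] at hc_nFu)
        · exact hw_not_nFu (by rwa [h] at hc_nFu)
      · exact hmemO c hcT
    have hy_nFa : y ∈ nF a := nF_symm ha_nFy
    have hz_nFc : z ∈ nF c := nF_symm hc_nFz
    have hSa : ∀ t ∈ nF a ∩ S, t = y :=
      fun t ht => hm_single a haO t ht y (Finset.mem_inter.mpr ⟨hy_nFa, hyS⟩)
    have hSc : ∀ t ∈ nF c ∩ S, t = z :=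
      fun t ht => hm_single c hcO t ht z (Finset.mem_inter.mpr ⟨hz_nFc, hzS⟩)
    have hac : a ≠ c := by
      rintro rfl
      exact hyz (hSa z (Finset.mem_inter.mpr ⟨hz_nFc, hzS⟩)).symm
    -- nF u = {a, c, y}
    have hay2 : a ≠ y := fun h => hOT a haO (h ▸ hyT)
    have hcy2 : c ≠ y := fun h => hOT c hcO (h ▸ hyT)
    have hnFu_eq : nF u = {a, c, y} := by
      have hsub : ({a, c, y} : Finset V) ⊆ nF u := by
        intro t ht
        simp only [Finset.mem_insert, Finset.mem_singleton] at ht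
        rcases ht with rfl | rfl | rfl
        exacts [ha_nFu, hc_nFu, hy_nFu]
      refine (Finset.eq_of_subset_of_card_le hsub ?_).symm
      rw [hdeg3eq u huO, Finset.card_insert_of_notMem (by simp [hac, hay2]),
        Finset.card_pair hcy2]
    -- pair z c
    have hu_nFc : u ∈ nF c := nF_symm hc_nFu
    have hzc : z ≠ c := fun h => hOT c hcO (h ▸ hzT)
    obtain ⟨c2, hc2z, hc2c, hc2_nFz, hc2_nFc⟩ := pair z c hzc
    have hc2O : c2 ∈ O := by
      by_cases hc2T : c2 ∈ T
      · exfalso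
        have hmem : c2 ∈ nF z ∩ T := Finset.mem_inter.mpr ⟨hc2_nFz, hc2T⟩
        rw [hcz] at hmem
        simp only [Finset.mem_insert, Finset.mem_singleton] at hmem
        rcases hmem with h | h
        · exact x_not_nFO c hcO (by rwa [h] at hc2_nFc)
        · exact hzw (hSc w (Finset.mem_inter.mpr ⟨by rwa [h] at hc2_nFc, hwS⟩)).symm
      · exact hmemO c2 hc2T
    have hz_nFc2 : z ∈ nF c2 := nF_symm hc2_nFz
    have hc2u : c2 ≠ u := by
      rintro rfl
      exact hyz (hSu z (Finset.mem_inter.mpr ⟨hz_nFc2, hzS⟩)).symm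
    -- nF c = {u, c2, z}
    have huz : u ≠ z := fun h => hOT u huO (h ▸ hzT)
    have hc2z2 : c2 ≠ z := fun h => hOT c2 hc2O (h ▸ hzT)
    have huc2 : u ≠ c2 := fun h => hc2u h.symm
    have hnFc_eq : nF c = {u, c2, z} := by
      have hsub : ({u, c2, z} : Finset V) ⊆ nF c := by
        intro t ht
        simp only [Finset.mem_insert, Finset.mem_singleton] at ht
        rcases ht with rfl | rfl | rfl
        exacts [hu_nFc, hc2_nFc, hz_nFc]
      refine (Finset.eq_of_subset_of_card_le hsub ?_).symm
      rw [hdeg3eq c hcO, Finset.card_insert_of_notMem (by simp [huc2, huz]),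
        Finset.card_pair hc2z2]
    -- final contradiction : pair u c
    have huc : u ≠ c := (ne_of_nF hc_nFu).symm
    obtain ⟨v3, hv3u, hv3c, hv3_nFu, hv3_nFc⟩ := pair u c huc
    rw [hnFu_eq] at hv3_nFu
    rw [hnFc_eq] at hv3_nFc
    simp only [Finset.mem_insert, Finset.mem_singleton] at hv3_nFu hv3_nFc
    rcases hv3_nFu with h1 | h1 | h1
    · rcases hv3_nFc with h | h | h
      · exact hau (h1 ▸ h)
      · -- v3 = a and v3 = c2 : z ∈ nF a ∩ S forces z = y
        refine hyz (hSa z (Finset.mem_inter.mpr ⟨?_, hzS⟩)).symm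
        rw [← h1, h]
        exact hz_nFc2
      · exact hOT a haO (by rw [← h1, h]; exact hzT)
    · exact hv3c h1
    · rcases hv3_nFc with h | h | h
      · exact hyu (h1 ▸ h)
      · exact hOT c2 hc2O (by rw [← h, h1]; exact hyT)
      · exact hyz (h1 ▸ h)
  · -- Case II : q ≠ z
    have hqO : q ∈ O := by
      refine hmemO q ?_
      rw [hT, hS]
      simp only [Finset.mem_insert, Finset.mem_singleton, not_or]
      exact ⟨hqx, fun h => hyq h.symm, hqz, fun h => hwq h.symm⟩
    have hw_nFq : w ∈ nF q := (memnF q w).mpr ⟨hwq, Or.inl (fun h => hnwq h.symm)⟩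
    have hSq : ∀ t ∈ nF q ∩ S, t = w :=
      fun t ht => hm_single q hqO t ht w (Finset.mem_inter.mpr ⟨hw_nFq, hwS⟩)
    -- z' : the second non-neighbour of z
    have hxNgz : x ∈ Ng z := (memNg z x).mpr ⟨hxz, fun h => hnxz h.symm⟩
    obtain ⟨z', hz'x, hNgz⟩ := ngpair z x hxNgz
    have hz'_Ngz : z' ∈ Ng z := by rw [hNgz]; simp
    have hz'z : z' ≠ z := ((memNg z z').mp hz'_Ngz).1
    have hz_Ngz' : z ∈ Ng z' := Ng_symm hz'_Ngz
    have hz_nFz' : z ∈ nF z' := Ng_sub_nF z' hz_Ngz'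
    have hz'y : z' ≠ y := by
      intro h
      have h2 : z ∈ Ng y := Ng_symm (by rw [← h]; exact hz'_Ngz)
      rw [hNgy] at h2
      simp only [Finset.mem_insert, Finset.mem_singleton] at h2
      rcases h2 with h3 | h3
      · exact hxz h3.symm
      · exact hzw h3
    have hz'w : z' ≠ w := by
      intro h
      have h2 : z ∈ Ng w := Ng_symm (by rw [← h]; exact hz'_Ngz)
      rw [hNgw] at h2
      simp only [Finset.mem_insert, Finset.mem_singleton] at h2
      rcases h2 with h3 | h3
      · exact hyz h3.symm
      · exact hqz h3.symm
    have hz'O : z' ∈ O := by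
      refine hmemO z' ?_
      rw [hT, hS]
      simp only [Finset.mem_insert, Finset.mem_singleton, not_or]
      exact ⟨hz'x, hz'y, hz'z, hz'w⟩
    have hSz' : ∀ t ∈ nF z' ∩ S, t = z :=
      fun t ht => hm_single z' hz'O t ht z (Finset.mem_inter.mpr ⟨hz_nFz', hzS⟩)
    have hz'q : z' ≠ q := by
      intro h
      have h2 : z ∈ nF q := Ng_sub_nF q (Ng_symm (by rw [← h]; exact hz'_Ngz))
      exact hzw (hSq z (Finset.mem_inter.mpr ⟨h2, hzS⟩))
    -- z2 : the second non-neighbour of z'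
    obtain ⟨z2, hz2z, hNgz'⟩ := ngpair z' z hz_Ngz'
    have hz2_Ngz' : z2 ∈ Ng z' := by rw [hNgz']; simp
    have hz2_nFz' : z2 ∈ nF z' := Ng_sub_nF z' hz2_Ngz'
    -- the third element of nF z'
    have hdex : ∃ d ∈ nF z', d ∉ ({z, z2} : Finset V) := by
      by_contra hno
      push_neg at hno
      have hsub : nF z' ⊆ {z, z2} := hno
      have hle := Finset.card_le_card hsub
      have hle2 : ({z, z2} : Finset V).card ≤ 2 := Finset.card_insert_le z {z2}
      rw [hdeg3eq z' hz'O] at hle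
      omega
    obtain ⟨d, hd_nFz', hd_notin⟩ := hdex
    simp only [Finset.mem_insert, Finset.mem_singleton, not_or] at hd_notin
    obtain ⟨hdz, hdz2⟩ := hd_notin
    have hdz' : d ≠ z' := ne_of_nF hd_nFz'
    have hd_B : s(z', d) ∈ B := by
      have h1 : d ∉ Ng z' := by rw [hNgz']; simp [hdz, hdz2]
      rcases ((memnF z' d).mp hd_nFz').2 with h3 | h3
      · exact absurd ((memNg z' d).mpr ⟨hdz', h3⟩) h1
      · exact h3
    have hAdj_z'd : G.Adj z' d := hBadj hd_B
    have hd_q : d = q := by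
      by_contra hdq
      have hdx : d ≠ x := by
        intro h
        have h2 := nF_symm hd_nFz'
        rw [h, hnFx] at h2
        exact hOT z' hz'O (by rw [hT]; exact Finset.mem_insert_of_mem h2)
      have hdy : d ≠ y := by
        intro h
        exact hyz (hSz' y (Finset.mem_inter.mpr ⟨by rw [← h]; exact hd_nFz', hyS⟩))
      have hdw : d ≠ w := by
        intro h
        exact hzw (hSz' w (Finset.mem_inter.mpr ⟨by rw [← h]; exact hd_nFz', hwS⟩)).symm
      have hdO : d ∈ O := by
        refine hmemO d ?_
        rw [hT, hS]
        simp only [Finset.mem_insert, Finset.mem_singleton, not_or]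
        exact ⟨hdx, hdy, hdz, hdw⟩
      obtain ⟨σ, hσeq⟩ := Finset.card_eq_one.mp (hm1 d hdO)
      have hσmem : σ ∈ nF d ∩ S := by rw [hσeq]; exact Finset.mem_singleton_self σ
      have hσ_nF : σ ∈ nF d := (Finset.mem_inter.mp hσmem).1
      have hσ_S : σ ∈ S := (Finset.mem_inter.mp hσmem).2
      have hz'_nFd : z' ∈ nF d := nF_symm hd_nFz'
      have hz'_not_Ngd : z' ∉ Ng d := fun h => ((memNg d z').mp h).2 hAdj_z'd.symm
      have hσ_not_Ngd : σ ∉ Ng d := by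
        intro h
        have hd_Ngσ : d ∈ Ng σ := Ng_symm h
        rw [hS] at hσ_S
        simp only [Finset.mem_insert, Finset.mem_singleton] at hσ_S
        rcases hσ_S with rfl | rfl | rfl
        · rw [hNgy] at hd_Ngσ
          simp only [Finset.mem_insert, Finset.mem_singleton] at hd_Ngσ
          rcases hd_Ngσ with h' | h'
          · exact hdx h'
          · exact hdw h'
        · rw [hNgz] at hd_Ngσ
          simp only [Finset.mem_insert, Finset.mem_singleton] at hd_Ngσ
          rcases hd_Ngσ with h' | h'
          · exact hdx h'
          · exact hdz' h'
        · rw [hNgw] at hd_Ngσ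
          simp only [Finset.mem_insert, Finset.mem_singleton] at hd_Ngσ
          rcases hd_Ngσ with h' | h'
          · exact hdy h'
          · exact hdq h'
      have hσz' : σ ≠ z' := by
        intro h
        exact hOT z' hz'O (by rw [hT]; exact Finset.mem_insert_of_mem (h ▸ hσ_S))
      have hsub4 : Ng d ∪ {σ, z'} ⊆ nF d := by
        intro t ht
        rcases Finset.mem_union.mp ht with h | h
        · exact Ng_sub_nF d h
        · simp only [Finset.mem_insert, Finset.mem_singleton] at h
          rcases h with rfl | rfl
          · exact hσ_nF
          · exact hz'_nFd
      have hdisj4 : Disjoint (Ng d) ({σ, z'} : Finset V) := by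
        rw [Finset.disjoint_right]
        intro t ht
        simp only [Finset.mem_insert, Finset.mem_singleton] at ht
        rcases ht with rfl | rfl
        · exact hσ_not_Ngd
        · exact hz'_not_Ngd
      have hc4 : (Ng d ∪ ({σ, z'} : Finset V)).card = 4 := by
        rw [Finset.card_union_of_disjoint hdisj4, Ngcard, Finset.card_pair hσz']
      have hle := Finset.card_le_card hsub4
      rw [hc4, hdeg3eq d hdO] at hle
      omega
    rw [hd_q] at hd_B hd_nFz' hAdj_z'd
    have hz2q : z2 ≠ q := by
      intro h
      exact ((memNg z' z2).mp hz2_Ngz').2 (by rw [h]; exact hAdj_z'd)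
    have hzq : z ≠ q := fun h => hqz h.symm
    have hzz2 : z ≠ z2 := fun h => hz2z h.symm
    have hnFz'_eq : nF z' = {z, z2, q} := by
      have hsub : ({z, z2, q} : Finset V) ⊆ nF z' := by
        intro t ht
        simp only [Finset.mem_insert, Finset.mem_singleton] at ht
        rcases ht with rfl | rfl | rfl
        exacts [hz_nFz', hz2_nFz', hd_nFz']
      refine (Finset.eq_of_subset_of_card_le hsub ?_).symm
      rw [hdeg3eq z' hz'O, Finset.card_insert_of_notMem (by simp [hzz2, hzq]),
        Finset.card_pair hz2q]
    -- q2 : the second non-neighbour of q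
    have hw_Ngq : w ∈ Ng q := (memNg q w).mpr ⟨hwq, fun h => hnwq h.symm⟩
    obtain ⟨q2, hq2w, hNgq⟩ := ngpair q w hw_Ngq
    have hq2_Ngq : q2 ∈ Ng q := by rw [hNgq]; simp
    have hq2_nFq : q2 ∈ nF q := Ng_sub_nF q hq2_Ngq
    have hz'_nFq : z' ∈ nF q := nF_symm hd_nFz'
    have hq2z' : q2 ≠ z' := by
      intro h
      exact ((memNg q q2).mp hq2_Ngq).2 (by rw [h]; exact hAdj_z'd.symm)
    have hwz' : w ≠ z' := fun h => hz'w h.symm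
    have hwq2 : w ≠ q2 := fun h => hq2w h.symm
    have hnFq_eq : nF q = {w, q2, z'} := by
      have hsub : ({w, q2, z'} : Finset V) ⊆ nF q := by
        intro t ht
        simp only [Finset.mem_insert, Finset.mem_singleton] at ht
        rcases ht with rfl | rfl | rfl
        exacts [hw_nFq, hq2_nFq, hz'_nFq]
      refine (Finset.eq_of_subset_of_card_le hsub ?_).symm
      rw [hdeg3eq q hqO, Finset.card_insert_of_notMem (by simp [hwq2, hwz']),
        Finset.card_pair hq2z']
    -- pair z z' : z2 points to z
    have hzz' : z ≠ z' := fun h => hz'z h.symm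
    obtain ⟨v, hvz, hvz', hv_nFz, hv_nFz'⟩ := pair z z' hzz'
    rw [hnFz'_eq] at hv_nFz'
    simp only [Finset.mem_insert, Finset.mem_singleton] at hv_nFz'
    have hv_z2 : v = z2 := by
      rcases hv_nFz' with h | h | h
      · exact absurd h hvz
      · exact h
      · exfalso
        have h2 : z ∈ nF q := nF_symm (by rw [← h]; exact hv_nFz)
        exact hzw (hSq z (Finset.mem_inter.mpr ⟨h2, hzS⟩))
    have hz_nFz2 : z ∈ nF z2 := nF_symm (by rw [← hv_z2]; exact hv_nFz)
    have hz2x : z2 ≠ x := by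
      intro h
      have h2 : z' ∈ Ng x := Ng_symm (by rw [← h]; exact hz2_Ngz')
      rw [hNgx] at h2
      simp only [Finset.mem_insert, Finset.mem_singleton] at h2
      rcases h2 with h3 | h3
      · exact hz'y h3
      · exact hz'z h3
    have hz2y : z2 ≠ y := by
      intro h
      have h2 : z' ∈ Ng y := Ng_symm (by rw [← h]; exact hz2_Ngz')
      rw [hNgy] at h2
      simp only [Finset.mem_insert, Finset.mem_singleton] at h2
      rcases h2 with h3 | h3
      · exact hz'x h3
      · exact hz'w h3
    have hz2w : z2 ≠ w := by
      intro h
      have h2 : z' ∈ Ng w := Ng_symm (by rw [← h]; exact hz2_Ngz')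
      rw [hNgw] at h2
      simp only [Finset.mem_insert, Finset.mem_singleton] at h2
      rcases h2 with h3 | h3
      · exact hz'y h3
      · exact hz'q h3
    have hz2O : z2 ∈ O := by
      refine hmemO z2 ?_
      rw [hT, hS]
      simp only [Finset.mem_insert, Finset.mem_singleton, not_or]
      exact ⟨hz2x, hz2y, hz2z, hz2w⟩
    have hSz2 : ∀ t ∈ nF z2 ∩ S, t = z :=
      fun t ht => hm_single z2 hz2O t ht z (Finset.mem_inter.mpr ⟨hz_nFz2, hzS⟩)
    -- pair w q : q2 points to w
    obtain ⟨v', hv'w, hv'q, hv'_nFw, hv'_nFq⟩ := pair w q hwq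
    rw [hnFq_eq] at hv'_nFq
    simp only [Finset.mem_insert, Finset.mem_singleton] at hv'_nFq
    have hv'_q2 : v' = q2 := by
      rcases hv'_nFq with h | h | h
      · exact absurd h hv'w
      · exact h
      · exfalso
        have h2 : w ∈ nF z' := nF_symm (by rw [← h]; exact hv'_nFw)
        exact hzw (hSz' w (Finset.mem_inter.mpr ⟨h2, hwS⟩)).symm
    have hw_nFq2 : w ∈ nF q2 := nF_symm (by rw [← hv'_q2]; exact hv'_nFw)
    have hq2x : q2 ≠ x := by
      intro h
      have h2 : q ∈ Ng x := Ng_symm (by rw [← h]; exact hq2_Ngq)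
      rw [hNgx] at h2
      simp only [Finset.mem_insert, Finset.mem_singleton] at h2
      rcases h2 with h3 | h3
      · exact hyq h3.symm
      · exact hqz h3
    have hq2y : q2 ≠ y := by
      intro h
      have h2 : q ∈ Ng y := Ng_symm (by rw [← h]; exact hq2_Ngq)
      rw [hNgy] at h2
      simp only [Finset.mem_insert, Finset.mem_singleton] at h2
      rcases h2 with h3 | h3
      · exact hqx h3
      · exact hwq h3.symm
    have hq2z : q2 ≠ z := by
      intro h
      have h2 : q ∈ Ng z := Ng_symm (by rw [← h]; exact hq2_Ngq)
      rw [hNgz] at h2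
      simp only [Finset.mem_insert, Finset.mem_singleton] at h2
      rcases h2 with h3 | h3
      · exact hqx h3
      · exact hz'q h3.symm
    have hq2O : q2 ∈ O := by
      refine hmemO q2 ?_
      rw [hT, hS]
      simp only [Finset.mem_insert, Finset.mem_singleton, not_or]
      exact ⟨hq2x, hq2y, hq2z, hq2w⟩
    have hSq2 : ∀ t ∈ nF q2 ∩ S, t = w :=
      fun t ht => hm_single q2 hq2O t ht w (Finset.mem_inter.mpr ⟨hw_nFq2, hwS⟩)
    have hz2q2 : z2 ≠ q2 := by
      intro h
      exact hzw (hSq2 z (Finset.mem_inter.mpr ⟨by rw [← h]; exact hz_nFz2, hzS⟩))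
    -- final contradiction : pair z' q
    obtain ⟨v3, hv3z', hv3q, hv3_nFz', hv3_nFq⟩ := pair z' q hz'q
    rw [hnFz'_eq] at hv3_nFz'
    rw [hnFq_eq] at hv3_nFq
    simp only [Finset.mem_insert, Finset.mem_singleton] at hv3_nFz' hv3_nFq
    rcases hv3_nFz' with h1 | h1 | h1
    · rcases hv3_nFq with h | h | h
      · exact hzw (h1.symm.trans h)
      · exact hq2z ((h1.symm.trans h).symm)
      · exact hv3z' h
    · rcases hv3_nFq with h | h | h
      · exact hz2w (h1.symm.trans h)
      · exact hz2q2 (h1.symm.trans h)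
      · exact hv3z' h
    · exact hv3q h1

end RomanHelpers

/-- Lemma 4.1: in an `(n-3)`-regular graph of order `n ≥ 7` not isomorphic to a
`K_{3,3,…,3}`, if `B` is a Roman bondage set, `xw ∈ E(G)` is the only edge of `B`
incident with `x`, `y, z` are the only two non-neighbors of `x`, `p, q` the only
two non-neighbors of `w`, and `{y,z} ∩ {p,q} ≠ ∅`, then `|B| ≥ n - 2`. -/
theorem roman_bondage_lemma_4_1
    {V : Type*} [Fintype V] [DecidableEq V] (G : SimpleGraph V) [DecidableRel G.Adj]
    (n : ℕ) (hn : Fintype.card V = n) (h7 : 7 ≤ n)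
    (hreg : G.IsRegularOfDegree (n - 3))
    (hK : ¬ ∃ t : ℕ, Nonempty (G ≃g completeMultipartiteGraph (fun _ : Fin t => Fin 3)))
    (B : Finset (Sym2 V)) (hBsub : ↑B ⊆ G.edgeSet)
    (hB : romanDominationNumber G < romanDominationNumber (G.deleteEdges ↑B))
    (x w y z p q : V) (hxw : G.Adj x w)
    (hyz : y ≠ z) (hxy : x ≠ y) (hxz : x ≠ z)
    (hnxy : ¬ G.Adj x y) (hnxz : ¬ G.Adj x z)
    (honlyx : ∀ v : V, v ≠ x → ¬ G.Adj x v → v = y ∨ v = z)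
    (hpq : p ≠ q) (hwp : w ≠ p) (hwq : w ≠ q)
    (hnwp : ¬ G.Adj w p) (hnwq : ¬ G.Adj w q)
    (honlyw : ∀ v : V, v ≠ w → ¬ G.Adj w v → v = p ∨ v = q)
    (hxwB : s(x, w) ∈ B)
    (hxwonly : ∀ e ∈ B, x ∈ e → e = s(x, w))
    (hmeet : y = p ∨ y = q ∨ z = p ∨ z = q) :
    n - 2 ≤ B.card := by
  have hB5 : ∀ f : V → ℕ, (∀ v, f v ≤ 2) →
      (∀ v, f v = 0 → ∃ u, (G.deleteEdges ↑B).Adj v u ∧ f u = 2) → 5 ≤ ∑ v, f v :=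
    fun f hf2 hfd => five_le G n hn h7 hreg B hB f hf2 hfd
  rcases hmeet with h | h | h | h
  · subst h
    exact key G n hn h7 hreg B hBsub hB5 x w y z q hxw hyz hxy hxz hnxy hnxz honlyx
      hwp hwq hpq hnwp hnwq honlyw hxwB hxwonly
  · subst h
    exact key G n hn h7 hreg B hBsub hB5 x w y z p hxw hyz hxy hxz hnxy hnxz honlyx
      hwq hwp (fun hh => hpq hh.symm) hnwq hnwp
      (fun v h1 h2 => (honlyw v h1 h2).symm) hxwB hxwonly
  · subst h
    exact key G n hn h7 hreg B hBsub hB5 x w z y q hxw hyz.symm hxz hxy hnxz hnxy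
      (fun v h1 h2 => (honlyx v h1 h2).symm)
      hwp hwq hpq hnwp hnwq honlyw hxwB hxwonly
  · subst h
    exact key G n hn h7 hreg B hBsub hB5 x w z y p hxw hyz.symm hxz hxy hnxz hnxy
      (fun v h1 h2 => (honlyx v h1 h2).symm)
      hwq hwp (fun hh => hpq hh.symm) hnwq hnwp
      (fun v h1 h2 => (honlyw v h1 h2).symm) hxwB hxwonly
end

section
/- Let G be an (n−3)-regular simple graph of order n ≥ 5, and suppose there exists a vertex x such that the two vertices y and z not adjacent to x in G are adjacent to each other. Then the Roman bondage number of G is at most n − 2. -/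
open SimpleGraph

/-- If `G` is `(n-3)`-regular of order `n ≥ 5` and some vertex `x` has its two
non-neighbors `y, z` adjacent to each other, then the Roman bondage number of `G`
is at most `n - 2`. -/
theorem roman_bondage_upper_bound
    {V : Type*} [Fintype V] [DecidableEq V] (G : SimpleGraph V) [DecidableRel G.Adj]
    (n : ℕ) (hn : Fintype.card V = n) (h5 : 5 ≤ n)
    (hreg : G.IsRegularOfDegree (n - 3))
    (x y z : V) (hyz : y ≠ z) (hxy : x ≠ y) (hxz : x ≠ z)
    (hnxy : ¬ G.Adj x y) (hnxz : ¬ G.Adj x z)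
    (hadj : G.Adj y z) :
    romanBondageNumber G ≤ n - 2 := by
  classical
  -- x is adjacent to every vertex except itself, y, z
  have hxadj : ∀ v, v ≠ x → v ≠ y → v ≠ z → G.Adj x v := by
    intro v hvx hvy hvz
    by_contra hna
    have hsubN : G.neighborFinset x ⊆ Finset.univ.erase x := by
      intro u hu
      rw [SimpleGraph.mem_neighborFinset] at hu
      exact Finset.mem_erase.mpr ⟨hu.ne', Finset.mem_univ u⟩
    have hcards : ((Finset.univ.erase x) \ G.neighborFinset x).card = 2 := by
      rw [Finset.card_sdiff_of_subset hsubN, Finset.card_erase_of_mem (Finset.mem_univ x),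
        Finset.card_univ, hn]
      have := hreg x
      rw [SimpleGraph.degree] at this
      rw [this]
      omega
    have hsub2 : ({y, z} : Finset V) ⊆ (Finset.univ.erase x) \ G.neighborFinset x := by
      intro u hu
      rw [Finset.mem_insert, Finset.mem_singleton] at hu
      rcases hu with rfl | rfl
      · refine Finset.mem_sdiff.mpr ⟨Finset.mem_erase.mpr ⟨hxy.symm, Finset.mem_univ _⟩, ?_⟩
        rw [SimpleGraph.mem_neighborFinset]; exact hnxy
      · refine Finset.mem_sdiff.mpr ⟨Finset.mem_erase.mpr ⟨hxz.symm, Finset.mem_univ _⟩, ?_⟩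
        rw [SimpleGraph.mem_neighborFinset]; exact hnxz
    have heq : ({y, z} : Finset V) = (Finset.univ.erase x) \ G.neighborFinset x := by
      apply Finset.eq_of_subset_of_card_le hsub2
      rw [hcards, Finset.card_insert_of_notMem (by simpa using hyz), Finset.card_singleton]
    have hvmem : v ∈ (Finset.univ.erase x) \ G.neighborFinset x := by
      refine Finset.mem_sdiff.mpr ⟨Finset.mem_erase.mpr ⟨hvx, Finset.mem_univ _⟩, ?_⟩
      rw [SimpleGraph.mem_neighborFinset]; exact hna
    rw [← heq, Finset.mem_insert, Finset.mem_singleton] at hvmem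
    tauto
  set B : Finset (Sym2 V) := insert s(y, z) (G.incidenceFinset x) with hBdef
  have hyzB : s(y, z) ∉ G.incidenceFinset x := by
    intro h
    rw [SimpleGraph.mem_incidenceFinset, SimpleGraph.mk'_mem_incidenceSet_iff] at h
    tauto
  have hBcard : B.card = n - 2 := by
    rw [hBdef, Finset.card_insert_of_notMem hyzB,
      SimpleGraph.card_incidenceFinset_eq_degree, hreg x]
    omega
  have hBsub : ↑B ⊆ G.edgeSet := by
    intro e he
    rw [Finset.mem_coe, hBdef, Finset.mem_insert] at he
    rcases he with rfl | he
    · exact hadj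
    · rw [SimpleGraph.mem_incidenceFinset] at he
      exact he.1
  set G' := G.deleteEdges ↑B with hG'def
  have hxiso : ∀ u, ¬ G'.Adj x u := by
    intro u h
    rw [hG'def, SimpleGraph.deleteEdges_adj] at h
    apply h.2
    rw [Finset.mem_coe, hBdef]
    apply Finset.mem_insert_of_mem
    rw [SimpleGraph.mem_incidenceFinset, SimpleGraph.mk'_mem_incidenceSet_iff]
    exact ⟨h.1, Or.inl rfl⟩
  -- every vertex other than x has at most n - 4 neighbors in G'
  have hdegv : ∀ v, v ≠ x →
      (Finset.univ.filter (fun u => G'.Adj v u)).card ≤ n - 4 := by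
    intro v hvx
    by_cases hvy : v = y
    · subst hvy
      have hsub : (Finset.univ.filter (fun u => G'.Adj v u)) ⊆
          (G.neighborFinset v).erase z := by
        intro u hu
        rw [Finset.mem_filter] at hu
        rw [hG'def, SimpleGraph.deleteEdges_adj] at hu
        refine Finset.mem_erase.mpr ⟨?_, ?_⟩
        · rintro rfl
          exact hu.2.2 (by rw [Finset.mem_coe, hBdef]; exact Finset.mem_insert_self _ _)
        · rw [SimpleGraph.mem_neighborFinset]; exact hu.2.1
      have hz : z ∈ G.neighborFinset v := by
        rw [SimpleGraph.mem_neighborFinset]; exact hadj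
      calc (Finset.univ.filter (fun u => G'.Adj v u)).card
          ≤ ((G.neighborFinset v).erase z).card := Finset.card_le_card hsub
        _ = G.degree v - 1 := by rw [Finset.card_erase_of_mem hz]; rfl
        _ ≤ n - 4 := by rw [hreg v]; omega
    · by_cases hvz : v = z
      · subst hvz
        have hsub : (Finset.univ.filter (fun u => G'.Adj v u)) ⊆
            (G.neighborFinset v).erase y := by
          intro u hu
          rw [Finset.mem_filter] at hu
          rw [hG'def, SimpleGraph.deleteEdges_adj] at hu
          refine Finset.mem_erase.mpr ⟨?_, ?_⟩
          · rintro rfl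
            apply hu.2.2
            rw [Finset.mem_coe, hBdef]
            have : s(v, u) = s(u, v) := Sym2.eq_swap
            rw [this]
            exact Finset.mem_insert_self _ _
          · rw [SimpleGraph.mem_neighborFinset]; exact hu.2.1
        have hz : y ∈ G.neighborFinset v := by
          rw [SimpleGraph.mem_neighborFinset]; exact hadj.symm
        calc (Finset.univ.filter (fun u => G'.Adj v u)).card
            ≤ ((G.neighborFinset v).erase y).card := Finset.card_le_card hsub
          _ = G.degree v - 1 := by rw [Finset.card_erase_of_mem hz]; rfl
          _ ≤ n - 4 := by rw [hreg v]; omega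
      · have hsub : (Finset.univ.filter (fun u => G'.Adj v u)) ⊆
            (G.neighborFinset v).erase x := by
          intro u hu
          rw [Finset.mem_filter] at hu
          rw [hG'def, SimpleGraph.deleteEdges_adj] at hu
          refine Finset.mem_erase.mpr ⟨?_, ?_⟩
          · rintro rfl
            apply hu.2.2
            rw [Finset.mem_coe, hBdef]
            apply Finset.mem_insert_of_mem
            rw [SimpleGraph.mem_incidenceFinset, SimpleGraph.mk'_mem_incidenceSet_iff]
            exact ⟨hu.2.1, Or.inr rfl⟩
          · rw [SimpleGraph.mem_neighborFinset]; exact hu.2.1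
        have hx' : x ∈ G.neighborFinset v := by
          rw [SimpleGraph.mem_neighborFinset]; exact (hxadj v hvx hvy hvz).symm
        calc (Finset.univ.filter (fun u => G'.Adj v u)).card
            ≤ ((G.neighborFinset v).erase x).card := Finset.card_le_card hsub
          _ = G.degree v - 1 := by rw [Finset.card_erase_of_mem hx']; rfl
          _ ≤ n - 4 := by rw [hreg v]; omega
  -- γ_R(G) ≤ 4
  have hG4 : romanDominationNumber G ≤ 4 := by
    apply Nat.sInf_le
    refine ⟨fun v => (if v = x then 2 else 0) + (if v = y then 2 else 0), ?_, ?_, ?_⟩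
    · intro v
      dsimp only
      split_ifs with h1 h2
      · exact absurd (h1.symm.trans h2) hxy
      all_goals omega
    · intro v hv
      have h1 : v ≠ x := by intro h; simp [h, hxy] at hv
      have h2 : v ≠ y := by intro h; simp [h, hxy.symm] at hv
      by_cases h3 : v = z
      · subst h3
        exact ⟨y, hadj.symm, by simp [hxy.symm]⟩
      · exact ⟨x, (hxadj v h1 h2 h3).symm, by simp [hxy]⟩
    · rw [Finset.sum_add_distrib, Finset.sum_ite_eq', Finset.sum_ite_eq']
      simp
  -- γ_R(G') ≥ 5
  have hbound : ∀ w ∈ {w | ∃ f : V → ℕ, (∀ v, f v ≤ 2) ∧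
      (∀ v, f v = 0 → ∃ u, G'.Adj v u ∧ f u = 2) ∧ w = ∑ v, f v}, 5 ≤ w := by
    rintro w ⟨f, hf2, hdom, rfl⟩
    set T0 := Finset.univ.filter (fun v => f v = 0) with hT0
    set T1 := Finset.univ.filter (fun v => f v = 1) with hT1
    set T2 := Finset.univ.filter (fun v => f v = 2) with hT2
    have hpart : T0.card + T1.card + T2.card = n := by
      have key : ∀ v : V, (1 : ℕ) =
          (if f v = 0 then 1 else 0) + ((if f v = 1 then 1 else 0) + (if f v = 2 then 1 else 0)) := by
        intro v
        have := hf2 v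
        interval_cases (f v) <;> simp
      have : (n : ℕ) = ∑ v : V, (1 : ℕ) := by simp [hn]
      rw [this, Finset.sum_congr rfl (fun v _ => key v), Finset.sum_add_distrib,
        Finset.sum_add_distrib, Finset.sum_boole, Finset.sum_boole, Finset.sum_boole]
      push_cast
      ring
    have hsum : ∑ v, f v = T1.card + 2 * T2.card := by
      have key : ∀ v : V, f v =
          (if f v = 1 then 1 else 0) + (if f v = 2 then 2 else 0) := by
        intro v
        have := hf2 v
        interval_cases (f v) <;> simp
      rw [Finset.sum_congr rfl (fun v _ => key v), Finset.sum_add_distrib, Finset.sum_boole]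
      have : (∑ v : V, if f v = 2 then (2:ℕ) else 0) = ∑ v ∈ T2, (2:ℕ) := by
        rw [hT2, Finset.sum_filter]
      rw [this, Finset.sum_const, smul_eq_mul]
      push_cast
      ring
    have hxT : f x ≠ 0 := by
      intro h0
      obtain ⟨u, hu, -⟩ := hdom x h0
      exact hxiso u hu
    have hcover : T0.card ≤ ∑ d ∈ T2, (Finset.univ.filter (fun u => G'.Adj d u)).card := by
      refine le_trans (Finset.card_le_card ?_) Finset.card_biUnion_le
      intro v hv
      rw [hT0, Finset.mem_filter] at hv
      obtain ⟨u, hu, hu2⟩ := hdom v hv.2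
      refine Finset.mem_biUnion.mpr ⟨u, ?_, ?_⟩
      · rw [hT2, Finset.mem_filter]; exact ⟨Finset.mem_univ u, hu2⟩
      · rw [Finset.mem_filter]; exact ⟨Finset.mem_univ v, hu.symm⟩
    by_contra hlt
    push_neg at hlt
    rw [hsum] at hlt
    have hT2le : T2.card ≤ 2 := by omega
    rcases Nat.lt_or_ge T2.card 1 with hc | hc
    · -- T2 empty
      have hT2e : T2 = ∅ := Finset.card_eq_zero.mp (by omega)
      have hT0e : T0 = ∅ := by
        rw [Finset.eq_empty_iff_forall_notMem]
        intro v hv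
        rw [hT0, Finset.mem_filter] at hv
        obtain ⟨u, -, hu2⟩ := hdom v hv.2
        have : u ∈ T2 := by rw [hT2, Finset.mem_filter]; exact ⟨Finset.mem_univ u, hu2⟩
        rw [hT2e] at this
        exact absurd this (Finset.notMem_empty u)
      rw [hT0e, hT2e] at hpart
      simp at hpart
      omega
    rcases Nat.lt_or_ge T2.card 2 with hc2 | hc2
    · -- T2 = {d}
      have hc1 : T2.card = 1 := by omega
      obtain ⟨d, hd⟩ := Finset.card_eq_one.mp hc1
      have hsumd : (∑ e ∈ T2, (Finset.univ.filter (fun u => G'.Adj e u)).card) =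
          (Finset.univ.filter (fun u => G'.Adj d u)).card := by
        rw [hd, Finset.sum_singleton]
      by_cases hdx : d = x
      · subst hdx
        have : (Finset.univ.filter (fun u => G'.Adj d u)) = ∅ := by
          rw [Finset.eq_empty_iff_forall_notMem]
          intro u hu
          rw [Finset.mem_filter] at hu
          exact hxiso u hu.2
        rw [hsumd, this, Finset.card_empty] at hcover
        omega
      · rw [hsumd] at hcover
        have := hdegv d hdx
        omega
    · -- T2.card = 2
      have hc2' : T2.card = 2 := by omega
      have hT1e : T1.card = 0 := by omega
      have hfx2 : f x = 2 := by
        have := hf2 x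
        rcases Nat.lt_or_ge (f x) 2 with h | h
        · exfalso
          have hfx1 : f x = 1 := by omega
          have : x ∈ T1 := by rw [hT1, Finset.mem_filter]; exact ⟨Finset.mem_univ x, hfx1⟩
          have := Finset.card_pos.mpr ⟨x, this⟩
          omega
        · omega
      have hxT2 : x ∈ T2 := by rw [hT2, Finset.mem_filter]; exact ⟨Finset.mem_univ x, hfx2⟩
      have herase : (T2.erase x).card = 1 := by
        rw [Finset.card_erase_of_mem hxT2, hc2']
      obtain ⟨d, hd⟩ := Finset.card_eq_one.mp herase
      have hdx : d ≠ x := by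
        have : d ∈ T2.erase x := hd ▸ Finset.mem_singleton_self d
        exact (Finset.mem_erase.mp this).1
      have hT2eq : T2 = insert x {d} := by
        rw [← hd, Finset.insert_erase hxT2]
      have hxnd : x ∉ ({d} : Finset V) := by
        rw [Finset.mem_singleton]; exact fun h => hdx h.symm
      have hsumd : (∑ e ∈ T2, (Finset.univ.filter (fun u => G'.Adj e u)).card) =
          (Finset.univ.filter (fun u => G'.Adj x u)).card +
          (Finset.univ.filter (fun u => G'.Adj d u)).card := by
        rw [hT2eq, Finset.sum_insert hxnd, Finset.sum_singleton]
      have hxe : (Finset.univ.filter (fun u => G'.Adj x u)) = ∅ := by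
        rw [Finset.eq_empty_iff_forall_notMem]
        intro u hu
        rw [Finset.mem_filter] at hu
        exact hxiso u hu.2
      rw [hsumd, hxe, Finset.card_empty, zero_add] at hcover
      have := hdegv d hdx
      omega
  have hne : ({w | ∃ f : V → ℕ, (∀ v, f v ≤ 2) ∧
      (∀ v, f v = 0 → ∃ u, G'.Adj v u ∧ f u = 2) ∧ w = ∑ v, f v} : Set ℕ).Nonempty := by
    refine ⟨∑ v : V, (1:ℕ), fun _ => 1, fun v => by norm_num, fun v h => absurd h one_ne_zero, rfl⟩
  have hG'5 : 5 ≤ romanDominationNumber G' := hbound _ (Nat.sInf_mem hne)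
  apply Nat.sInf_le
  exact ⟨B, hBsub, hBcard, lt_of_le_of_lt hG4 (lt_of_lt_of_le (by norm_num) hG'5)⟩
end
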